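/- arXiv:2402.18300 — 5 statements merged into one kernel-verified Lean document; each statement's English description precedes it below -/
import Mathlib

section
/- For any positive integer N and any index (k_1,...,k_r) of positive integers, the multiple harmonic sum ζ_{<N}(k_1,...,k_r) equals the 'flat' sum ζ^♭_{<N}(k_1,...,k_r). That is, Σ_{0<n_1<...<n_r<N} 1/(n_1^{k_1}···n_r^{k_r}) = Σ_{(n_1,...,n_k)∈S_N(𝐤)} Π_{i=1}^k ω̂_{u_i}^{(N)}(n_i), where k = k_1+...+k_r. -/
open Finset

/-- `ω̂₀^{(N)}(n) = 1/n`, `ω̂₁^{(N)}(n) = 1/(N-n)`. -/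
noncomputable def omegaHat (N : ℕ) (u : Bool) (n : ℕ) : ℝ :=
  if u then 1 / ((N : ℝ) - n) else 1 / n

/-- The word `e_𝐤 ∈ {e₀,e₁}^*` attached to an index `𝐤` (`true` = `e₁`):
`u_i = true` iff `i ∈ J(𝐤)`. -/
def wordOf (k : List ℕ) : List Bool :=
  k.flatMap (fun j => true :: List.replicate (j - 1) false)

/-- The multiple harmonic sum `ζ_{<N}(𝐤)`. -/
noncomputable def MHS (N : ℕ) (k : List ℕ) : ℝ :=
  ∑ n ∈ Finset.univ.filter
      (fun n : Fin k.length → Fin N => (∀ i, 0 < (n i : ℕ)) ∧ StrictMono n),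
    ∏ i, (1 : ℝ) / (n i : ℕ) ^ k.get i

/-- `n_{i-1}` with the convention `n₀ = 0`. -/
def prevVal {w N : ℕ} (n : Fin w → Fin N) (i : Fin w) : ℕ :=
  if h : i.val = 0 then 0
  else (n ⟨i.val - 1, Nat.lt_of_le_of_lt (Nat.sub_le _ _) i.isLt⟩ : ℕ)

/-- Membership condition for `S_N(𝐤)`: strict inequality `n_{i-1} < n_i` at positions
`i ∈ J(𝐤)`, weak inequality elsewhere (the condition `n_k < N` is automatic since the
tuple takes values in `Fin N`, and `n₀ = 0`). -/
def SCond (N : ℕ) (k : List ℕ) (n : Fin k.sum → Fin N) : Prop :=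
  ∀ i : Fin k.sum,
    if (wordOf k).getD i.val false then prevVal n i < (n i : ℕ)
    else prevVal n i ≤ (n i : ℕ)

open scoped Classical in
/-- `ζ^♭_{<N}(𝐤)`: sum over `S_N(𝐤)` of `∏ ω̂_{u_i}^{(N)}(n_i)`. -/
noncomputable def zetaFlat (N : ℕ) (k : List ℕ) : ℝ :=
  ∑ n ∈ Finset.univ.filter (fun n : Fin k.sum → Fin N => SCond N k n),
    ∏ i, omegaHat N ((wordOf k).getD i.val false) (n i)

/-- `ζ^♮` attached to a word `u ∈ {e₀,e₁}^*`: sum over strictly increasing tuples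
`0 < n₁ < ⋯ < n_k < N` of `∏ ω̂_{u_i}^{(N)}(n_i)`. -/
noncomputable def zetaNatW (N : ℕ) (u : List Bool) : ℝ :=
  ∑ n ∈ Finset.univ.filter
      (fun n : Fin u.length → Fin N => (∀ i, 0 < (n i : ℕ)) ∧ StrictMono n),
    ∏ i, omegaHat N (u.get i) (n i)

/-- `ζ^♮_{<N}(𝐤)`. -/
noncomputable def zetaNat (N : ℕ) (k : List ℕ) : ℝ := zetaNatW N (wordOf k)

namespace MSW


lemma sum_Ico_telescope (f : ℕ → ℝ) (a b : ℕ) (h : a ≤ b) :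
    ∑ i ∈ Finset.Ico a b, (f i - f (i+1)) = f a - f b := by
  induction b, h using Nat.le_induction with
  | base => simp
  | succ b hb ih =>
      rw [Finset.sum_Ico_succ_top (by omega), ih]; ring

lemma choose_cast_succ_mul (b m : ℕ) :
    ((b+1 : ℕ) : ℝ) * ((b.choose m : ℕ) : ℝ) = ((b+1).choose (m+1) : ℝ) * ((m+1 : ℕ) : ℝ) := by
  exact_mod_cast congrArg (Nat.cast : ℕ → ℝ) (Nat.add_one_mul_choose_eq b m)

/-- Hockey stick, division form : `∑_{n=1}^{b} C(n,m)/n = C(b,m)/m` for `m ≥ 1`. -/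
lemma hockey (m : ℕ) (hm : 1 ≤ m) (b : ℕ) :
    ∑ n ∈ Finset.Icc 1 b, (n.choose m : ℝ)/n = (b.choose m : ℝ)/m := by
  obtain ⟨m', rfl⟩ : ∃ m', m = m' + 1 := ⟨m - 1, by omega⟩
  induction b with
  | zero => simp [Nat.choose_eq_zero_of_lt (show 0 < m'+1 by omega)]
  | succ b ih =>
      rw [Finset.sum_Icc_succ_top (by omega), ih]
      push_cast
      have h1 : ((b+1).choose (m'+1) : ℝ)/(b+1) = (b.choose m' : ℝ)/(m'+1) := by
        rw [div_eq_div_iff (by positivity) (by positivity)]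
        have := choose_cast_succ_mul b m'
        push_cast at this ⊢
        linarith
      push_cast at h1
      rw [h1]
      have h2 : ((b+1).choose (m'+1) : ℝ) = (b.choose m' : ℝ) + (b.choose (m'+1) : ℝ) := by
        exact_mod_cast congrArg (Nat.cast : ℕ → ℝ) (Nat.choose_succ_succ' b m')
      rw [h2]; ring




lemma perterm (N B j : ℕ) (hj : j + 2 ≤ N) (hB : B + 2 ≤ N) :
    (B.choose j : ℝ)/(((j:ℝ)+1) * ((N-1).choose (j+1) : ℝ))
      = (B.choose j : ℝ)/(((N-1-B : ℕ):ℝ) * ((N-1).choose j : ℝ))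
        - (B.choose (j+1) : ℝ)/(((N-1-B : ℕ):ℝ) * ((N-1).choose (j+1) : ℝ)) := by
  have hu : ((N-1).choose j : ℝ) ≠ 0 := by
    have := Nat.choose_pos (show j ≤ N-1 by omega); positivity
  have hv : ((N-1).choose (j+1) : ℝ) ≠ 0 := by
    have := Nat.choose_pos (show j+1 ≤ N-1 by omega); positivity
  have hc : ((N-1-B : ℕ):ℝ) = (N:ℝ)-1-B := by
    rw [Nat.cast_sub (by omega), Nat.cast_sub (by omega)]; push_cast; ring
  by_cases hjB : j ≤ B
  · have hv2 : ((N-1).choose (j+1) : ℝ) * ((j:ℝ)+1) = ((N-1).choose j : ℝ) * ((N:ℝ)-1-j) := by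
      have h := congrArg (Nat.cast : ℕ → ℝ) (Nat.choose_succ_right_eq (N-1) j)
      push_cast [Nat.cast_sub (show j ≤ N-1 by omega), Nat.cast_sub (show 1 ≤ N by omega)] at h
      linarith
    have hy2 : (B.choose (j+1) : ℝ) * ((j:ℝ)+1) = (B.choose j : ℝ) * ((B:ℝ)-j) := by
      have h := congrArg (Nat.cast : ℕ → ℝ) (Nat.choose_succ_right_eq B j)
      push_cast [Nat.cast_sub hjB] at h
      linarith
    rw [hc]
    have hcne : (N:ℝ)-1-B ≠ 0 := by
      have : (B:ℝ) + 2 ≤ N := by exact_mod_cast hB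
      intro h; rw [sub_eq_zero] at h; nlinarith
    have hj1 : ((j:ℝ)+1) ≠ 0 := by positivity
    rw [div_sub_div _ _ (mul_ne_zero hcne hu) (mul_ne_zero hcne hv),
        div_eq_div_iff (mul_ne_zero hj1 hv) (mul_ne_zero (mul_ne_zero hcne hu) (mul_ne_zero hcne hv))]
    linear_combination (-(((N:ℝ)-1-B) * (B.choose j:ℝ) * (((N-1).choose (j+1):ℕ):ℝ))) * hv2
      + (((N:ℝ)-1-B) * (((N-1).choose j:ℕ):ℝ) * (((N-1).choose (j+1):ℕ):ℝ)) * hy2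
  · have h1 : B.choose j = 0 := Nat.choose_eq_zero_of_lt (by omega)
    have h2 : B.choose (j+1) = 0 := Nat.choose_eq_zero_of_lt (by omega)
    simp [h1, h2]


lemma Bsum (N B p : ℕ) (hB : B + 2 ≤ N) :
    ∑ m ∈ Finset.Ioo p N, (B.choose (m-1) : ℝ)/((m:ℝ) * ((N-1).choose m : ℝ))
      = (B.choose p : ℝ)/(((N-1-B : ℕ):ℝ) * ((N-1).choose p : ℝ)) := by
  have hshift : ∑ m ∈ Finset.Ioo p N, (B.choose (m-1) : ℝ)/((m:ℝ) * ((N-1).choose m : ℝ))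
      = ∑ j ∈ Finset.Ico p (N-1), (B.choose j : ℝ)/(((j:ℝ)+1) * ((N-1).choose (j+1) : ℝ)) := by
    apply Finset.sum_nbij' (i := fun m => m - 1) (j := fun j => j + 1)
    · intro a ha; simp only [Finset.mem_Ioo] at ha; simp only [Finset.mem_Ico]; omega
    · intro a ha; simp only [Finset.mem_Ico] at ha; simp only [Finset.mem_Ioo]; omega
    · intro a ha; simp only [Finset.mem_Ioo] at ha; omega
    · intro a ha; simp only [Finset.mem_Ico] at ha; omega
    · intro a ha; simp only [Finset.mem_Ioo] at ha
      have h1 : a - 1 + 1 = a := by omega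
      rw [h1]
      have h2 : ((a:ℕ):ℝ) = ((a-1:ℕ):ℝ) + 1 := by
        rw [Nat.cast_sub (by omega)]; push_cast; ring
      rw [h2]
  rw [hshift]
  by_cases hp : p < N - 1
  · have : ∑ j ∈ Finset.Ico p (N-1), (B.choose j : ℝ)/(((j:ℝ)+1) * ((N-1).choose (j+1) : ℝ))
        = ∑ j ∈ Finset.Ico p (N-1),
            ((fun j => (B.choose j : ℝ)/(((N-1-B : ℕ):ℝ) * ((N-1).choose j : ℝ))) j
             - (fun j => (B.choose j : ℝ)/(((N-1-B : ℕ):ℝ) * ((N-1).choose j : ℝ))) (j+1)) := by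
      apply Finset.sum_congr rfl
      intro j hj; simp only [Finset.mem_Ico] at hj
      exact perterm N B j (by omega) hB
    rw [this, sum_Ico_telescope _ _ _ (by omega)]
    have hz : B.choose (N-1) = 0 := Nat.choose_eq_zero_of_lt (by omega)
    simp [hz]
  · have h1 : Finset.Ico p (N-1) = ∅ := by
      apply Finset.Ico_eq_empty; omega
    have h2 : B.choose p = 0 := Nat.choose_eq_zero_of_lt (by omega)
    simp [h1, h2]

lemma Bident (N B p : ℕ) (hB : B ≤ N-1) (hN : 1 ≤ N) :
    ∑ m ∈ Finset.Ioo p N, (B.choose m : ℝ)/((m:ℝ) * ((N-1).choose m : ℝ))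
      = ∑ n ∈ Finset.Icc 1 B, ((n-1).choose p : ℝ)/(((N-n : ℕ):ℝ) * ((N-1).choose p : ℝ)) := by
  induction B with
  | zero =>
      rw [Finset.sum_eq_zero, Finset.Icc_eq_empty (by omega), Finset.sum_empty]
      intro m hm; simp only [Finset.mem_Ioo] at hm
      rw [Nat.choose_eq_zero_of_lt (by omega)]; simp
  | succ B ih =>
      have hsplit : ∑ m ∈ Finset.Ioo p N, ((B+1).choose m : ℝ)/((m:ℝ) * ((N-1).choose m : ℝ))
          = (∑ m ∈ Finset.Ioo p N, (B.choose m : ℝ)/((m:ℝ) * ((N-1).choose m : ℝ)))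
            + ∑ m ∈ Finset.Ioo p N, (B.choose (m-1) : ℝ)/((m:ℝ) * ((N-1).choose m : ℝ)) := by
        rw [← Finset.sum_add_distrib]
        apply Finset.sum_congr rfl
        intro m hm; simp only [Finset.mem_Ioo] at hm
        obtain ⟨m', rfl⟩ : ∃ m', m = m' + 1 := ⟨m - 1, by omega⟩
        have h : ((B+1).choose (m'+1) : ℝ) = (B.choose m' : ℝ) + (B.choose (m'+1) : ℝ) := by
          exact_mod_cast congrArg (Nat.cast : ℕ → ℝ) (Nat.choose_succ_succ' B m')
        rw [h]
        simp only [Nat.add_sub_cancel]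
        ring
      rw [hsplit, ih (by omega), Bsum N B p (by omega),
          Finset.sum_Icc_succ_top (by omega)]
      have e1 : N-1-B = N-(B+1) := by omega
      have e2 : B+1-1 = B := by omega
      rw [e1, e2]




def pvb (p : ℕ) {K N : ℕ} (v : Fin K → Fin N) (i : Fin K) : ℕ :=
  if h : i.val = 0 then p
  else (v ⟨i.val - 1, Nat.lt_of_le_of_lt (Nat.sub_le _ _) i.isLt⟩ : ℕ)

lemma pvb_zero {K N : ℕ} (v : Fin K → Fin N) (i : Fin K) : pvb 0 v i = prevVal v i := rfl

lemma pvb_zero' {K N : ℕ} (p : ℕ) (v : Fin (K+1) → Fin N) : pvb p v 0 = p := by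
  simp [pvb]

lemma val_congr {N K : ℕ} (v : Fin K → Fin N) (j j' : Fin K) (h : j = j') :
    (v j : ℕ) = (v j' : ℕ) := by rw [h]

lemma pvb_succ {N K : ℕ} (p : ℕ) (v : Fin (K+1) → Fin N) (i : Fin K) :
    pvb p v i.succ = (v i.castSucc : ℕ) := by
  rw [pvb, dif_neg (by simp)]
  apply val_congr
  apply Fin.ext
  simp

lemma pvb_head {N K : ℕ} (v : Fin (K+1) → Fin N) (i : Fin K) :
    pvb ((v 0 : ℕ)) (Fin.tail v) i = (v i.castSucc : ℕ) := by
  rcases i with ⟨iv, hiv⟩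
  by_cases h : iv = 0
  · subst h
    rw [pvb, dif_pos rfl]
    have e : (Fin.castSucc (⟨0, hiv⟩ : Fin K)) = (0 : Fin (K+1)) := Fin.ext (by simp)
    rw [e]
  · rw [pvb, dif_neg h]
    show (v ((⟨iv - 1, by omega⟩ : Fin K)).succ : ℕ) = (v (⟨iv, hiv⟩ : Fin K).castSucc : ℕ)
    apply val_congr
    apply Fin.ext
    simp only [Fin.val_succ, Fin.coe_castSucc]
    omega

noncomputable def nestS (N : ℕ) : List Bool → (ℕ → ℕ → ℝ) → ℕ → ℝ
  | [], _, _ => 1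
  | c :: w, wt, p => ∑ n ∈ (if c then Finset.Ioo p N else Finset.Ico p N),
      wt 0 n * nestS N w (fun i => wt (i+1)) n

lemma filter_range_lt (N p : ℕ) :
    (Finset.range N).filter (fun n => p < n) = Finset.Ioo p N := by
  ext x; simp only [Finset.mem_filter, Finset.mem_range, Finset.mem_Ioo]; omega

lemma filter_range_le (N p : ℕ) :
    (Finset.range N).filter (fun n => p ≤ n) = Finset.Ico p N := by
  ext x; simp only [Finset.mem_filter, Finset.mem_range, Finset.mem_Ico]; omega

open scoped Classical in
lemma chain_sum (N : ℕ) : ∀ (w : List Bool) (K : ℕ) (hK : K = w.length)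
    (wt : ℕ → ℕ → ℝ) (p : ℕ),
    (∑ v ∈ Finset.univ.filter
        (fun v : Fin K → Fin N =>
          ∀ i : Fin K,
            if w.getD i.val false then pvb p v i < (v i : ℕ) else pvb p v i ≤ (v i : ℕ)),
      ∏ i, wt i.val (v i : ℕ))
    = nestS N w wt p := by
  intro w
  induction w with
  | nil =>
      intro K hK wt p
      subst hK
      rw [show nestS N [] wt p = 1 from rfl]
      have h1 : (Finset.univ.filter
          (fun v : Fin ([] : List Bool).length → Fin N =>
            ∀ i : Fin ([] : List Bool).length,
              if ([] : List Bool).getD i.val false then pvb p v i < (v i : ℕ)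
              else pvb p v i ≤ (v i : ℕ))) = Finset.univ :=
        Finset.filter_true_of_mem (fun v _ => fun i => Fin.elim0 i)
      rw [h1]
      simp
  | cons c w ih =>
      intro K hK wt p
      subst hK
      set P : (Fin (w.length + 1) → Fin N) → Prop := fun v =>
        ∀ i : Fin (w.length + 1),
          if (c :: w).getD i.val false then pvb p v i < (v i : ℕ) else pvb p v i ≤ (v i : ℕ)
        with hP
      set Pt : ℕ → (Fin w.length → Fin N) → Prop := fun q u =>
        ∀ i : Fin w.length,
          if w.getD i.val false then pvb q u i < (u i : ℕ) else pvb q u i ≤ (u i : ℕ)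
        with hPt
      set Q : (Fin (w.length + 1) → Fin N) → ℝ := fun v =>
        if (if c then p < (v 0 : ℕ) else p ≤ (v 0 : ℕ))
        then wt 0 (v 0 : ℕ) *
          (if Pt (v 0 : ℕ) (Fin.tail v)
           then (∏ i, wt (i.val + 1) (Fin.tail v i : ℕ)) else 0)
        else 0 with hQ
      have hcond : ∀ v, P v ↔
          ((if c then p < (v 0 : ℕ) else p ≤ (v 0 : ℕ)) ∧ Pt (v 0 : ℕ) (Fin.tail v)) := by
        intro v
        rw [hP]
        simp only
        rw [Fin.forall_fin_succ]
        apply and_congr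
        · rw [pvb_zero' p v]
          exact Iff.rfl
        · rw [hPt]
          apply forall_congr'
          intro i
          rw [pvb_succ p v i, show (c :: w).getD (i.succ.val) false = w.getD i.val false from by
                rw [Fin.val_succ]; exact List.getD_cons_succ]
          rw [pvb_head v i]
          exact Iff.rfl
      have hsplit : ∀ v : Fin (w.length + 1) → Fin N,
          (if P v then (∏ i, wt i.val (v i : ℕ)) else 0) = Q v := by
        intro v
        have hprod : (∏ i, wt i.val (v i : ℕ))
            = wt 0 (v 0 : ℕ) * ∏ i : Fin w.length, wt (i.val + 1) (Fin.tail v i : ℕ) := by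
          rw [Fin.prod_univ_succ]
          rfl
        rw [hQ]
        simp only
        by_cases h1 : (if c then p < (v 0 : ℕ) else p ≤ (v 0 : ℕ))
        · by_cases h2 : Pt (v 0 : ℕ) (Fin.tail v)
          · rw [if_pos ((hcond v).mpr ⟨h1, h2⟩), if_pos h1, if_pos h2, hprod]
          · rw [if_neg (fun hpv => h2 ((hcond v).mp hpv).2), if_pos h1, if_neg h2, mul_zero]
        · rw [if_neg (fun hpv => h1 ((hcond v).mp hpv).1), if_neg h1]
      calc
        (∑ v ∈ Finset.univ.filter P, ∏ i, wt i.val (v i : ℕ))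
            = ∑ v : Fin (w.length + 1) → Fin N,
                (if P v then (∏ i, wt i.val (v i : ℕ)) else 0) := Finset.sum_filter _ _
        _ = ∑ v : Fin (w.length + 1) → Fin N, Q v :=
              Finset.sum_congr rfl (fun v _ => hsplit v)
        _ = ∑ q : Fin N × (Fin w.length → Fin N),
              Q ((Fin.consEquiv (fun _ : Fin (w.length+1) => Fin N)) q) :=
              (Equiv.sum_comp (Fin.consEquiv (fun _ : Fin (w.length+1) => Fin N)) Q).symm
        _ = ∑ x : Fin N, ∑ u : Fin w.length → Fin N,
              Q ((Fin.consEquiv (fun _ : Fin (w.length+1) => Fin N)) (x, u)) :=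
              Fintype.sum_prod_type _
        _ = ∑ x : Fin N,
              (if (if c then p < (x : ℕ) else p ≤ (x : ℕ))
               then wt 0 (x : ℕ) * nestS N w (fun i => wt (i+1)) (x : ℕ) else 0) := by
              apply Finset.sum_congr rfl
              intro x _
              have hv : ∀ u : Fin w.length → Fin N,
                  (Fin.consEquiv (fun _ : Fin (w.length+1) => Fin N)) (x, u) = Fin.cons x u :=
                fun u => rfl
              by_cases h1 : (if c then p < (x : ℕ) else p ≤ (x : ℕ))
              · calc
                  (∑ u : Fin w.length → Fin N,
                      Q ((Fin.consEquiv (fun _ : Fin (w.length+1) => Fin N)) (x, u)))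
                      = ∑ u : Fin w.length → Fin N,
                          (if Pt (x : ℕ) u then wt 0 (x : ℕ) * (∏ i, wt (i.val + 1) (u i : ℕ))
                           else 0) := by
                        apply Finset.sum_congr rfl
                        intro u _
                        rw [hv u, hQ]
                        simp only [Fin.cons_zero, Fin.tail_cons]
                        by_cases h2 : Pt (x : ℕ) u
                        · rw [if_pos h1, if_pos h2, if_pos h2]
                        · rw [if_pos h1, if_neg h2, if_neg h2, mul_zero]
                  _ = wt 0 (x : ℕ) * nestS N w (fun i => wt (i+1)) (x : ℕ) := by
                        rw [← ih w.length rfl (fun i => wt (i+1)) (x : ℕ), Finset.sum_filter]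
                        rw [Finset.mul_sum]
                        apply Finset.sum_congr rfl
                        intro u _
                        by_cases h2 : Pt (x : ℕ) u
                        · rw [if_pos h2, if_pos h2]
                        · rw [if_neg h2, if_neg h2, mul_zero]
                rw [if_pos h1]
              · rw [if_neg h1]
                apply Finset.sum_eq_zero
                intro u _
                rw [hv u, hQ]
                simp only [Fin.cons_zero, Fin.tail_cons]
                rw [if_neg h1]
        _ = ∑ n ∈ Finset.range N,
              (if (if c then p < n else p ≤ n)
               then wt 0 n * nestS N w (fun i => wt (i+1)) n else 0) :=
              Fin.sum_univ_eq_sum_range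
                (fun n => if (if c then p < n else p ≤ n)
                  then wt 0 n * nestS N w (fun i => wt (i+1)) n else 0) N
        _ = ∑ n ∈ (if c then Finset.Ioo p N else Finset.Ico p N),
              wt 0 n * nestS N w (fun i => wt (i+1)) n := by
              cases c
              · rw [if_neg (by simp)]
                rw [← filter_range_le N p, Finset.sum_filter]
                apply Finset.sum_congr rfl
                intro n _
                congr 1
              · rw [if_pos rfl]
                rw [← filter_range_lt N p, Finset.sum_filter]
                apply Finset.sum_congr rfl
                intro n _
                congr 1
        _ = nestS N (c :: w) wt p := rfl


noncomputable def Tb (N : ℕ) : List Bool → ℕ → ℝ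
  | [], _ => 1
  | c :: w, p => ∑ n ∈ (if c then Finset.Ioo p N else Finset.Ico p N),
      omegaHat N c n * Tb N w n

noncomputable def Cx (N : ℕ) (c : Bool) (m n : ℕ) : ℝ :=
  (((if c then n-1 else n).choose m : ℕ) : ℝ) / (((N-1).choose m : ℕ) : ℝ)

noncomputable def Jx (N : ℕ) : List Bool → ℕ → ℝ
  | [], _ => 1
  | c :: w, p => ∑ n ∈ Finset.Ioo 0 N, Cx N c p n * (omegaHat N c n * Tb N w n)

lemma omega_false (N n : ℕ) : omegaHat N false n = 1/(n:ℝ) := by simp [omegaHat]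

lemma omega_true (N n : ℕ) (h : n < N) : omegaHat N true n = 1/((N-n : ℕ):ℝ) := by
  simp only [omegaHat, if_true]
  rw [Nat.cast_sub (le_of_lt h)]

lemma Ioo_zero (N : ℕ) : Finset.Ioo 0 N = Finset.Icc 1 (N-1) := by
  ext x; simp only [Finset.mem_Ioo, Finset.mem_Icc]; omega

lemma sum_comm_iff {s s' : Finset ℕ} {t t' : ℕ → Finset ℕ} (f g : ℕ → ℕ → ℝ)
    (hmem : ∀ n b, (n ∈ s ∧ b ∈ t n) ↔ (b ∈ s' ∧ n ∈ t' b))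
    (hfg : ∀ n b, n ∈ s → b ∈ t n → f n b = g b n) :
    ∑ n ∈ s, ∑ b ∈ t n, f n b = ∑ b ∈ s', ∑ n ∈ t' b, g b n := by
  rw [Finset.sum_sigma' s t f, Finset.sum_sigma' s' t' g]
  apply Finset.sum_nbij' (i := fun x => ⟨x.2, x.1⟩) (j := fun x => ⟨x.2, x.1⟩)
  · rintro ⟨n, b⟩ h
    rw [Finset.mem_sigma] at h ⊢
    exact (hmem n b).mp h
  · rintro ⟨b, n⟩ h
    rw [Finset.mem_sigma] at h ⊢
    exact (hmem n b).mpr h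
  · rintro ⟨n, b⟩ _; rfl
  · rintro ⟨b, n⟩ _; rfl
  · rintro ⟨n, b⟩ h
    rw [Finset.mem_sigma] at h
    exact hfg n b h.1 h.2

lemma keyE (N : ℕ) (w : List Bool) (m : ℕ) (hm : 1 ≤ m) (hmN : m ≤ N-1) :
    Jx N (false :: w) m = (1/(m:ℝ)) * Jx N w m := by
  have hCN : (((N-1).choose m : ℕ) : ℝ) ≠ 0 := by
    have := Nat.choose_pos hmN; positivity
  cases w with
  | nil =>
      show (∑ n ∈ Finset.Ioo 0 N, Cx N false m n * (omegaHat N false n * 1)) = 1/(m:ℝ) * 1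
      rw [Ioo_zero]
      have h1 : ∀ n ∈ Finset.Icc 1 (N-1),
          Cx N false m n * (omegaHat N false n * 1)
            = (n.choose m : ℝ)/n * (1/(((N-1).choose m : ℕ):ℝ)) := by
        intro n hn
        rw [omega_false, Cx]
        simp only [if_neg (Bool.false_ne_true)]
        field_simp
      rw [Finset.sum_congr rfl h1, ← Finset.sum_mul, hockey m hm (N-1)]
      field_simp
  | cons c' w' =>
      show (∑ n ∈ Finset.Ioo 0 N, Cx N false m n * (omegaHat N false n * Tb N (c'::w') n))
        = 1/(m:ℝ) * Jx N (c'::w') m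
      have hexp : ∀ n ∈ Finset.Ioo 0 N,
          Cx N false m n * (omegaHat N false n * Tb N (c'::w') n)
            = ∑ b ∈ (if c' then Finset.Ioo n N else Finset.Ico n N),
                Cx N false m n * omegaHat N false n * (omegaHat N c' b * Tb N w' b) := by
        intro n hn
        rw [show Tb N (c'::w') n
              = ∑ b ∈ (if c' then Finset.Ioo n N else Finset.Ico n N),
                  omegaHat N c' b * Tb N w' b from rfl]
        rw [Finset.mul_sum, Finset.mul_sum]
        apply Finset.sum_congr rfl; intro b _; ring
      rw [Finset.sum_congr rfl hexp]
      rw [sum_comm_iff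
            (f := fun n b => Cx N false m n * omegaHat N false n * (omegaHat N c' b * Tb N w' b))
            (g := fun b n => Cx N false m n * omegaHat N false n * (omegaHat N c' b * Tb N w' b))
            (s' := Finset.Ioo 0 N)
            (t' := fun b => Finset.Icc 1 (if c' then b-1 else b))
            (hmem := by
              intro n b
              cases c' <;> simp only [if_true, if_false, Finset.mem_Ioo, Finset.mem_Ico,
                Finset.mem_Icc, Bool.false_eq_true] <;> omega)
            (hfg := by intro n b _ _; rfl)]
      rw [show Jx N (c'::w') m
            = ∑ b ∈ Finset.Ioo 0 N, Cx N c' m b * (omegaHat N c' b * Tb N w' b) from rfl,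
          Finset.mul_sum]
      apply Finset.sum_congr rfl
      intro b hb
      have hinner : ∀ n ∈ Finset.Icc 1 (if c' then b-1 else b),
          Cx N false m n * omegaHat N false n * (omegaHat N c' b * Tb N w' b)
            = (n.choose m : ℝ)/n * ((omegaHat N c' b * Tb N w' b) * (1/(((N-1).choose m : ℕ):ℝ))) := by
        intro n hn
        rw [omega_false, Cx]
        simp only [if_neg (Bool.false_ne_true)]
        field_simp
      rw [Finset.sum_congr rfl hinner, ← Finset.sum_mul, hockey m hm]
      rw [Cx]
      field_simp

lemma keyG (N : ℕ) (w : List Bool) (p : ℕ) (hp : p ≤ N-1) (hN : 1 ≤ N) :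
    ∑ m ∈ Finset.Ioo p N, (1/(m:ℝ)) * Jx N w m = Jx N (true :: w) p := by
  have hCN : (((N-1).choose p : ℕ) : ℝ) ≠ 0 := by
    have := Nat.choose_pos hp; positivity
  cases w with
  | nil =>
      show (∑ m ∈ Finset.Ioo p N, (1/(m:ℝ)) * 1)
        = ∑ n ∈ Finset.Ioo 0 N, Cx N true p n * (omegaHat N true n * 1)
      have h1 : ∀ m ∈ Finset.Ioo p N, (1/(m:ℝ)) * 1
          = ((N-1).choose m : ℝ)/((m:ℝ) * ((N-1).choose m : ℝ)) := by
        intro m hm; simp only [Finset.mem_Ioo] at hm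
        have : (((N-1).choose m : ℕ) : ℝ) ≠ 0 := by
          have := Nat.choose_pos (show m ≤ N-1 by omega); positivity
        rw [mul_comm (m:ℝ), ← div_div, div_self this, mul_one]
      rw [Finset.sum_congr rfl h1, Bident N (N-1) p le_rfl hN]
      rw [Ioo_zero]
      apply Finset.sum_congr rfl
      intro n hn; simp only [Finset.mem_Icc] at hn
      rw [omega_true N n (by omega), Cx]
      simp only [if_true]
      field_simp
  | cons c' w' =>
      have hexp : ∀ m ∈ Finset.Ioo p N,
          (1/(m:ℝ)) * Jx N (c'::w') m
            = ∑ b ∈ Finset.Ioo 0 N,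
                ((if c' then b-1 else b).choose m : ℝ)/((m:ℝ) * ((N-1).choose m : ℝ))
                  * (omegaHat N c' b * Tb N w' b) := by
        intro m hm; simp only [Finset.mem_Ioo] at hm
        rw [show Jx N (c'::w') m
              = ∑ b ∈ Finset.Ioo 0 N, Cx N c' m b * (omegaHat N c' b * Tb N w' b) from rfl,
            Finset.mul_sum]
        apply Finset.sum_congr rfl
        intro b _
        rw [Cx]
        field_simp
      rw [Finset.sum_congr rfl hexp]
      rw [sum_comm_iff
            (f := fun m b => ((if c' then b-1 else b).choose m : ℝ)/((m:ℝ) * ((N-1).choose m : ℝ))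
                  * (omegaHat N c' b * Tb N w' b))
            (g := fun b m => ((if c' then b-1 else b).choose m : ℝ)/((m:ℝ) * ((N-1).choose m : ℝ))
                  * (omegaHat N c' b * Tb N w' b))
            (s' := Finset.Ioo 0 N)
            (t' := fun _ => Finset.Ioo p N)
            (hmem := by intro n b; constructor <;> (rintro ⟨h1, h2⟩; exact ⟨h2, h1⟩))
            (hfg := by intro n b _ _; rfl)]
      have hmid : ∀ b ∈ Finset.Ioo 0 N,
          (∑ m ∈ Finset.Ioo p N,
            ((if c' then b-1 else b).choose m : ℝ)/((m:ℝ) * ((N-1).choose m : ℝ))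
              * (omegaHat N c' b * Tb N w' b))
          = ∑ n ∈ Finset.Icc 1 (if c' then b-1 else b),
              ((n-1).choose p : ℝ)/(((N-n : ℕ):ℝ) * ((N-1).choose p : ℝ))
                * (omegaHat N c' b * Tb N w' b) := by
        intro b hb; simp only [Finset.mem_Ioo] at hb
        rw [← Finset.sum_mul, ← Finset.sum_mul,
            Bident N (if c' then b-1 else b) p (by split <;> omega) hN]
      rw [Finset.sum_congr rfl hmid]
      rw [sum_comm_iff
            (f := fun b n => ((n-1).choose p : ℝ)/(((N-n : ℕ):ℝ) * ((N-1).choose p : ℝ))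
                  * (omegaHat N c' b * Tb N w' b))
            (g := fun n b => ((n-1).choose p : ℝ)/(((N-n : ℕ):ℝ) * ((N-1).choose p : ℝ))
                  * (omegaHat N c' b * Tb N w' b))
            (s' := Finset.Ioo 0 N)
            (t' := fun n => if c' then Finset.Ioo n N else Finset.Ico n N)
            (hmem := by
              intro b n
              cases c' <;> simp only [if_true, if_false, Finset.mem_Ioo, Finset.mem_Ico,
                Finset.mem_Icc, Bool.false_eq_true] <;> omega)
            (hfg := by intro n b _ _; rfl)]
      show _ = ∑ n ∈ Finset.Ioo 0 N, Cx N true p n * (omegaHat N true n * Tb N (c'::w') n)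
      apply Finset.sum_congr rfl
      intro n hn; simp only [Finset.mem_Ioo] at hn
      rw [show Tb N (c'::w') n
            = ∑ b ∈ (if c' then Finset.Ioo n N else Finset.Ico n N),
                omegaHat N c' b * Tb N w' b from rfl,
          Finset.mul_sum, Finset.mul_sum]
      apply Finset.sum_congr rfl
      intro b _
      rw [omega_true N n hn.2, Cx]
      simp only [if_true]
      field_simp


noncomputable def Mb (N : ℕ) : List ℕ → ℕ → ℝ
  | [], _ => 1
  | a :: l, p => ∑ n ∈ Finset.Ioo p N, (1/(n:ℝ)^a) * Mb N l n

noncomputable def Zx (N : ℕ) : List ℕ → List Bool → ℕ → ℝ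
  | [], w, p => Jx N w p
  | a :: l, w, p => ∑ n ∈ Finset.Ioo p N, (1/(n:ℝ)^a) * Zx N l w n

lemma moveE (N : ℕ) (l : List ℕ) (w : List Bool) (a : ℕ) (ha : 2 ≤ a) :
    ∀ p, Zx N (l ++ [a]) w p = Zx N (l ++ [a-1]) (false :: w) p := by
  induction l with
  | nil =>
      intro p
      show (∑ n ∈ Finset.Ioo p N, (1/(n:ℝ)^a) * Zx N [] w n)
        = ∑ n ∈ Finset.Ioo p N, (1/(n:ℝ)^(a-1)) * Zx N [] (false :: w) n
      apply Finset.sum_congr rfl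
      intro n hn; simp only [Finset.mem_Ioo] at hn
      show (1/(n:ℝ)^a) * Jx N w n = (1/(n:ℝ)^(a-1)) * Jx N (false :: w) n
      rw [keyE N w n (by omega) (by omega)]
      have hpow : (1/(n:ℝ)^a) = (1/(n:ℝ)^(a-1)) * (1/(n:ℝ)) := by
        rw [div_mul_div_comm, one_mul, ← pow_succ]
        have : a - 1 + 1 = a := by omega
        rw [this]
      rw [hpow]; ring
  | cons b l ih =>
      intro p
      show (∑ n ∈ Finset.Ioo p N, (1/(n:ℝ)^b) * Zx N (l ++ [a]) w n)
        = ∑ n ∈ Finset.Ioo p N, (1/(n:ℝ)^b) * Zx N (l ++ [a-1]) (false :: w) n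
      apply Finset.sum_congr rfl
      intro n _; rw [ih n]

lemma moveG (N : ℕ) (l : List ℕ) (w : List Bool) (hN : 1 ≤ N) :
    ∀ p, p ≤ N-1 → Zx N (l ++ [1]) w p = Zx N l (true :: w) p := by
  induction l with
  | nil =>
      intro p hp
      show (∑ n ∈ Finset.Ioo p N, (1/(n:ℝ)^1) * Zx N [] w n) = Jx N (true :: w) p
      rw [← keyG N w p hp hN]
      apply Finset.sum_congr rfl
      intro n _
      rw [pow_one]
      rfl
  | cons b l ih =>
      intro p hp
      show (∑ n ∈ Finset.Ioo p N, (1/(n:ℝ)^b) * Zx N (l ++ [1]) w n)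
        = ∑ n ∈ Finset.Ioo p N, (1/(n:ℝ)^b) * Zx N l (true :: w) n
      apply Finset.sum_congr rfl
      intro n hn; simp only [Finset.mem_Ioo] at hn
      rw [ih n (by omega)]

lemma blockmove (N : ℕ) (hN : 1 ≤ N) (a : ℕ) (ha : 1 ≤ a) :
    ∀ l w p, p ≤ N-1 →
      Zx N (l ++ [a]) w p = Zx N l (true :: List.replicate (a-1) false ++ w) p := by
  induction a, ha using Nat.le_induction with
  | base =>
      intro l w p hp
      simpa using moveG N l w hN p hp
  | succ a ha ih =>
      intro l w p hp
      rw [show a + 1 - 1 = a by omega] at *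
      rw [moveE N l w (a+1) (by omega) p]
      rw [show a + 1 - 1 = a by omega]
      rw [ih l (false :: w) p hp]
      congr 1
      show true :: List.replicate (a-1) false ++ (false :: w)
        = true :: List.replicate a false ++ w
      rw [show List.replicate a false = List.replicate (a-1) false ++ [false] by
        conv_lhs => rw [show a = (a-1) + 1 by omega]
        exact List.replicate_succ']
      simp

lemma traverse (N : ℕ) (hN : 1 ≤ N) :
    ∀ k : List ℕ, (∀ x ∈ k, 1 ≤ x) → ∀ w p, p ≤ N-1 →
      Zx N k w p = Jx N (wordOf k ++ w) p := by
  intro k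
  induction k using List.reverseRecOn with
  | nil => intro _ w p _; simp [wordOf]; rfl
  | append_singleton l a ih =>
      intro hk w p hp
      rw [blockmove N hN a (hk a (by simp)) l w p hp]
      rw [ih (fun x hx => hk x (by simp [hx])) _ p hp]
      congr 1
      rw [wordOf, wordOf, List.flatMap_append]
      simp [wordOf]

lemma Zstart (N : ℕ) : ∀ (k : List ℕ) p, Zx N k [] p = Mb N k p := by
  intro k
  induction k with
  | nil => intro p; rfl
  | cons a l ih =>
      intro p
      show (∑ n ∈ Finset.Ioo p N, (1/(n:ℝ)^a) * Zx N l [] n)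
        = ∑ n ∈ Finset.Ioo p N, (1/(n:ℝ)^a) * Mb N l n
      exact Finset.sum_congr rfl (fun n _ => by rw [ih n])

lemma Zend (N : ℕ) (v : List Bool) : Jx N (true :: v) 0 = Tb N (true :: v) 0 := by
  show (∑ n ∈ Finset.Ioo 0 N, Cx N true 0 n * (omegaHat N true n * Tb N v n))
    = ∑ n ∈ (if true then Finset.Ioo 0 N else Finset.Ico 0 N), omegaHat N true n * Tb N v n
  rw [if_pos rfl]
  apply Finset.sum_congr rfl
  intro n _
  rw [Cx]
  simp [Nat.choose_zero_right]

theorem main_math (N : ℕ) (hN : 1 ≤ N) (k : List ℕ) (hk : ∀ x ∈ k, 1 ≤ x) :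
    Mb N k 0 = Tb N (wordOf k) 0 := by
  cases k with
  | nil => rfl
  | cons a l =>
      rw [← Zstart N (a :: l) 0, traverse N hN (a :: l) hk [] 0 (by omega),
          List.append_nil]
      have ha : 1 ≤ a := hk a (by simp)
      rw [show wordOf (a :: l) = true :: (List.replicate (a-1) false ++ wordOf l) by
        rw [wordOf, List.flatMap_cons]; simp [wordOf]]
      exact Zend N _


lemma nestS_T (N : ℕ) : ∀ (w : List Bool) (p : ℕ),
    nestS N w (fun i x => omegaHat N (w.getD i false) x) p = Tb N w p := by
  intro w
  induction w with
  | nil => intro p; rfl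
  | cons c w ih =>
      intro p
      apply Finset.sum_congr rfl
      intro n _
      exact congrArg (fun z => omegaHat N c n * z) (ih n)

lemma nestS_M (N : ℕ) : ∀ (k : List ℕ) (p : ℕ),
    nestS N (List.replicate k.length true) (fun i x => 1/(x:ℝ)^(k.getD i 0)) p = Mb N k p := by
  intro k
  induction k with
  | nil => intro p; rfl
  | cons a l ih =>
      intro p
      apply Finset.sum_congr rfl
      intro n _
      exact congrArg (fun z => (1/(n:ℝ)^a) * z) (ih n)

lemma strict_cond {N K : ℕ} (v : Fin K → Fin N) :
    ((∀ i, 0 < (v i : ℕ)) ∧ StrictMono v) ↔ (∀ i : Fin K, pvb 0 v i < (v i : ℕ)) := by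
  constructor
  · rintro ⟨h0, hm⟩ i
    rw [pvb]
    split_ifs with h
    · exact h0 i
    · have hlt : (⟨i.val - 1, Nat.lt_of_le_of_lt (Nat.sub_le _ _) i.isLt⟩ : Fin K) < i := by
        rw [Fin.lt_def]
        simp only []
        omega
      have := hm hlt
      rwa [Fin.lt_def] at this
  · intro h
    constructor
    · intro i
      exact Nat.lt_of_le_of_lt (Nat.zero_le _) (h i)
    · cases K with
      | zero => intro a; exact a.elim0
      | succ K' =>
          rw [Fin.strictMono_iff_lt_succ]
          intro i
          have hi := h i.succ
          rw [pvb_succ 0 v i] at hi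
          rw [Fin.lt_def]
          exact hi

lemma replicate_getD (K : ℕ) (i : Fin K) :
    (List.replicate K true).getD i.val false = true := by
  rw [List.getD_eq_getElem _ _ (by simpa using i.isLt), List.getElem_replicate]

open scoped Classical in
lemma MHS_eq_Mb (N : ℕ) (k : List ℕ) : MHS N k = Mb N k 0 := by
  rw [MHS, ← nestS_M N k 0,
      ← chain_sum N (List.replicate k.length true) k.length (by simp) _ 0]
  apply Finset.sum_congr
  · apply Finset.filter_congr
    intro v _
    rw [strict_cond v]
    apply forall_congr'
    intro i
    rw [replicate_getD k.length i, if_pos rfl]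
  · intro v _
    apply Finset.prod_congr rfl
    intro i _
    have : k.getD i.val 0 = k.get i := by
      rw [List.getD_eq_getElem _ _ i.isLt]
      rfl
    rw [this]

lemma wordOf_length (k : List ℕ) (hk : ∀ x ∈ k, 0 < x) : k.sum = (wordOf k).length := by
  induction k with
  | nil => rfl
  | cons a l ih =>
      rw [wordOf, List.flatMap_cons]
      simp only [List.length_append, List.length_cons, List.length_replicate]
      rw [List.sum_cons]
      have h1 := ih (fun x hx => hk x (List.mem_cons_of_mem a hx))
      rw [show (l.flatMap fun j => true :: List.replicate (j-1) false) = wordOf l from rfl]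
      have ha := hk a (List.mem_cons_self)
      omega

open scoped Classical in
lemma zetaFlat_eq_Tb (N : ℕ) (k : List ℕ) (hk : ∀ x ∈ k, 0 < x) :
    zetaFlat N k = Tb N (wordOf k) 0 := by
  rw [zetaFlat, ← nestS_T N (wordOf k) 0,
      ← chain_sum N (wordOf k) k.sum (wordOf_length k hk) _ 0]
  apply Finset.sum_congr
  · apply Finset.filter_congr
    intro v _
    exact Iff.rfl
  · intro v _
    rfl


end MSW

/-- Maesaka–Seki–Watanabe: for every positive integer `N` and every
index `𝐤` (a tuple of positive integers), `ζ_{<N}(𝐤) = ζ^♭_{<N}(𝐤)`. -/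
theorem stmt_0 (N : ℕ) (hN : 0 < N) (k : List ℕ) (hk : ∀ x ∈ k, 0 < x) :
    MHS N k = zetaFlat N k := by
  rw [MSW.MHS_eq_Mb N k, MSW.zetaFlat_eq_Tb N k hk]
  exact MSW.main_math N hN k hk
end

section
/- Let k be a positive integer and a_1,...,a_k, b_1,...,b_k non-negative integers with a_1 ≥ 1 and a_i + b_i ≥ 1 for all i. If there exists some i ∈ [k] with b_i ≥ 1 and a_i + b_i ≥ 2, then R_{<N}(a_1,...,a_k; b_1,...,b_k) = O(N^{−1} log^k N) as N → ∞. -/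
open Finset

-- per-index bound: if a+b ≥ 1 then f ≤ h
lemma f_le_h' {N a b n : ℕ} (h1 : 0 < n) (h2 : n < N) (hab : 1 ≤ a + b) :
    1/(((N:ℝ)-n)^a * (n:ℝ)^b) ≤ 1/((N:ℝ)-n) + 1/(n:ℝ) := by
  have hx : (1:ℝ) ≤ n := by exact_mod_cast h1
  have hy : (1:ℝ) ≤ (N:ℝ) - n := by
    have : (n:ℝ) + 1 ≤ N := by exact_mod_cast h2
    linarith
  have hx0 : (0:ℝ) < n := by linarith
  have hy0 : (0:ℝ) < (N:ℝ) - n := by linarith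
  rcases Nat.eq_zero_or_pos a with ha | ha
  · have hb : 1 ≤ b := by omega
    have h1' : (n:ℝ) ≤ ((N:ℝ)-n)^a * (n:ℝ)^b := by
      calc (n:ℝ) = 1 * (n:ℝ)^1 := by ring
      _ ≤ ((N:ℝ)-n)^a * (n:ℝ)^b := by
        apply mul_le_mul (one_le_pow₀ hy) (pow_le_pow_right₀ hx hb) (by positivity) (by positivity)
    calc 1/(((N:ℝ)-n)^a * (n:ℝ)^b) ≤ 1/(n:ℝ) := by
          apply one_div_le_one_div_of_le hx0 h1'
      _ ≤ 1/((N:ℝ)-n) + 1/(n:ℝ) := by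
          have : (0:ℝ) ≤ 1/((N:ℝ)-n) := by positivity
          linarith
  · have h1' : ((N:ℝ)-n) ≤ ((N:ℝ)-n)^a * (n:ℝ)^b := by
      calc ((N:ℝ)-n) = ((N:ℝ)-n)^1 * 1 := by ring
      _ ≤ ((N:ℝ)-n)^a * (n:ℝ)^b := by
        apply mul_le_mul (pow_le_pow_right₀ hy ha) (one_le_pow₀ hx) (by norm_num) (by positivity)
    calc 1/(((N:ℝ)-n)^a * (n:ℝ)^b) ≤ 1/((N:ℝ)-n) := by
          apply one_div_le_one_div_of_le hy0 h1'
      _ ≤ 1/((N:ℝ)-n) + 1/(n:ℝ) := by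
          have : (0:ℝ) ≤ 1/(n:ℝ) := by positivity
          linarith

-- case j = 0: a ≥ 1, b ≥ 1 at same index
lemma f0_le' {N a b n : ℕ} (h1 : 0 < n) (h2 : n < N) (ha : 1 ≤ a) (hb : 1 ≤ b) :
    1/(((N:ℝ)-n)^a * (n:ℝ)^b) ≤ 4/N * (1/((N:ℝ)-n) + 1/(n:ℝ)) := by
  have hx : (1:ℝ) ≤ n := by exact_mod_cast h1
  have hy : (1:ℝ) ≤ (N:ℝ) - n := by
    have : (n:ℝ) + 1 ≤ N := by exact_mod_cast h2
    linarith
  have hx0 : (0:ℝ) < n := by linarith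
  have hy0 : (0:ℝ) < (N:ℝ) - n := by linarith
  have hN0 : (0:ℝ) < N := by linarith
  have hd : ((N:ℝ)-n) * n ≤ ((N:ℝ)-n)^a * (n:ℝ)^b :=
    by
    calc ((N:ℝ)-n) * n = ((N:ℝ)-n)^1 * (n:ℝ)^1 := by ring
    _ ≤ ((N:ℝ)-n)^a * (n:ℝ)^b :=
      mul_le_mul (pow_le_pow_right₀ hy ha) (pow_le_pow_right₀ hx hb) (by positivity) (by positivity)
  have h1' : 1/(((N:ℝ)-n)^a * (n:ℝ)^b) ≤ 1/(((N:ℝ)-n) * n) :=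
    one_div_le_one_div_of_le (by positivity) hd
  have key : 1/(((N:ℝ)-n) * n) = 1/N * (1/((N:ℝ)-n) + 1/(n:ℝ)) := by
    have hs : 1/((N:ℝ)-n) + 1/(n:ℝ) = N / (((N:ℝ)-n)*n) := by
      field_simp
      ring
    rw [hs, div_mul_div_comm, one_mul, div_eq_div_iff (by positivity) (by positivity)]
    ring
  calc 1/(((N:ℝ)-n)^a * (n:ℝ)^b) ≤ 1/N * (1/((N:ℝ)-n) + 1/(n:ℝ)) := by rw [← key]; exact h1'
    _ ≤ 4/N * (1/((N:ℝ)-n) + 1/(n:ℝ)) := by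
        have hpos : (0:ℝ) ≤ 1/((N:ℝ)-n) + 1/(n:ℝ) := by positivity
        apply mul_le_mul_of_nonneg_right _ hpos
        gcongr
        norm_num

lemma pair_le' {N a0 b0 aj bj n0 nj : ℕ} (h01 : 0 < n0) (h0j : n0 ≤ nj) (hjN : nj < N)
    (ha0 : 1 ≤ a0) (hbj : 1 ≤ bj) (habj : 2 ≤ aj + bj) :
    1/(((N:ℝ)-n0)^a0 * (n0:ℝ)^b0) * (1/(((N:ℝ)-nj)^aj * (nj:ℝ)^bj))
      ≤ 4/N * ((1/((N:ℝ)-n0) + 1/(n0:ℝ)) * (1/((N:ℝ)-nj) + 1/(nj:ℝ))) := by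
  obtain ⟨a', rfl⟩ : ∃ a', a0 = a' + 1 := ⟨a0 - 1, by omega⟩
  obtain ⟨b', rfl⟩ : ∃ b', bj = b' + 1 := ⟨bj - 1, by omega⟩
  have h0N : n0 < N := lt_of_le_of_lt h0j hjN
  have hx0 : (1:ℝ) ≤ n0 := by exact_mod_cast h01
  have hxj : (1:ℝ) ≤ nj := by exact_mod_cast (h01.trans_le h0j)
  have hx0j : (n0:ℝ) ≤ nj := by exact_mod_cast h0j
  have hyj : (1:ℝ) ≤ (N:ℝ) - nj := by
    have : (nj:ℝ) + 1 ≤ N := by exact_mod_cast hjN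
    linarith
  have hy0 : (1:ℝ) ≤ (N:ℝ) - n0 := by linarith
  have hN : (2:ℝ) ≤ N := by
    have : 2 ≤ N := by omega
    exact_mod_cast this
  set x0 : ℝ := (n0:ℝ) with hx0def
  set xj : ℝ := (nj:ℝ) with hxjdef
  set y0 : ℝ := (N:ℝ) - n0 with hy0def
  set yj : ℝ := (N:ℝ) - nj with hyjdef
  set G0 : ℝ := 1/(y0^a' * x0^b0) with hG0
  set Gj : ℝ := 1/(yj^aj * xj^b') with hGj
  set H0 : ℝ := 1/y0 + 1/x0 with hH0
  set Hj : ℝ := 1/yj + 1/xj with hHj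
  have hG0nn : 0 ≤ G0 := by positivity
  have hGjnn : 0 ≤ Gj := by positivity
  have hHjnn : 0 ≤ Hj := by positivity
  have hH0nn : 0 ≤ H0 := by positivity
  -- decompose LHS
  have hdecomp : 1/(y0^(a'+1) * x0^b0) * (1/(yj^aj * xj^(b'+1)))
      = 1/(y0*xj) * (G0 * Gj) := by
    rw [hG0, hGj, pow_succ, pow_succ]
    field_simp
  -- coupling
  have hsum : (N:ℝ) ≤ y0 + xj := by rw [hy0def, hxjdef]; linarith
  have hcouple : 1/(y0*xj) ≤ 2/N * (1/y0 + 1/xj) := by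
    have e1 : 1/y0 + 1/xj = (y0+xj)/(y0*xj) := by field_simp; ring
    have e2 : (N:ℝ)/(y0*xj) ≤ (y0+xj)/(y0*xj) :=
      div_le_div_of_nonneg_right hsum (by positivity)
    calc 1/(y0*xj) ≤ 2/(y0*xj) := by gcongr; norm_num
      _ = 2/N * ((N:ℝ)/(y0*xj)) := by
          rw [div_mul_div_comm, mul_comm (2:ℝ) _, mul_div_mul_left _ _ (by linarith : (N:ℝ) ≠ 0)]
      _ ≤ 2/N * ((y0+xj)/(y0*xj)) := mul_le_mul_of_nonneg_left e2 (by positivity)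
      _ = 2/N * (1/y0 + 1/xj) := by rw [e1]
  -- the two cross terms
  have hF0 : 1/y0 * G0 ≤ H0 := by
    have : 1/y0 * G0 = 1/(y0^(a'+1) * x0^b0) := by
      rw [hG0, pow_succ]; field_simp
    rw [this, hH0]
    exact f_le_h' h01 h0N (by omega)
  have hGjH : Gj ≤ Hj := by
    rw [hGj, hHj]
    exact f_le_h' (h01.trans_le h0j) hjN (by omega)
  have hterm2 : G0 * (1/xj * Gj) ≤ H0 * Hj := by
    rcases Nat.eq_zero_or_pos (a' + b0) with hz | hz
    · have ha' : a' = 0 := by omega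
      have hb0 : b0 = 0 := by omega
      have hG0one : G0 = 1 := by rw [hG0, ha', hb0]; norm_num
      have h1 : 1/xj * Gj ≤ 1/x0 * Hj := by
        apply mul_le_mul _ hGjH hGjnn (by positivity)
        exact one_div_le_one_div_of_le (by linarith) hx0j
      calc G0 * (1/xj * Gj) = 1/xj * Gj := by rw [hG0one, one_mul]
        _ ≤ 1/x0 * Hj := h1
        _ ≤ H0 * Hj := by
            apply mul_le_mul_of_nonneg_right _ hHjnn
            rw [hH0]
            have : 0 ≤ 1/y0 := by positivity
            linarith
    · have h1 : G0 ≤ H0 := by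
        rw [hG0, hH0]
        exact f_le_h' h01 h0N (by omega)
      have h2 : 1/xj * Gj ≤ Hj := by
        have : 1/xj * Gj = 1/(yj^aj * xj^(b'+1)) := by
          rw [hGj, pow_succ]; field_simp
        rw [this, hHj]
        exact f_le_h' (h01.trans_le h0j) hjN (by omega)
      exact mul_le_mul h1 h2 (by positivity) hH0nn
  have hF0Gj : 1/y0 * G0 * Gj ≤ H0 * Hj :=
    mul_le_mul hF0 hGjH hGjnn hH0nn
  calc 1/(y0^(a'+1) * x0^b0) * (1/(yj^aj * xj^(b'+1)))
      = 1/(y0*xj) * (G0 * Gj) := hdecomp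
    _ ≤ 2/N * (1/y0 + 1/xj) * (G0 * Gj) := by
        apply mul_le_mul_of_nonneg_right hcouple (by positivity)
    _ = 2/N * (1/y0 * G0 * Gj + G0 * (1/xj * Gj)) := by ring
    _ ≤ 2/N * (H0 * Hj + H0 * Hj) := by
        apply mul_le_mul_of_nonneg_left _ (by positivity)
        exact add_le_add hF0Gj hterm2
    _ = 4/N * (H0 * Hj) := by ring

lemma prod_le_main {N k : ℕ} (hk : 0 < k) (a b : Fin k → ℕ) (ha1 : 1 ≤ a ⟨0,hk⟩)
    (hab : ∀ i, 1 ≤ a i + b i) {j : Fin k} (hbj : 1 ≤ b j) (habj : 2 ≤ a j + b j)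
    (n : Fin k → Fin N) (hn : ∀ i, 0 < (n i : ℕ)) (hmono : StrictMono n) :
    ∏ i, 1 / (((N : ℝ) - n i) ^ a i * (n i : ℝ) ^ b i) ≤
      4/(N:ℝ) * ∏ i, (1/((N:ℝ) - n i) + 1/(n i : ℝ)) := by
  set z : Fin k := ⟨0, hk⟩ with hz
  have hiN : ∀ i, ((n i : ℕ)) < N := fun i => (n i).isLt
  set F : Fin k → ℝ := fun i => 1 / (((N : ℝ) - n i) ^ a i * (n i : ℝ) ^ b i) with hF
  set H : Fin k → ℝ := fun i => 1/((N:ℝ) - n i) + 1/(n i : ℝ) with hH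
  have hsub : ∀ i, (1:ℝ) ≤ (N:ℝ) - n i := by
    intro i
    have : ((n i:ℕ):ℝ) + 1 ≤ N := by exact_mod_cast hiN i
    linarith
  have hFH : ∀ i, F i ≤ H i := fun i => f_le_h' (hn i) (hiN i) (hab i)
  have hFnn : ∀ i, 0 ≤ F i := by
    intro i
    have h1 : (0:ℝ) < (n i : ℝ) := by exact_mod_cast hn i
    have h2 := hsub i
    dsimp [F]
    positivity
  have hHnn : ∀ i, 0 ≤ H i := by
    intro i
    have h1 : (0:ℝ) < (n i : ℝ) := by exact_mod_cast hn i
    have h2 := hsub i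
    dsimp [H]
    positivity
  by_cases hjz : j = z
  · -- j = 0 case
    subst hjz
    have hFj : F z ≤ 4/(N:ℝ) * H z := f0_le' (hn z) (hiN z) ha1 hbj
    have hprod : ∏ i ∈ univ.erase z, F i ≤ ∏ i ∈ univ.erase z, H i :=
      prod_le_prod (fun i _ => hFnn i) (fun i _ => hFH i)
    calc ∏ i, F i = F z * ∏ i ∈ univ.erase z, F i := (mul_prod_erase univ F (mem_univ z)).symm
      _ ≤ (4/(N:ℝ) * H z) * ∏ i ∈ univ.erase z, H i := by
          apply mul_le_mul hFj hprod (prod_nonneg fun i _ => hFnn i)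
          have := hHnn z
          positivity
      _ = 4/(N:ℝ) * (H z * ∏ i ∈ univ.erase z, H i) := by ring
      _ = 4/(N:ℝ) * ∏ i, H i := by rw [mul_prod_erase univ H (mem_univ z)]
  · -- j ≠ 0 case
    have hzj : z ≤ j := by
      rw [hz, Fin.le_def]
      exact Nat.zero_le _
    have hmem : j ∈ univ.erase z := mem_erase.2 ⟨hjz, mem_univ j⟩
    have hnle : (n z : ℕ) ≤ (n j : ℕ) := by
      have := hmono.monotone hzj
      exact this
    have hpair : F z * F j ≤ 4/(N:ℝ) * (H z * H j) :=
      pair_le' (hn z) hnle (hiN j) ha1 hbj habj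
    have hprod : ∏ i ∈ (univ.erase z).erase j, F i ≤ ∏ i ∈ (univ.erase z).erase j, H i :=
      prod_le_prod (fun i _ => hFnn i) (fun i _ => hFH i)
    calc ∏ i, F i = F z * ∏ i ∈ univ.erase z, F i := (mul_prod_erase univ F (mem_univ z)).symm
      _ = F z * (F j * ∏ i ∈ (univ.erase z).erase j, F i) := by rw [mul_prod_erase _ F hmem]
      _ = (F z * F j) * ∏ i ∈ (univ.erase z).erase j, F i := by ring
      _ ≤ (4/(N:ℝ) * (H z * H j)) * ∏ i ∈ (univ.erase z).erase j, H i := by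
          apply mul_le_mul hpair hprod (prod_nonneg fun i _ => hFnn i)
          have := hHnn z
          have := hHnn j
          positivity
      _ = 4/(N:ℝ) * (H z * (H j * ∏ i ∈ (univ.erase z).erase j, H i)) := by ring
      _ = 4/(N:ℝ) * (H z * ∏ i ∈ univ.erase z, H i) := by rw [mul_prod_erase _ H hmem]
      _ = 4/(N:ℝ) * ∏ i, H i := by rw [mul_prod_erase univ H (mem_univ z)]

lemma harm_le {N : ℕ} (hN : 2 ≤ N) : ∑ m ∈ Finset.Ico 1 N, (1:ℝ)/m ≤ 1 + Real.log N := by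
  have h1 : Finset.Ico 1 N = Finset.Icc 1 (N-1) := by
    ext m; simp only [mem_Ico, mem_Icc]; omega
  have h2 := harmonic_le_one_add_log (N-1)
  rw [harmonic_eq_sum_Icc] at h2
  have h3 : ((∑ i ∈ Finset.Icc 1 (N-1), (i:ℚ)⁻¹ : ℚ) : ℝ) = ∑ m ∈ Finset.Ico 1 N, (1:ℝ)/m := by
    rw [h1]
    push_cast
    simp [one_div]
  rw [h3] at h2
  refine h2.trans ?_
  have : Real.log ((N:ℝ)-1) ≤ Real.log N := by
    apply Real.log_le_log (by push_cast; linarith [show (2:ℝ) ≤ N by exact_mod_cast hN])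
    push_cast; linarith
  have hc : ((N-1 : ℕ):ℝ) = (N:ℝ) - 1 := by
    push_cast [Nat.cast_sub (by omega : 1 ≤ N)]; ring
  rw [hc]
  linarith

lemma reflect_eq {N : ℕ} : ∑ m ∈ Finset.Ico 1 N, 1/((N:ℝ) - m) = ∑ m ∈ Finset.Ico 1 N, (1:ℝ)/m := by
  apply Finset.sum_nbij' (fun m => N - m) (fun m => N - m)
  · intro a ha; simp only [mem_Ico] at *; omega
  · intro a ha; simp only [mem_Ico] at *; omega
  · intro a ha; simp only [mem_Ico] at ha; omega
  · intro a ha; simp only [mem_Ico] at ha; omega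
  · intro a ha
    simp only [mem_Ico] at ha
    rw [Nat.cast_sub (by omega : a ≤ N)]

lemma sum_h_le {N : ℕ} (hN : 2 ≤ N) :
    ∑ m ∈ Finset.univ.filter (fun m : Fin N => 0 < (m:ℕ)), (1/((N:ℝ) - m) + 1/(m:ℝ))
      ≤ 6 * Real.log N := by
  have step1 : ∑ m ∈ Finset.univ.filter (fun m : Fin N => 0 < (m:ℕ)), (1/((N:ℝ) - m) + 1/(m:ℝ))
      = ∑ m ∈ Finset.Ico 1 N, (1/((N:ℝ) - m) + 1/(m:ℝ)) := by
    rw [Finset.sum_filter]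
    rw [Fin.sum_univ_eq_sum_range (fun m : ℕ => if 0 < m then (1/((N:ℝ) - m) + 1/(m:ℝ)) else 0)]
    rw [← Finset.sum_filter]
    congr 1
    ext m
    simp only [Finset.mem_filter, Finset.mem_range, Finset.mem_Ico]
    omega
  rw [step1, Finset.sum_add_distrib, reflect_eq]
  have hlog2 : (1:ℝ) ≤ 2 * Real.log N := by
    have h2 : Real.log 2 ≤ Real.log N := by
      apply Real.log_le_log (by norm_num)
      exact_mod_cast hN
    have := Real.log_two_gt_d9
    linarith
  have hh := harm_le hN
  linarith

lemma hlogpos {N : ℕ} (hN : 2 ≤ N) : (0:ℝ) < Real.log N := by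
  apply Real.log_pos
  exact_mod_cast Nat.lt_of_lt_of_le Nat.one_lt_two hN

/-- `R_{<N}(a₁,…,a_k; b₁,…,b_k) = Σ_{0<n₁<⋯<n_k<N} Π_i 1/((N-n_i)^{a_i} n_i^{b_i})`. -/
noncomputable def Rsum (N k : ℕ) (a b : Fin k → ℕ) : ℝ :=
  ∑ n ∈ Finset.univ.filter
      (fun n : Fin k → Fin N => (∀ i, 0 < (n i : ℕ)) ∧ StrictMono n),
    ∏ i, 1 / (((N : ℝ) - n i) ^ a i * (n i : ℝ) ^ b i)

/-- Lemma (ii): if some `i` has `b_i ≥ 1` and `a_i + b_i ≥ 2`, then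
`R_{<N} = O(N⁻¹ log^k N)` as `N → ∞`. -/
theorem stmt_2 (k : ℕ) (hk : 0 < k) (a b : Fin k → ℕ)
    (ha1 : 1 ≤ a ⟨0, hk⟩) (hab : ∀ i, 1 ≤ a i + b i)
    (h : ∃ i, 1 ≤ b i ∧ 2 ≤ a i + b i) :
    ∃ C : ℝ, ∀ N : ℕ, 2 ≤ N → Rsum N k a b ≤ C * (Real.log N) ^ k / N := by
  obtain ⟨j, hbj, habj⟩ := h
  refine ⟨4 * 6 ^ k, ?_⟩
  intro N hN
  have hN0 : (0:ℝ) < N := by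
    have : (2:ℝ) ≤ N := by exact_mod_cast hN
    linarith
  have hHnn : ∀ (m : Fin N), 0 ≤ 1/((N:ℝ) - m) + 1/(m : ℝ) := by
    intro m
    have h2 : ((m:ℕ):ℝ) + 1 ≤ N := by exact_mod_cast m.isLt
    have e1 : (0:ℝ) ≤ 1/((N:ℝ) - m) := by
      apply one_div_nonneg.2; linarith
    have e2 : (0:ℝ) ≤ 1/(m:ℝ) := by positivity
    linarith
  have hST : Finset.univ.filter
      (fun n : Fin k → Fin N => (∀ i, 0 < (n i : ℕ)) ∧ StrictMono n) ⊆
      Finset.univ.filter (fun n : Fin k → Fin N => ∀ i, 0 < (n i : ℕ)) :=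
    by
      intro n hn
      rw [Finset.mem_filter] at *
      exact ⟨hn.1, hn.2.1⟩
  have hTpi : Finset.univ.filter (fun n : Fin k → Fin N => ∀ i, 0 < (n i : ℕ))
      = Fintype.piFinset (fun _ : Fin k => Finset.univ.filter (fun m : Fin N => 0 < (m:ℕ))) := by
    ext n
    simp [Fintype.mem_piFinset]
  have hSnn : (0:ℝ) ≤ ∑ m ∈ Finset.univ.filter (fun m : Fin N => 0 < (m:ℕ)),
      (1/((N:ℝ) - m) + 1/(m:ℝ)) :=
    Finset.sum_nonneg fun m _ => hHnn m
  calc Rsum N k a b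
      ≤ ∑ n ∈ Finset.univ.filter
          (fun n : Fin k → Fin N => (∀ i, 0 < (n i : ℕ)) ∧ StrictMono n),
          4/(N:ℝ) * ∏ i, (1/((N:ℝ) - n i) + 1/(n i : ℝ)) := by
        rw [Rsum]
        refine Finset.sum_le_sum fun n hn => ?_
        rw [Finset.mem_filter] at hn
        exact prod_le_main hk a b ha1 hab hbj habj n hn.2.1 hn.2.2
    _ = 4/(N:ℝ) * ∑ n ∈ Finset.univ.filter
          (fun n : Fin k → Fin N => (∀ i, 0 < (n i : ℕ)) ∧ StrictMono n),
          ∏ i, (1/((N:ℝ) - n i) + 1/(n i : ℝ)) := by rw [Finset.mul_sum]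
    _ ≤ 4/(N:ℝ) * ∑ n ∈ Finset.univ.filter
          (fun n : Fin k → Fin N => ∀ i, 0 < (n i : ℕ)),
          ∏ i, (1/((N:ℝ) - n i) + 1/(n i : ℝ)) := by
        apply mul_le_mul_of_nonneg_left _ (by positivity)
        apply Finset.sum_le_sum_of_subset_of_nonneg hST
        intro n _ _
        exact Finset.prod_nonneg fun i _ => hHnn (n i)
    _ = 4/(N:ℝ) * (∑ m ∈ Finset.univ.filter (fun m : Fin N => 0 < (m:ℕ)),
          (1/((N:ℝ) - m) + 1/(m:ℝ))) ^ k := by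
        rw [hTpi,
          Finset.sum_prod_piFinset (Finset.univ.filter (fun m : Fin N => 0 < (m:ℕ)))
            (fun (_ : Fin k) (m : Fin N) => 1/((N:ℝ) - m) + 1/(m:ℝ))]
        rw [Finset.prod_const, Finset.card_univ, Fintype.card_fin]
    _ ≤ 4/(N:ℝ) * (6 * Real.log N) ^ k := by
        apply mul_le_mul_of_nonneg_left _ (by positivity)
        exact pow_le_pow_left₀ hSnn (sum_h_le hN) k
    _ = 4 * 6 ^ k * (Real.log N) ^ k / N := by
        rw [mul_pow]
        ring
end

section
/- Let k be a positive integer and a_1,...,a_k, b_1,...,b_k non-negative integers with a_1 ≥ 1 and a_i + b_i ≥ 1 for all i. If there exist indices i < j in [k] with a_i ≥ 2 and b_j ≥ 1, then R_{<N}(a_1,...,a_k; b_1,...,b_k) = O(N^{−1} log^k N) as N → ∞. -/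
/-!
Every factor with `a_l + b_l ≥ 1` is at most `1/(N - n_l) + 1/n_l`. The pair `i < j` yields one
more factor: `a_i ≥ 2` leaves a spare `1/(N - n_i) ≤ 1/(N - n_j)`, and together with `1/n_j` the
partial fraction `1/((N - n) n) = N⁻¹ (1/(N - n) + 1/n)` produces the decay `N⁻¹`. Forgetting the
ordering of the `n_l`, the remaining sum factors into the `k`-th power of
`∑_{m<N} (1/(N - m) + 1/m) ≤ 2 H_N = O(log N)`.
-/

open Finset

lemma one_div_pow_mul_pow_le_of_le {x y : ℝ} (hx : 1 ≤ x) (hy : 1 ≤ y) {a b a' b' : ℕ}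
    (ha : a' ≤ a) (hb : b' ≤ b) : 1 / (x ^ a * y ^ b) ≤ 1 / (x ^ a' * y ^ b') :=
  one_div_le_one_div_of_le (by positivity) <|
    mul_le_mul (pow_le_pow_right₀ hx ha) (pow_le_pow_right₀ hy hb) (by positivity) (by positivity)

lemma one_div_pow_mul_pow_le_one_div_add_one_div {x y : ℝ} (hx : 1 ≤ x) (hy : 1 ≤ y) {a b : ℕ}
    (hab : 1 ≤ a + b) : 1 / (x ^ a * y ^ b) ≤ 1 / x + 1 / y := by
  rcases Nat.eq_zero_or_pos a with rfl | ha
  · calc 1 / (x ^ 0 * y ^ b) ≤ 1 / (x ^ 0 * y ^ 1) :=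
          one_div_pow_mul_pow_le_of_le hx hy le_rfl (by omega)
      _ ≤ 1 / x + 1 / y := by
          simp only [pow_zero, one_mul, pow_one]
          linarith [one_div_pos.2 (zero_lt_one.trans_le hx)]
  · calc 1 / (x ^ a * y ^ b) ≤ 1 / (x ^ 1 * y ^ 0) :=
          one_div_pow_mul_pow_le_of_le hx hy ha (Nat.zero_le b)
      _ ≤ 1 / x + 1 / y := by
          simp only [pow_zero, mul_one, pow_one]
          linarith [one_div_pos.2 (zero_lt_one.trans_le hy)]

lemma one_div_mul_one_div_eq_one_div_add_mul {x y : ℝ} (hx : x ≠ 0) (hy : y ≠ 0)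
    (hxy : x + y ≠ 0) :
    1 / x * (1 / y) = 1 / (x + y) * (1 / x + 1 / y) := by
  field_simp
  ring

lemma prod_le_mul_prod_of_pair_le {ι : Type*} [Fintype ι] [DecidableEq ι] {f g : ι → ℝ} {c : ℝ}
    {i j : ι} (hij : i ≠ j) (hf : ∀ l, 0 ≤ f l) (hpair : f i * f j ≤ c * (g i * g j))
    (hrest : ∀ l, l ≠ i → l ≠ j → f l ≤ g l) : ∏ l, f l ≤ c * ∏ l, g l := by
  have hj : j ∈ univ.erase i := mem_erase.2 ⟨hij.symm, mem_univ j⟩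
  rw [← mul_prod_erase univ f (mem_univ i), ← mul_prod_erase _ f hj,
    ← mul_prod_erase univ g (mem_univ i), ← mul_prod_erase _ g hj, ← mul_assoc (f i),
    ← mul_assoc (g i), ← mul_assoc c]
  refine mul_le_mul hpair (prod_le_prod (fun l _ => hf l) fun l hl => ?_)
    (prod_nonneg fun l _ => hf l) ((mul_nonneg (hf i) (hf j)).trans hpair)
  obtain ⟨hlj, hl⟩ := mem_erase.1 hl
  exact hrest l (mem_erase.1 hl).1 hlj

lemma prod_one_div_pow_mul_pow_le {ι : Type*} [Fintype ι] [DecidableEq ι] {N : ℝ}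
    {x y : ι → ℝ} {a b : ι → ℕ} (hx : ∀ l, 1 ≤ x l) (hy : ∀ l, 1 ≤ y l)
    (hab : ∀ l, 1 ≤ a l + b l) {i j : ι} (hij : i ≠ j) (hxji : x j ≤ x i) (hxy : x j + y j = N)
    (hai : 2 ≤ a i) (hbj : 1 ≤ b j) :
    ∏ l, 1 / (x l ^ a l * y l ^ b l) ≤ 1 / N * ∏ l, (1 / x l + 1 / y l) := by
  have hx0 : ∀ l, 0 < x l := fun l => zero_lt_one.trans_le (hx l)
  have hy0 : ∀ l, 0 < y l := fun l => zero_lt_one.trans_le (hy l)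
  refine prod_le_mul_prod_of_pair_le hij (fun l => by have := hx0 l; have := hy0 l; positivity) ?_
    fun l _ _ => one_div_pow_mul_pow_le_one_div_add_one_div (hx l) (hy l) (hab l)
  have hfi : 1 / (x i ^ a i * y i ^ b i) ≤ 1 / x i * (1 / x j) := by
    calc 1 / (x i ^ a i * y i ^ b i) ≤ 1 / (x i ^ 2 * y i ^ 0) :=
          one_div_pow_mul_pow_le_of_le (hx i) (hy i) hai (Nat.zero_le _)
      _ = 1 / x i * (1 / x i) := by rw [pow_zero, mul_one, sq, one_div_mul_one_div]
      _ ≤ 1 / x i * (1 / x j) :=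
          mul_le_mul_of_nonneg_left (one_div_le_one_div_of_le (hx0 j) hxji)
            (one_div_pos.2 (hx0 i)).le
  have hfj : 1 / (x j ^ a j * y j ^ b j) ≤ 1 / y j := by
    simpa using one_div_pow_mul_pow_le_of_le (hx j) (hy j) (Nat.zero_le (a j)) hbj
  have hsplit : 1 / x j * (1 / y j) = 1 / N * (1 / x j + 1 / y j) := by
    rw [← hxy]
    exact one_div_mul_one_div_eq_one_div_add_mul (hx0 j).ne' (hy0 j).ne'
      (by linarith [hx0 j, hy0 j])
  have hgi : 1 / x i ≤ 1 / x i + 1 / y i := le_add_of_nonneg_right (one_div_pos.2 (hy0 i)).le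
  calc 1 / (x i ^ a i * y i ^ b i) * (1 / (x j ^ a j * y j ^ b j))
      ≤ 1 / x i * (1 / x j) * (1 / y j) :=
        mul_le_mul hfi hfj (by have := hx0 j; have := hy0 j; positivity)
          (mul_pos (one_div_pos.2 (hx0 i)) (one_div_pos.2 (hx0 j))).le
    _ = 1 / x i * (1 / N * (1 / x j + 1 / y j)) := by rw [mul_assoc, hsplit]
    _ ≤ (1 / x i + 1 / y i) * (1 / N * (1 / x j + 1 / y j)) := by
        refine mul_le_mul_of_nonneg_right hgi ?_
        rw [← hsplit]
        exact (mul_pos (one_div_pos.2 (hx0 j)) (one_div_pos.2 (hy0 j))).le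
    _ = 1 / N * ((1 / x i + 1 / y i) * (1 / x j + 1 / y j)) := by ring

lemma harmonic_le_three_mul_log {N : ℕ} (hN : 2 ≤ N) : (harmonic N : ℝ) ≤ 3 * Real.log N := by
  have hlog : 1 / 2 ≤ Real.log N := by
    have := Real.log_le_log (by norm_num) (show (2 : ℝ) ≤ N by exact_mod_cast hN)
    linarith [Real.log_two_gt_d9]
  linarith [harmonic_le_one_add_log N]

lemma sum_one_div_sub_eq_harmonic (N : ℕ) : ∑ m : Fin N, 1 / ((N : ℝ) - m) = harmonic N := by
  rw [Fin.sum_univ_eq_sum_range (fun m : ℕ => 1 / ((N : ℝ) - m)) N, ← sum_range_reflect, harmonic]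
  push_cast
  refine sum_congr rfl fun m hm => ?_
  rw [Nat.cast_sub (by simp at hm; omega), Nat.cast_sub (by simp at hm; omega)]
  simp only [one_div, Nat.cast_one]
  ring_nf

lemma sum_one_div_le_harmonic (N : ℕ) : ∑ m : Fin N, 1 / (m : ℝ) ≤ harmonic N := by
  rcases N with _ | M
  · simp
  rw [Fin.sum_univ_succ, harmonic_succ]
  simp only [Fin.val_zero, Fin.val_succ, Nat.cast_zero, div_zero, zero_add]
  rw [Fin.sum_univ_eq_sum_range (fun m : ℕ => 1 / ((m + 1 : ℕ) : ℝ)) M, harmonic]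
  push_cast
  simp only [one_div]
  exact le_add_of_nonneg_right (by positivity)

lemma sum_one_div_sub_add_one_div_le {N : ℕ} (hN : 2 ≤ N) :
    ∑ m : Fin N, (1 / ((N : ℝ) - m) + 1 / (m : ℝ)) ≤ 6 * Real.log N := by
  rw [sum_add_distrib, sum_one_div_sub_eq_harmonic]
  linarith [sum_one_div_le_harmonic N, harmonic_le_three_mul_log hN]

lemma one_le_natCast_sub_val {N : ℕ} (m : Fin N) : 1 ≤ (N : ℝ) - m := by
  have : (m : ℝ) + 1 ≤ N := by exact_mod_cast m.isLt
  linarith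

lemma one_div_natCast_sub_val_add_one_div_nonneg {N : ℕ} (m : Fin N) :
    0 ≤ 1 / ((N : ℝ) - m) + 1 / (m : ℝ) :=
  add_nonneg (one_div_nonneg.2 (zero_le_one.trans (one_le_natCast_sub_val m))) (by positivity)

lemma Rsum_le_one_div_mul_pow (N : ℕ) {k : ℕ} {a b : Fin k → ℕ} (hab : ∀ i, 1 ≤ a i + b i)
    {i j : Fin k} (hij : i < j) (hai : 2 ≤ a i) (hbj : 1 ≤ b j) :
    Rsum N k a b ≤ 1 / N * (∑ m : Fin N, (1 / ((N : ℝ) - m) + 1 / (m : ℝ))) ^ k := by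
  calc Rsum N k a b
      ≤ ∑ n ∈ univ.filter (fun n : Fin k → Fin N => (∀ i, 0 < (n i : ℕ)) ∧ StrictMono n),
          1 / N * ∏ l, (1 / ((N : ℝ) - n l) + 1 / (n l : ℝ)) := by
        refine sum_le_sum fun n hn => ?_
        obtain ⟨hpos, hmono⟩ := (mem_filter.1 hn).2
        refine prod_one_div_pow_mul_pow_le (fun l => one_le_natCast_sub_val (n l))
          (fun l => by exact_mod_cast hpos l) hab hij.ne ?_ (sub_add_cancel _ _) hai hbj
        have : (n i : ℝ) ≤ n j := by exact_mod_cast (hmono hij).le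
        linarith
    _ ≤ ∑ n : Fin k → Fin N, 1 / N * ∏ l, (1 / ((N : ℝ) - n l) + 1 / (n l : ℝ)) :=
        sum_le_sum_of_subset_of_nonneg (filter_subset _ _) fun n _ _ =>
          mul_nonneg (by positivity)
            (prod_nonneg fun l _ => one_div_natCast_sub_val_add_one_div_nonneg (n l))
    _ = 1 / N * (∑ m : Fin N, (1 / ((N : ℝ) - m) + 1 / (m : ℝ))) ^ k := by
        rw [Fintype.sum_pow, mul_sum]

theorem stmt_3_general (k : ℕ) (a b : Fin k → ℕ)
    (hab : ∀ i, 1 ≤ a i + b i)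
    (h : ∃ i j : Fin k, i < j ∧ 2 ≤ a i ∧ 1 ≤ b j) :
    ∃ C : ℝ, ∀ N : ℕ, 2 ≤ N → Rsum N k a b ≤ C * (Real.log N) ^ k / N := by
  obtain ⟨i, j, hij, hai, hbj⟩ := h
  refine ⟨6 ^ k, fun N hN => ?_⟩
  have hsum_nonneg : 0 ≤ ∑ m : Fin N, (1 / ((N : ℝ) - m) + 1 / (m : ℝ)) :=
    sum_nonneg fun m _ => one_div_natCast_sub_val_add_one_div_nonneg m
  calc Rsum N k a b ≤ 1 / N * (∑ m : Fin N, (1 / ((N : ℝ) - m) + 1 / (m : ℝ))) ^ k :=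
        Rsum_le_one_div_mul_pow N hab hij hai hbj
    _ ≤ 1 / N * (6 * Real.log N) ^ k := by gcongr; exact sum_one_div_sub_add_one_div_le hN
    _ = 6 ^ k * Real.log N ^ k / N := by ring

/-- Lemma (iii): if there are `i < j` with `a_i ≥ 2` and `b_j ≥ 1`,
then `R_{<N} = O(N⁻¹ log^k N)` as `N → ∞`. -/
theorem stmt_3 (k : ℕ) (hk : 0 < k) (a b : Fin k → ℕ)
    (ha1 : 1 ≤ a ⟨0, hk⟩) (hab : ∀ i, 1 ≤ a i + b i)
    (h : ∃ i j : Fin k, i < j ∧ 2 ≤ a i ∧ 1 ≤ b j) :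
    ∃ C : ℝ, ∀ N : ℕ, 2 ≤ N → Rsum N k a b ≤ C * (Real.log N) ^ k / N :=
  stmt_3_general k a b hab h
end

section
/- For any index 𝐤, ζ^♭_{<N}(𝐤) = ζ^♮_{<N}(𝐤) + O(N^{−1} log^a N) as N → ∞, for some positive integer a depending only on 𝐤. Here ζ^♮_{<N}(𝐤) is the sum of the same summand Π_{i=1}^k ω̂_{u_i}^{(N)}(n_i) but over strictly increasing tuples 0 < n_1 < ... < n_k < N. -/
open Finset

/- ### Auxiliary lemmas -/

lemma omegaHat_nonneg (N : ℕ) (u : Bool) (m : Fin N) : 0 ≤ omegaHat N u (m : ℕ) := by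
  cases u with
  | false => simp only [omegaHat, if_false, Bool.false_eq_true]; positivity
  | true =>
    simp only [omegaHat, if_true]
    apply one_div_nonneg.mpr
    have : ((m : ℕ) : ℝ) < N := by exact_mod_cast m.isLt
    linarith

lemma harmonic_cast (n : ℕ) : ((harmonic n : ℚ) : ℝ) = ∑ i ∈ range n, 1 / ((i : ℝ) + 1) := by
  rw [harmonic]
  push_cast
  simp [one_div]

lemma sum_omega_le (N : ℕ) (hN : 1 ≤ N) (u : Bool) :
    ∑ m : Fin N, omegaHat N u (m : ℕ) ≤ 1 + Real.log N := by
  rw [Fin.sum_univ_eq_sum_range (fun i => omegaHat N u i) N]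
  cases u with
  | false =>
    obtain ⟨M, rfl⟩ : ∃ M, N = M + 1 := ⟨N - 1, by omega⟩
    rw [Finset.sum_range_succ']
    have h0 : omegaHat (M+1) false 0 = 0 := by simp [omegaHat]
    rw [h0, add_zero]
    have h1 : ∑ i ∈ range M, omegaHat (M+1) false (i+1) = ((harmonic M : ℚ) : ℝ) := by
      rw [harmonic_cast]
      apply Finset.sum_congr rfl
      intro i _
      simp only [omegaHat, if_false, Bool.false_eq_true]
      push_cast
      ring_nf
    rw [h1]
    refine le_trans (harmonic_le_one_add_log M) ?_
    have : Real.log M ≤ Real.log (M+1) := by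
      rcases Nat.eq_zero_or_pos M with h|h
      · subst h; simp
      · exact Real.log_le_log (by exact_mod_cast h) (by push_cast; linarith)
    push_cast
    linarith
  | true =>
    rw [← Finset.sum_range_reflect]
    have h1 : ∀ j ∈ range N, omegaHat N true (N - 1 - j) = 1 / ((j : ℝ) + 1) := by
      intro j hj
      have hj' : j < N := mem_range.mp hj
      have h2 : (N - 1 - j : ℕ) = N - (j + 1) := by omega
      simp only [omegaHat, if_true, h2]
      rw [Nat.cast_sub (by omega : j + 1 ≤ N)]
      push_cast
      ring_nf
    rw [Finset.sum_congr rfl h1]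
    have h3 : ∑ j ∈ range N, 1 / ((j:ℝ)+1) = ((harmonic N : ℚ) : ℝ) := (harmonic_cast N).symm
    rw [h3]
    exact harmonic_le_one_add_log N

lemma wordOf_length (k : List ℕ) (hk : ∀ x ∈ k, 0 < x) : (wordOf k).length = k.sum := by
  induction k with
  | nil => rfl
  | cons a tl ih =>
    simp only [wordOf, List.flatMap_cons, List.length_append, List.length_cons,
      List.length_replicate, List.sum_cons]
    have h1 : (wordOf tl).length = tl.sum := ih (fun x hx => hk x (List.mem_cons_of_mem _ hx))
    have h2 := hk a List.mem_cons_self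
    simp only [wordOf] at h1
    omega

lemma wordOf_head' (k : List ℕ) (h : k ≠ []) : (wordOf k).getD 0 false = true := by
  rcases k with _ | ⟨a, tl⟩
  · exact absurd rfl h
  · simp [wordOf, List.flatMap_cons]

lemma zetaNatW_eq (N : ℕ) (u : List Bool) (w : ℕ) (h : u.length = w) :
    zetaNatW N u = ∑ n ∈ Finset.univ.filter
      (fun n : Fin w → Fin N => (∀ i, 0 < (n i : ℕ)) ∧ StrictMono n),
      ∏ i, omegaHat N (u.getD i.val false) (n i) := by
  subst h
  unfold zetaNatW
  refine Finset.sum_congr rfl fun n _ => Finset.prod_congr rfl fun i _ => ?_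
  rw [List.getD_eq_getElem u false i.isLt]
  simp [List.get_eq_getElem]

/-- for any index `𝐤`,
`ζ^♭_{<N}(𝐤) = ζ^♮_{<N}(𝐤) + O(N⁻¹ logᵃ N)` as `N → ∞`, for some positive integer `a`. -/
theorem stmt_6 (k : List ℕ) (hk : ∀ x ∈ k, 0 < x) :
    ∃ a : ℕ, 0 < a ∧ ∃ C : ℝ, ∀ N : ℕ, 2 ≤ N →
      |zetaFlat N k - zetaNat N k| ≤ C * (Real.log N) ^ a / N := by
  classical
  set w := k.sum with hw
  refine ⟨w + 2, by omega, 2 * (w:ℝ) * 3 ^ (w+2), fun N hN => ?_⟩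
  have hN2 : (2:ℝ) ≤ (N:ℝ) := by exact_mod_cast hN
  have hN0 : (0:ℝ) < N := by linarith
  have hlog : (1/2 : ℝ) ≤ Real.log N := by
    have h2 : Real.log 2 ≤ Real.log N := Real.log_le_log (by norm_num) hN2
    have := Real.log_two_gt_d9
    norm_num at this ⊢
    linarith
  set L : ℝ := 1 + Real.log N with hLdef
  have hL1 : (1:ℝ) ≤ L := by
    have := Real.log_nonneg (by linarith : (1:ℝ) ≤ N)
    rw [hLdef]; linarith
  have hL0 : (0:ℝ) ≤ L := by linarith
  have hL3 : L ≤ 3 * Real.log N := by rw [hLdef]; linarith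
  set f : Fin w → Fin N → ℝ :=
    fun i m => omegaHat N ((wordOf k).getD i.val false) (m : ℕ) with hf
  set F : (Fin w → Fin N) → ℝ := fun n => ∏ i, f i (n i) with hF
  have hf0 : ∀ i m, 0 ≤ f i m := fun i m => omegaHat_nonneg N _ m
  have hF0 : ∀ n, 0 ≤ F n := fun n => Finset.prod_nonneg fun i _ => hf0 i (n i)
  have hsum : ∀ (b : Bool), ∑ m : Fin N, omegaHat N b (m:ℕ) ≤ L :=
    fun b => sum_omega_le N (by omega) b
  set S : Finset (Fin w → Fin N) := Finset.univ.filter (fun n => SCond N k n) with hSdef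
  set T : Finset (Fin w → Fin N) :=
    Finset.univ.filter (fun n => (∀ i, 0 < (n i : ℕ)) ∧ StrictMono n) with hTdef
  have hflat : zetaFlat N k = ∑ n ∈ S, F n := rfl
  have hnat : zetaNat N k = ∑ n ∈ T, F n := by
    rw [zetaNat, zetaNatW_eq N (wordOf k) w (wordOf_length k hk)]
  -- basic consequences of SCond
  have hweak : ∀ (n : Fin w → Fin N), SCond N k n → ∀ i : Fin w,
      prevVal n i ≤ (n i : ℕ) := by
    intro n hSc i
    have h := hSc i
    split_ifs at h with hb
    · exact h.le
    · exact h
  have hstrictP : ∀ (n : Fin w → Fin N), SCond N k n → ∀ i : Fin w,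
      (wordOf k).getD i.val false = true → prevVal n i < (n i : ℕ) := by
    intro n hSc i hb
    have h := hSc i
    rwa [if_pos hb] at h
  have hchain : ∀ (n : Fin w → Fin N), SCond N k n → ∀ (d : ℕ) (p q : Fin w),
      q.val = p.val + d → (n p : ℕ) ≤ (n q : ℕ) := by
    intro n hSc d
    induction d with
    | zero =>
      intro p q h
      have hpq : p = q := Fin.ext (by omega)
      rw [hpq]
    | succ m ih =>
      intro p q h
      have hq0 : ¬ q.val = 0 := by omega
      have hle := hweak n hSc q
      unfold prevVal at hle
      rw [dif_neg hq0] at hle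
      exact le_trans
        (ih p ⟨q.val - 1, Nat.lt_of_le_of_lt (Nat.sub_le _ _) q.isLt⟩
          (show q.val - 1 = p.val + m by omega)) hle
  have hchain' : ∀ (n : Fin w → Fin N), SCond N k n → ∀ (p q : Fin w),
      p.val ≤ q.val → (n p : ℕ) ≤ (n q : ℕ) :=
    fun n hSc p q hpq => hchain n hSc (q.val - p.val) p q (by omega)
  have h0true : 0 < w → (wordOf k).getD 0 false = true := by
    intro hw0
    apply wordOf_head'
    intro hnil
    rw [hnil] at hw
    simp at hw
    omega
  have hpos : ∀ (n : Fin w → Fin N), SCond N k n → ∀ i : Fin w, 0 < (n i : ℕ) := by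
    intro n hSc i
    have hw0 : 0 < w := i.pos
    have h1 := hstrictP n hSc ⟨0, hw0⟩ (h0true hw0)
    have h2 : prevVal n ⟨0, hw0⟩ = 0 := by unfold prevVal; rw [dif_pos rfl]
    rw [h2] at h1
    exact lt_of_lt_of_le h1 (hchain' n hSc ⟨0, hw0⟩ i (Nat.zero_le _))
  have hTS : T ⊆ S := by
    intro n hn
    simp only [hTdef, hSdef, Finset.mem_filter, Finset.mem_univ, true_and] at hn ⊢
    obtain ⟨hp, hm⟩ := hn
    intro i
    have hstep : prevVal n i < (n i : ℕ) := by
      unfold prevVal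
      split_ifs with h0
      · exact hp i
      · have hlt : (⟨i.val - 1, Nat.lt_of_le_of_lt (Nat.sub_le _ _) i.isLt⟩ : Fin w) < i := by
          show i.val - 1 < i.val
          omega
        exact hm hlt
    split_ifs with hb
    · exact hstep
    · exact hstep.le
  have hwit : ∀ n ∈ S \ T, ∃ j : Fin w, 0 < j.val ∧
      (wordOf k).getD j.val false = false ∧ prevVal n j = (n j : ℕ) := by
    intro n hn
    rw [Finset.mem_sdiff] at hn
    obtain ⟨hnS, hnT⟩ := hn
    have hSc : SCond N k n := by
      rw [hSdef, Finset.mem_filter] at hnS; exact hnS.2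
    by_contra hcon
    push_neg at hcon
    apply hnT
    rw [hTdef, Finset.mem_filter]
    refine ⟨Finset.mem_univ _, fun i => hpos n hSc i, ?_⟩
    intro a b hab
    have hab' : a.val < b.val := hab
    have hb0 : ¬ b.val = 0 := by omega
    have hlt : prevVal n b < (n b : ℕ) := by
      cases hgb : (wordOf k).getD b.val false with
      | true => exact hstrictP n hSc b hgb
      | false =>
        have hne := hcon b (by omega) hgb
        exact lt_of_le_of_ne (hweak n hSc b) hne
    unfold prevVal at hlt
    rw [dif_neg hb0] at hlt
    have hle : (n a : ℕ) ≤
        (n ⟨b.val - 1, Nat.lt_of_le_of_lt (Nat.sub_le _ _) b.isLt⟩ : ℕ) :=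
      hchain' n hSc a ⟨b.val - 1, Nat.lt_of_le_of_lt (Nat.sub_le _ _) b.isLt⟩
        (show a.val ≤ b.val - 1 by omega)
    show (n a : ℕ) < (n b : ℕ)
    exact lt_of_le_of_lt hle hlt
  -- the covering
  have hcover : ∑ n ∈ S \ T, F n ≤ ∑ j : Fin w, ∑ n ∈ S.filter
      (fun n => 0 < j.val ∧ (wordOf k).getD j.val false = false ∧
        prevVal n j = (n j : ℕ)), F n := by
    have step1 : ∀ n ∈ S \ T, F n ≤ ∑ j ∈ Finset.univ.filter (fun j : Fin w =>
        0 < j.val ∧ (wordOf k).getD j.val false = false ∧ prevVal n j = (n j : ℕ)), F n := by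
      intro n hn
      obtain ⟨j, hj⟩ := hwit n hn
      have hne : (Finset.univ.filter (fun j : Fin w =>
          0 < j.val ∧ (wordOf k).getD j.val false = false ∧
            prevVal n j = (n j : ℕ))).Nonempty :=
        ⟨j, Finset.mem_filter.mpr ⟨Finset.mem_univ _, hj⟩⟩
      rw [Finset.sum_const, nsmul_eq_mul]
      have hcard : (1:ℝ) ≤ (Finset.univ.filter (fun j : Fin w =>
          0 < j.val ∧ (wordOf k).getD j.val false = false ∧
            prevVal n j = (n j : ℕ))).card := by
        exact_mod_cast Finset.card_pos.mpr hne
      nlinarith [hF0 n]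
    calc ∑ n ∈ S \ T, F n
        ≤ ∑ n ∈ S \ T, ∑ j ∈ Finset.univ.filter (fun j : Fin w =>
            0 < j.val ∧ (wordOf k).getD j.val false = false ∧
              prevVal n j = (n j : ℕ)), F n := Finset.sum_le_sum step1
      _ = ∑ n ∈ S \ T, ∑ j : Fin w, if 0 < j.val ∧ (wordOf k).getD j.val false = false ∧
              prevVal n j = (n j : ℕ) then F n else 0 :=
          Finset.sum_congr rfl fun n _ => Finset.sum_filter _ _
      _ = ∑ j : Fin w, ∑ n ∈ S \ T, if 0 < j.val ∧ (wordOf k).getD j.val false = false ∧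
              prevVal n j = (n j : ℕ) then F n else 0 := Finset.sum_comm
      _ = ∑ j : Fin w, ∑ n ∈ (S \ T).filter (fun n => 0 < j.val ∧
              (wordOf k).getD j.val false = false ∧ prevVal n j = (n j : ℕ)), F n :=
          Finset.sum_congr rfl fun j _ => (Finset.sum_filter _ _).symm
      _ ≤ ∑ j : Fin w, ∑ n ∈ S.filter (fun n => 0 < j.val ∧
              (wordOf k).getD j.val false = false ∧ prevVal n j = (n j : ℕ)), F n := by
          apply Finset.sum_le_sum
          intro j _
          apply Finset.sum_le_sum_of_subset_of_nonneg
          · exact Finset.filter_subset_filter _ Finset.sdiff_subset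
          · intro n _ _; exact hF0 n
  -- pair sum bound
  have hpairsum : ∑ b : Fin N, omegaHat N false (b:ℕ) * omegaHat N true (b:ℕ) ≤ 2 * L / N := by
    calc ∑ b : Fin N, omegaHat N false (b:ℕ) * omegaHat N true (b:ℕ)
        ≤ ∑ b : Fin N, (1/(N:ℝ)) * (omegaHat N false (b:ℕ) + omegaHat N true (b:ℕ)) := by
          apply Finset.sum_le_sum
          intro b _
          rcases Nat.eq_zero_or_pos b.val with h0|h0
          · have hb : omegaHat N false (b:ℕ) = 0 := by
              simp [omegaHat, h0]
            rw [hb, zero_mul]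
            have := omegaHat_nonneg N true b
            positivity
          · have hb0 : (0:ℝ) < ((b:ℕ):ℝ) := by exact_mod_cast h0
            have hbN : ((b:ℕ):ℝ) < N := by exact_mod_cast b.isLt
            simp only [omegaHat, if_true, if_false, Bool.false_eq_true]
            have h2 : (0:ℝ) < (N:ℝ) - (b:ℕ) := by linarith
            have hkey : (1:ℝ)/((b:ℕ):ℝ) * (1/((N:ℝ)-(b:ℕ))) =
                (1/(N:ℝ)) * (1/((b:ℕ):ℝ) + 1/((N:ℝ)-(b:ℕ))) := by
              rw [div_mul_div_comm, one_mul,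
                div_add_div _ _ (ne_of_gt hb0) (ne_of_gt h2), div_mul_div_comm, one_mul,
                div_eq_div_iff (mul_pos hb0 h2).ne' (mul_pos hN0 (mul_pos hb0 h2)).ne']
              ring
            exact le_of_eq hkey
      _ = (1/(N:ℝ)) * ((∑ b : Fin N, omegaHat N false (b:ℕ)) +
            ∑ b : Fin N, omegaHat N true (b:ℕ)) := by
          rw [← Finset.mul_sum, ← Finset.sum_add_distrib]
      _ ≤ (1/(N:ℝ)) * (L + L) := by
          apply mul_le_mul_of_nonneg_left _ (by positivity)
          exact add_le_add (hsum false) (hsum true)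
      _ = 2 * L / N := by ring
  -- the per-j bound
  have hBj : ∀ j : Fin w, ∑ n ∈ S.filter (fun n => 0 < j.val ∧
      (wordOf k).getD j.val false = false ∧ prevVal n j = (n j : ℕ)), F n ≤
      L^(w+1) * (2 * L / N) := by
    intro j
    have hRHS0 : (0:ℝ) ≤ L^(w+1) * (2 * L / N) := by positivity
    by_cases hj : 0 < j.val ∧ (wordOf k).getD j.val false = false
    swap
    · have hempty : S.filter (fun n => 0 < j.val ∧
          (wordOf k).getD j.val false = false ∧ prevVal n j = (n j : ℕ)) = ∅ := by
        apply Finset.filter_false_of_mem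
        intro n _ hPn
        exact hj ⟨hPn.1, hPn.2.1⟩
      rw [hempty, Finset.sum_empty]
      exact hRHS0
    obtain ⟨hj1, hjf⟩ := hj
    have hfib : ∑ n ∈ S.filter (fun n => 0 < j.val ∧
        (wordOf k).getD j.val false = false ∧ prevVal n j = (n j : ℕ)), F n =
        ∑ b : Fin N, ∑ n ∈ (S.filter (fun n => 0 < j.val ∧
          (wordOf k).getD j.val false = false ∧ prevVal n j = (n j : ℕ))).filter
            (fun n => n j = b), F n :=
      (Finset.sum_fiberwise_of_maps_to (fun n _ => Finset.mem_univ (n j)) F).symm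
    have hperb : ∀ b : Fin N, ∑ n ∈ (S.filter (fun n => 0 < j.val ∧
        (wordOf k).getD j.val false = false ∧ prevVal n j = (n j : ℕ))).filter
          (fun n => n j = b), F n ≤
        L^(w+1) * (omegaHat N false (b:ℕ) * omegaHat N true (b:ℕ)) := by
      intro b
      rcases Nat.eq_zero_or_pos b.val with hb0 | hb1
      · have hE : (S.filter (fun n => 0 < j.val ∧
            (wordOf k).getD j.val false = false ∧ prevVal n j = (n j : ℕ))).filter
              (fun n => n j = b) = ∅ := by
          apply Finset.filter_false_of_mem
          intro n hn heq
          have hSc : SCond N k n := by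
            rw [hSdef] at hn
            have := (Finset.mem_filter.mp hn).1
            exact (Finset.mem_filter.mp this).2
          have := hpos n hSc j
          rw [heq] at this
          omega
        rw [hE, Finset.sum_empty]
        have hb : omegaHat N false (b:ℕ) = 0 := by simp [omegaHat, hb0]
        rw [hb, zero_mul, mul_zero]
      · -- main case : 0 < b
        have hbR0 : (0:ℝ) < ((b:ℕ):ℝ) := by exact_mod_cast hb1
        have hbRN : ((b:ℕ):ℝ) < (N:ℝ) := by exact_mod_cast b.isLt
        have hNb0 : (0:ℝ) < (N:ℝ) - (b:ℕ) := by linarith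
        have hw1 : omegaHat N true (b:ℕ) = 1 / ((N:ℝ) - (b:ℕ)) := by simp [omegaHat]
        have hw0' : omegaHat N false (b:ℕ) = 1 / ((b:ℕ):ℝ) := by
          simp [omegaHat]
        set t : Fin w → Finset (Fin N) := fun i =>
          if i.val = j.val ∨ i.val = j.val - 1 then {b}
          else if i.val = 0 then Finset.univ.filter (fun m : Fin N => 0 < m.val ∧ m.val ≤ b.val)
          else Finset.univ.filter (fun m : Fin N => 0 < m.val) with ht
        have hsub : (S.filter (fun n => 0 < j.val ∧
            (wordOf k).getD j.val false = false ∧ prevVal n j = (n j : ℕ))).filter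
              (fun n => n j = b) ⊆ Fintype.piFinset t := by
          intro n hn
          rw [Finset.mem_filter] at hn
          obtain ⟨hn1, hnjb⟩ := hn
          rw [Finset.mem_filter] at hn1
          obtain ⟨hnS, hP⟩ := hn1
          have hSc : SCond N k n := by
            rw [hSdef, Finset.mem_filter] at hnS; exact hnS.2
          obtain ⟨_, _, hprev⟩ := hP
          rw [Fintype.mem_piFinset]
          intro i
          by_cases h1 : i.val = j.val ∨ i.val = j.val - 1
          · rw [ht]
            simp only [if_pos h1, Finset.mem_singleton]
            rcases h1 with h1 | h1
            · have hij : i = j := Fin.ext h1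
              rw [hij, hnjb]
            · have hij : i = ⟨j.val - 1, Nat.lt_of_le_of_lt (Nat.sub_le _ _) j.isLt⟩ :=
                Fin.ext h1
              unfold prevVal at hprev
              rw [dif_neg (by omega : ¬ j.val = 0)] at hprev
              apply Fin.ext
              rw [hij]
              rw [hprev, hnjb]
          · push_neg at h1
            obtain ⟨hij, hij'⟩ := h1
            by_cases h0 : i.val = 0
            · rw [ht]
              simp only [if_neg (not_or.mpr ⟨hij, hij'⟩), if_pos h0, Finset.mem_filter,
                Finset.mem_univ, true_and]
              refine ⟨hpos n hSc i, ?_⟩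
              have hle := hchain' n hSc i j (by omega)
              rw [hnjb] at hle
              exact hle
            · rw [ht]
              simp only [if_neg (not_or.mpr ⟨hij, hij'⟩), if_neg h0, Finset.mem_filter,
                Finset.mem_univ, true_and]
              exact hpos n hSc i
        have hstep : ∑ n ∈ (S.filter (fun n => 0 < j.val ∧
            (wordOf k).getD j.val false = false ∧ prevVal n j = (n j : ℕ))).filter
              (fun n => n j = b), F n ≤ ∑ n ∈ Fintype.piFinset t, F n :=
          Finset.sum_le_sum_of_subset_of_nonneg hsub (fun n _ _ => hF0 n)
        have hprodeq : ∑ n ∈ Fintype.piFinset t, F n = ∏ i, ∑ m ∈ t i, f i m :=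
          (Finset.prod_univ_sum t f).symm
        set G : Fin w → ℝ := fun i => ∑ m ∈ t i, f i m with hG
        have hG0 : ∀ i, 0 ≤ G i := fun i => Finset.sum_nonneg fun m _ => hf0 i m
        have hGL : ∀ i, G i ≤ L := by
          intro i
          have h2 : G i ≤ ∑ m : Fin N, f i m :=
            Finset.sum_le_sum_of_subset_of_nonneg (Finset.subset_univ _)
              (fun m _ _ => hf0 i m)
          exact h2.trans (hsum _)
        have htj : t j = {b} := by
          rw [ht]; simp
        have hGj : G j = omegaHat N false (b:ℕ) := by
          rw [hG]
          simp only [htj, Finset.sum_singleton, hf, hjf]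
        -- the goal in product form
        have hmain : ∏ i, G i ≤ L^(w+1) * (omegaHat N false (b:ℕ) * omegaHat N true (b:ℕ)) := by
          rcases Nat.lt_or_ge j.val 2 with hj2 | hj2
          · -- j.val = 1
            have hjv : j.val = 1 := by omega
            have hw0 : 0 < w := j.pos
            set i0 : Fin w := ⟨0, hw0⟩ with hi0
            have hti0 : t i0 = {b} := by
              rw [ht]
              simp [hi0, hjv]
            have hGi0 : G i0 = omegaHat N true (b:ℕ) := by
              rw [hG]
              simp only [hti0, Finset.sum_singleton, hf]
              congr 1
              show (wordOf k).getD (0:ℕ) false = true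
              exact h0true hw0
            have hji0 : j ≠ i0 := by
              intro h
              have : j.val = 0 := by rw [h]
              omega
            have hsplit : ∏ i, G i =
                G i0 * (G j * ∏ i ∈ (Finset.univ.erase i0).erase j, G i) := by
              rw [← Finset.mul_prod_erase Finset.univ G (Finset.mem_univ i0)]
              congr 1
              rw [← Finset.mul_prod_erase _ G
                (Finset.mem_erase.mpr ⟨hji0, Finset.mem_univ j⟩)]
            have hrest : ∏ i ∈ (Finset.univ.erase i0).erase j, G i ≤ L ^ (w+1) := by
              calc ∏ i ∈ (Finset.univ.erase i0).erase j, G i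
                  ≤ ∏ _i ∈ (Finset.univ.erase i0).erase j, L :=
                    Finset.prod_le_prod (fun i _ => hG0 i) (fun i _ => hGL i)
                _ = L ^ ((Finset.univ.erase i0).erase j).card := Finset.prod_const L
                _ ≤ L ^ (w+1) := by
                    apply pow_le_pow_right₀ hL1
                    have := Finset.card_le_univ ((Finset.univ.erase i0).erase j)
                    simp only [Finset.card_univ, Fintype.card_fun, Fintype.card_fin] at this ⊢
                    omega
            rw [hsplit, hGi0, hGj]
            calc omegaHat N true (b:ℕ) *
                  (omegaHat N false (b:ℕ) * ∏ i ∈ (Finset.univ.erase i0).erase j, G i)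
                ≤ omegaHat N true (b:ℕ) * (omegaHat N false (b:ℕ) * L^(w+1)) := by
                  apply mul_le_mul_of_nonneg_left _ (omegaHat_nonneg N true b)
                  apply mul_le_mul_of_nonneg_left hrest (omegaHat_nonneg N false b)
              _ = L^(w+1) * (omegaHat N false (b:ℕ) * omegaHat N true (b:ℕ)) := by ring
          · -- j.val ≥ 2
            have hw0 : 0 < w := j.pos
            set j' : Fin w := ⟨j.val - 1, Nat.lt_of_le_of_lt (Nat.sub_le _ _) j.isLt⟩ with hj'
            set i0 : Fin w := ⟨0, hw0⟩ with hi0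
            have hne1 : j ≠ i0 := Fin.ne_of_val_ne (show j.val ≠ 0 by omega)
            have hne2 : j' ≠ i0 := Fin.ne_of_val_ne (show j.val - 1 ≠ 0 by omega)
            have hne3 : j ≠ j' := Fin.ne_of_val_ne (show j.val ≠ j.val - 1 by omega)
            have htj' : t j' = {b} := by
              rw [ht]
              have : j'.val = j.val - 1 := rfl
              simp [this]
            have hGj' : G j' = omegaHat N ((wordOf k).getD (j.val - 1) false) (b:ℕ) := by
              rw [hG]
              simp only [htj', Finset.sum_singleton, hf]
              rfl
            have hti0 : t i0 = Finset.univ.filter (fun m : Fin N => 0 < m.val ∧ m.val ≤ b.val) := by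
              have h1 : ¬ (i0.val = j.val ∨ i0.val = j.val - 1) := by
                have h00 : i0.val = 0 := rfl
                omega
              simp only [ht]
              rw [if_neg h1]
              simp [show i0.val = 0 from rfl]
            have hGi0 : G i0 = ∑ m ∈ Finset.univ.filter
                (fun m : Fin N => 0 < m.val ∧ m.val ≤ b.val), omegaHat N true (m:ℕ) := by
              have h0' : (wordOf k).getD (i0.val) false = true := h0true hw0
              rw [hG]
              simp only [hti0, hf, h0']
            -- the pair bound
            have hpair : G i0 * G j' ≤ L * omegaHat N true (b:ℕ) := by
              cases hgb : (wordOf k).getD (j.val - 1) false with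
              | true =>
                rw [hGj', hgb]
                exact mul_le_mul_of_nonneg_right (hGL i0) (omegaHat_nonneg N true b)
              | false =>
                rw [hGj', hgb, hw0', hw1]
                have hcard : (Finset.univ.filter
                    (fun m : Fin N => 0 < m.val ∧ m.val ≤ b.val)).card ≤ b.val := by
                  have := Finset.card_le_card_of_injOn (f := Fin.val)
                    (s := Finset.univ.filter (fun m : Fin N => 0 < m.val ∧ m.val ≤ b.val))
                    (t := Finset.Icc 1 b.val)
                    (by intro m hm
                        simp only [Finset.coe_filter, Finset.mem_filter, Finset.mem_univ, true_and, Set.mem_setOf_eq, Finset.mem_coe] at hm ⊢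
                        rw [Finset.mem_Icc]
                        omega)
                    (fun x _ y _ h => Fin.val_injective h)
                  rwa [Nat.card_Icc, Nat.add_sub_cancel] at this
                have hterm : ∀ m ∈ Finset.univ.filter
                    (fun m : Fin N => 0 < m.val ∧ m.val ≤ b.val),
                    omegaHat N true (m:ℕ) ≤ 1 / ((N:ℝ) - (b:ℕ)) := by
                  intro m hm
                  simp only [Finset.mem_filter, Finset.mem_univ, true_and] at hm
                  have hmb : ((m:ℕ):ℝ) ≤ ((b:ℕ):ℝ) := by exact_mod_cast hm.2
                  simp only [omegaHat, if_true]
                  apply one_div_le_one_div_of_le hNb0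
                  linarith
                have hGi0le : G i0 ≤ ((b:ℕ):ℝ) * (1 / ((N:ℝ) - (b:ℕ))) := by
                  rw [hGi0]
                  refine le_trans (Finset.sum_le_card_nsmul _ _ _ hterm) ?_
                  rw [nsmul_eq_mul]
                  apply mul_le_mul_of_nonneg_right _ (by positivity)
                  exact_mod_cast hcard
                calc G i0 * (1 / ((b:ℕ):ℝ))
                    ≤ (((b:ℕ):ℝ) * (1 / ((N:ℝ) - (b:ℕ)))) * (1 / ((b:ℕ):ℝ)) :=
                      mul_le_mul_of_nonneg_right hGi0le (by positivity)
                  _ = 1 / ((N:ℝ) - (b:ℕ)) := by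
                      field_simp
                  _ ≤ L * (1 / ((N:ℝ) - (b:ℕ))) := by
                      nlinarith [one_div_nonneg.mpr hNb0.le]
            -- split product
            have hsplit : ∏ i, G i = G i0 * (G j' * (G j *
                ∏ i ∈ ((Finset.univ.erase i0).erase j').erase j, G i)) := by
              rw [← Finset.mul_prod_erase Finset.univ G (Finset.mem_univ i0)]
              congr 1
              rw [← Finset.mul_prod_erase _ G
                (Finset.mem_erase.mpr ⟨hne2, Finset.mem_univ j'⟩)]
              congr 1
              rw [← Finset.mul_prod_erase _ G (Finset.mem_erase.mpr
                ⟨hne3, Finset.mem_erase.mpr ⟨hne1, Finset.mem_univ j⟩⟩)]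
            have hrest : ∏ i ∈ ((Finset.univ.erase i0).erase j').erase j, G i ≤ L ^ w := by
              calc ∏ i ∈ ((Finset.univ.erase i0).erase j').erase j, G i
                  ≤ ∏ _i ∈ ((Finset.univ.erase i0).erase j').erase j, L :=
                    Finset.prod_le_prod (fun i _ => hG0 i) (fun i _ => hGL i)
                _ = L ^ (((Finset.univ.erase i0).erase j').erase j).card := Finset.prod_const L
                _ ≤ L ^ w := by
                    apply pow_le_pow_right₀ hL1
                    have := Finset.card_le_univ (((Finset.univ.erase i0).erase j').erase j)
                    simp only [Finset.card_univ, Fintype.card_fin] at this ⊢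
                    omega
            have hprodnn : 0 ≤ ∏ i ∈ ((Finset.univ.erase i0).erase j').erase j, G i :=
              Finset.prod_nonneg fun i _ => hG0 i
            calc ∏ i, G i
                = (G i0 * G j') * (G j *
                    ∏ i ∈ ((Finset.univ.erase i0).erase j').erase j, G i) := by
                  rw [hsplit]; ring
              _ ≤ (L * omegaHat N true (b:ℕ)) * (omegaHat N false (b:ℕ) * L ^ w) := by
                  apply mul_le_mul hpair
                  · rw [hGj]
                    exact mul_le_mul_of_nonneg_left hrest (omegaHat_nonneg N false b)
                  · exact mul_nonneg (by rw [hGj]; exact omegaHat_nonneg N false b) hprodnn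
                  · exact mul_nonneg (by linarith) (omegaHat_nonneg N true b)
              _ = L^(w+1) * (omegaHat N false (b:ℕ) * omegaHat N true (b:ℕ)) := by ring
        calc ∑ n ∈ (S.filter (fun n => 0 < j.val ∧
            (wordOf k).getD j.val false = false ∧ prevVal n j = (n j : ℕ))).filter
              (fun n => n j = b), F n
            ≤ ∑ n ∈ Fintype.piFinset t, F n := hstep
          _ = ∏ i, G i := hprodeq
          _ ≤ L^(w+1) * (omegaHat N false (b:ℕ) * omegaHat N true (b:ℕ)) := hmain
    rw [hfib]
    calc ∑ b : Fin N, ∑ n ∈ (S.filter (fun n => 0 < j.val ∧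
          (wordOf k).getD j.val false = false ∧ prevVal n j = (n j : ℕ))).filter
            (fun n => n j = b), F n
        ≤ ∑ b : Fin N, L^(w+1) * (omegaHat N false (b:ℕ) * omegaHat N true (b:ℕ)) :=
          Finset.sum_le_sum fun b _ => hperb b
      _ = L^(w+1) * ∑ b : Fin N, omegaHat N false (b:ℕ) * omegaHat N true (b:ℕ) := by
          rw [Finset.mul_sum]
      _ ≤ L^(w+1) * (2 * L / N) := by
          apply mul_le_mul_of_nonneg_left hpairsum (by positivity)
  -- put everything together
  have htotal : ∑ n ∈ S \ T, F n ≤ (w:ℝ) * (L^(w+1) * (2 * L / N)) := by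
    refine le_trans hcover ?_
    refine le_trans (Finset.sum_le_card_nsmul _ _ _ (fun j _ => hBj j)) ?_
    rw [nsmul_eq_mul, Finset.card_univ, Fintype.card_fin]
  have habs : |zetaFlat N k - zetaNat N k| = ∑ n ∈ S \ T, F n := by
    rw [hflat, hnat, ← Finset.sum_sdiff hTS, add_sub_cancel_right]
    exact abs_of_nonneg (Finset.sum_nonneg fun n _ => hF0 n)
  rw [habs]
  have hLpow : L^(w+2) ≤ 3^(w+2) * Real.log N ^ (w+2) := by
    rw [← mul_pow]
    exact pow_le_pow_left₀ hL0 hL3 _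
  calc ∑ n ∈ S \ T, F n
      ≤ (w:ℝ) * (L^(w+1) * (2 * L / N)) := htotal
    _ = 2 * (w:ℝ) * L^(w+2) / N := by ring
    _ ≤ 2 * (w:ℝ) * (3^(w+2) * Real.log N ^ (w+2)) / N := by
        have h2w : (0:ℝ) ≤ 2 * (w:ℝ) := by positivity
        exact div_le_div_of_nonneg_right (mul_le_mul_of_nonneg_left hLpow h2w) hN0.le
    _ = 2 * (w:ℝ) * 3^(w+2) * Real.log N ^ (w+2) / N := by ring
end

section
/- (Asymptotic double shuffle relation) For any w_1 ∈ 𝔥^1 and w_0 ∈ 𝔥^0, Z_N(w_1 * w_0 − w_1 ⧢ w_0) = O(N^{−1} log^a N) as N → ∞, for some positive integer a depending only on w_1, w_0, where Z_N is evaluation of multiple harmonic sums with upper bound N. -/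
open Finset

open scoped Classical

/-- Auxiliary front-recursion for the harmonic (stuffle) product on reversed words. -/
noncomputable def stR : List ℕ → List ℕ → (List ℕ →₀ ℚ)
  | [], w => Finsupp.single w 1
  | a :: w, [] => Finsupp.single (a :: w) 1
  | a :: w, b :: w' =>
      (stR w (b :: w')).mapDomain (List.cons a)
    + (stR (a :: w) w').mapDomain (List.cons b)
    + (stR w w').mapDomain (List.cons (a + b))
termination_by w w' => w.length + w'.length
decreasing_by all_goals (simp; try omega)

/-- The harmonic product `e_𝐤 * e_𝐥` of two words of `𝔥¹`, encoded by their indices: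
it satisfies `w e_{k₁} * w' e_{k₂} = (w * w' e_{k₂}) e_{k₁} + (w e_{k₁} * w') e_{k₂}
+ (w * w') e_{k₁+k₂}` and `w * 1 = 1 * w = w`. -/
noncomputable def harmW (w w' : List ℕ) : List ℕ →₀ ℚ :=
  (stR w.reverse w'.reverse).mapDomain List.reverse

/-- ℚ-bilinear extension of the harmonic product to `𝔥¹`. -/
noncomputable def harmLin (f g : List ℕ →₀ ℚ) : List ℕ →₀ ℚ :=
  f.sum fun w q => g.sum fun w' q' => (q * q') • harmW w w'

/-- Auxiliary front-recursion for the shuffle product on reversed words over `{e₀,e₁}`. -/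
noncomputable def shR : List Bool → List Bool → (List Bool →₀ ℚ)
  | [], w => Finsupp.single w 1
  | a :: w, [] => Finsupp.single (a :: w) 1
  | a :: w, b :: w' =>
      (shR w (b :: w')).mapDomain (List.cons a)
    + (shR (a :: w) w').mapDomain (List.cons b)
termination_by w w' => w.length + w'.length
decreasing_by all_goals (simp; try omega)

/-- The shuffle product of two words over `{e₀,e₁}` (`true` = `e₁`): it satisfies
`w u₁ ⧢ w' u₂ = (w ⧢ w' u₂) u₁ + (w u₁ ⧢ w') u₂` and `w ⧢ 1 = 1 ⧢ w = w`. -/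
noncomputable def shW (w w' : List Bool) : List Bool →₀ ℚ :=
  (shR w.reverse w'.reverse).mapDomain List.reverse

/-- Decode a word of `𝔥¹` back into its index. -/
def decode (w : List Bool) : List ℕ :=
  (w.foldr (fun b p => if b then (0, (p.1 + 1) :: p.2) else (p.1 + 1, p.2))
    ((0, []) : ℕ × List ℕ)).2

/-- The shuffle product on `𝔥¹`, expressed in the index encoding, extended ℚ-bilinearly. -/
noncomputable def shIdxLin (f g : List ℕ →₀ ℚ) : List ℕ →₀ ℚ :=
  f.sum fun w q => g.sum fun w' q' =>
    (q * q') • ((shW (wordOf w) (wordOf w')).mapDomain decode)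

/-- `Z_N : 𝔥¹ → ℝ`, the ℚ-linear map with `Z_N(e_𝐤) = ζ_{<N}(𝐤)`, `Z_N(1) = 1`. -/
noncomputable def ZN (N : ℕ) (f : List ℕ →₀ ℚ) : ℝ :=
  f.sum fun k q => (q : ℝ) * MHS N k

/-- `f ∈ 𝔥¹`: every word in the support is an index (all entries positive). -/
def MemH1 (f : List ℕ →₀ ℚ) : Prop := ∀ w ∈ f.support, ∀ x ∈ w, 0 < x

/-- `f ∈ 𝔥⁰`: every word in the support is an admissible index. -/
def MemH0 (f : List ℕ →₀ ℚ) : Prop :=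
  ∀ w ∈ f.support, (∀ x ∈ w, 0 < x) ∧ ∀ x, w.getLast? = some x → 2 ≤ x


namespace Stmt10

/-- One-step coefficient operator: `true` is `∫ ·/(1-z)`, `false` is `∫ ·/z`, at
the level of power-series coefficients. -/
def ddB (b : Bool) (F : ℕ → ℚ) (n : ℕ) : ℚ :=
  if n = 0 then 0 else if b then (∑ m ∈ Finset.range n, F m) / n else F n / n

/-- Coefficients of the multiple polylogarithm attached to a *reversed* word. -/
def dW : List Bool → ℕ → ℚ
  | [], n => if n = 0 then 1 else 0
  | x :: w, n => ddB x (dW w) n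

/-- Coefficients of the multiple polylogarithm attached to a *reversed* index. -/
def cR : List ℕ → ℕ → ℚ
  | [], n => if n = 0 then 1 else 0
  | a :: k, n => if n = 0 then 0 else (∑ m ∈ Finset.range n, cR k m) / (n : ℚ) ^ a

/-- Recursive form of the truncated multiple zeta value, on the *reversed* index. -/
def ZR : List ℕ → ℕ → ℚ
  | [], _ => 1
  | a :: k, N => ∑ n ∈ Finset.Ico 1 N, ZR k n / (n : ℚ) ^ a

lemma cR_zero_eq (a : ℕ) (k : List ℕ) : cR (a :: k) 0 = 0 := by simp [cR]

lemma ZR_eq_sum_cR (k : List ℕ) : ∀ N, 1 ≤ N → ZR k N = ∑ n ∈ Finset.range N, cR k n := by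
  induction k with
  | nil =>
    intro N hN
    have : ∀ n : ℕ, cR [] n = if n = 0 then 1 else 0 := fun n => rfl
    simp only [this, ZR]
    rw [Finset.sum_ite_eq' (Finset.range N) 0 (fun _ => (1:ℚ))]
    rw [if_pos (Finset.mem_range.2 (by omega))]
  | cons a k ih =>
    intro N hN
    have hz : ZR (a :: k) N = ∑ n ∈ Finset.Ico 1 N, ZR k n / (n : ℚ) ^ a := rfl
    rw [hz, Finset.range_eq_Ico, Finset.sum_eq_sum_Ico_succ_bot (by omega : 0 < N),
      cR_zero_eq, zero_add]
    apply Finset.sum_congr rfl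
    intro n hn
    simp only [Finset.mem_Ico] at hn
    rw [ih n hn.1]
    have : cR (a :: k) n
        = if n = 0 then 0 else (∑ m ∈ Finset.range n, cR k m) / (n : ℚ) ^ a := rfl
    rw [this, if_neg (by omega)]

section MHSsec

/-- `MHS` with the index abstracted into a function, to ease re-indexing. -/
noncomputable def MHSF (N l : ℕ) (e : Fin l → ℕ) : ℝ :=
  ∑ n ∈ Finset.univ.filter
      (fun n : Fin l → Fin N => (∀ i, 0 < (n i : ℕ)) ∧ StrictMono n),
    ∏ i, (1 : ℝ) / (n i : ℕ) ^ (e i)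

lemma MHS_eq_MHSF (N : ℕ) (k : List ℕ) : MHS N k = MHSF N k.length k.get := rfl

lemma MHSF_congr {N l l' : ℕ} (h : l = l') (e : Fin l → ℕ) (e' : Fin l' → ℕ)
    (he : ∀ i : Fin l, e i = e' (Fin.cast h i)) : MHSF N l e = MHSF N l' e' := by
  subst h
  have : e = e' := funext fun i => by simpa using he i
  rw [this]

lemma MHSF_castLE {N m l : ℕ} (hm1 : 1 ≤ m) (h : m ≤ N) (e : Fin l → ℕ) :
    MHSF m l e = ∑ n ∈ Finset.univ.filter
      (fun n : Fin l → Fin N => (∀ i, 0 < (n i : ℕ)) ∧ StrictMono n ∧ ∀ i, (n i : ℕ) < m),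
      ∏ i, (1 : ℝ) / (n i : ℕ) ^ (e i) := by
  apply Finset.sum_nbij' (i := fun (n : Fin l → Fin m) (x : Fin l) => Fin.castLE h (n x))
    (j := fun (n : Fin l → Fin N) (x : Fin l) =>
      if hx : (n x : ℕ) < m then (⟨(n x : ℕ), hx⟩ : Fin m) else ⟨0, hm1⟩)
  · intro n hn
    simp only [Finset.mem_filter, Finset.mem_univ, true_and] at hn ⊢
    refine ⟨fun i => hn.1 i, ?_, fun i => (n i).isLt⟩
    intro x y hxy
    have h2 := hn.2 hxy
    simp only [Fin.lt_def] at h2 ⊢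
    exact h2
  · intro n hn
    simp only [Finset.mem_filter, Finset.mem_univ, true_and] at hn ⊢
    have hlt : ∀ x, (n x : ℕ) < m := hn.2.2
    refine ⟨fun i => by simpa [dif_pos (hlt i)] using hn.1 i, ?_⟩
    intro x y hxy
    have h2 := hn.2.1 hxy
    simp only [dif_pos (hlt x), dif_pos (hlt y)]
    simp only [Fin.lt_def] at h2 ⊢
    exact h2
  · intro n hn
    funext x
    have : ((Fin.castLE h (n x) : Fin N) : ℕ) = (n x : ℕ) := rfl
    simp [this, dif_pos (n x).isLt]
  · intro n hn
    simp only [Finset.mem_filter, Finset.mem_univ, true_and] at hn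
    funext x
    simp [dif_pos (hn.2.2 x)]
  · intro n hn
    apply Finset.prod_congr rfl
    intro i _
    rfl

lemma strictMono_snoc {l N : ℕ} (n' : Fin l → Fin N) (c : Fin N)
    (h1 : StrictMono n') (h2 : ∀ i, n' i < c) : StrictMono (Fin.snoc n' c) := by
  intro x y hxy
  induction y using Fin.lastCases with
  | last =>
    induction x using Fin.lastCases with
    | last => exact absurd hxy (lt_irrefl _)
    | cast i => simpa [Fin.snoc_castSucc, Fin.snoc_last] using h2 i
  | cast j =>
    induction x using Fin.lastCases with
    | last => exact absurd (hxy.trans (Fin.castSucc_lt_last j)) (lt_irrefl _)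
    | cast i =>
      simp only [Fin.snoc_castSucc]
      exact h1 (by simpa [Fin.castSucc_lt_castSucc_iff] using hxy)

lemma MHSF_peel {N l : ℕ} (hN : 1 ≤ N) (e : Fin (l + 1) → ℕ) :
    MHSF N (l + 1) e = ∑ m ∈ Finset.Ico 1 N,
      (1 / (m : ℝ) ^ (e (Fin.last l))) * MHSF m l (fun i => e i.castSucc) := by
  have hrw : ∀ m ∈ Finset.Ico 1 N,
      (1 / (m : ℝ) ^ (e (Fin.last l))) * MHSF m l (fun i => e i.castSucc)
      = ∑ n ∈ Finset.univ.filter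
          (fun n : Fin l → Fin N =>
            (∀ i, 0 < (n i : ℕ)) ∧ StrictMono n ∧ ∀ i, (n i : ℕ) < m),
          (1 / (m : ℝ) ^ (e (Fin.last l))) * ∏ i, (1 : ℝ) / (n i : ℕ) ^ (e i.castSucc) := by
    intro m hm
    simp only [Finset.mem_Ico] at hm
    rw [MHSF_castLE hm.1 (le_of_lt hm.2), Finset.mul_sum]
  rw [Finset.sum_congr rfl hrw]
  have hfilter : ∀ m ∈ Finset.Ico 1 N,
      (∑ n ∈ Finset.univ.filter
          (fun n : Fin l → Fin N =>
            (∀ i, 0 < (n i : ℕ)) ∧ StrictMono n ∧ ∀ i, (n i : ℕ) < m),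
          (1 / (m : ℝ) ^ (e (Fin.last l))) * ∏ i, (1 : ℝ) / (n i : ℕ) ^ (e i.castSucc))
      = ∑ n ∈ (Finset.univ : Finset (Fin l → Fin N)),
          if (∀ i, 0 < (n i : ℕ)) ∧ StrictMono n ∧ ∀ i, (n i : ℕ) < m then
            (1 / (m : ℝ) ^ (e (Fin.last l))) * ∏ i, (1 : ℝ) / (n i : ℕ) ^ (e i.castSucc)
          else 0 := by
    intro m _
    rw [Finset.sum_filter]
  rw [Finset.sum_congr rfl hfilter, ← Finset.sum_product']
  rw [← Finset.sum_filter (s := (Finset.Ico 1 N) ×ˢ (Finset.univ : Finset (Fin l → Fin N)))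
    (p := fun p : ℕ × (Fin l → Fin N) =>
      (∀ i, 0 < (p.2 i : ℕ)) ∧ StrictMono p.2 ∧ ∀ i, (p.2 i : ℕ) < p.1)
    (f := fun p : ℕ × (Fin l → Fin N) =>
      (1 / (p.1 : ℝ) ^ (e (Fin.last l))) * ∏ i, (1 : ℝ) / (p.2 i : ℕ) ^ (e i.castSucc))]
  symm
  apply Finset.sum_nbij'
    (i := fun p : ℕ × (Fin l → Fin N) =>
      Fin.snoc p.2 (if h : p.1 < N then (⟨p.1, h⟩ : Fin N) else ⟨0, hN⟩))
    (j := fun n : Fin (l + 1) → Fin N =>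
      ((n (Fin.last l) : ℕ), fun x : Fin l => n x.castSucc))
  · -- forward membership
    rintro ⟨m, n'⟩ hp
    simp only [Finset.mem_filter, Finset.mem_product, Finset.mem_Ico, Finset.mem_univ,
      true_and, and_true] at hp
    obtain ⟨⟨hm1, hmN⟩, hpos, hsm, hlt⟩ := hp
    simp only [Finset.mem_filter, Finset.mem_univ, true_and]
    rw [dif_pos hmN]
    constructor
    · intro i
      induction i using Fin.lastCases with
      | last => simpa [Fin.snoc_last] using Nat.lt_of_lt_of_le Nat.zero_lt_one hm1
      | cast x => simpa [Fin.snoc_castSucc] using hpos x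
    · exact strictMono_snoc n' _ hsm (fun i => by
        simp only [Fin.lt_def]; exact hlt i)
  · -- backward membership
    intro n hn
    simp only [Finset.mem_filter, Finset.mem_univ, true_and] at hn
    simp only [Finset.mem_filter, Finset.mem_product, Finset.mem_Ico, Finset.mem_univ,
      true_and, and_true]
    refine ⟨⟨hn.1 _, (n (Fin.last l)).isLt⟩, fun i => hn.1 _, ?_, ?_⟩
    · exact hn.2.comp Fin.strictMono_castSucc
    · intro i
      have h2 := hn.2 (Fin.castSucc_lt_last i)
      simp only [Fin.lt_def] at h2
      exact h2
  · -- left inverse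
    rintro ⟨m, n'⟩ hp
    simp only [Finset.mem_filter, Finset.mem_product, Finset.mem_Ico, Finset.mem_univ,
      true_and, and_true] at hp
    rw [dif_pos hp.1.2]
    have h1 : ((Fin.snoc n' (⟨m, hp.1.2⟩ : Fin N) : Fin (l + 1) → Fin N)
        (Fin.last l) : ℕ) = m := by rw [Fin.snoc_last]
    have h2 : (fun x : Fin l => (Fin.snoc n' (⟨m, hp.1.2⟩ : Fin N) : Fin (l + 1) → Fin N)
        x.castSucc) = n' := by
      funext x
      exact Fin.snoc_castSucc _ _ _
    exact Prod.ext h1 h2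
  · -- right inverse
    intro n hn
    funext x
    induction x using Fin.lastCases with
    | last => simp [Fin.snoc_last, dif_pos (n (Fin.last l)).isLt]
    | cast x => simp [Fin.snoc_castSucc]
  · -- summand equality
    rintro ⟨m, n'⟩ hp
    simp only [Finset.mem_filter, Finset.mem_product, Finset.mem_Ico, Finset.mem_univ,
      true_and, and_true] at hp
    rw [dif_pos hp.1.2]
    conv_rhs => rw [Fin.prod_univ_castSucc, mul_comm]
    have hlast : ((Fin.snoc n' (⟨m, hp.1.2⟩ : Fin N) : Fin (l + 1) → Fin N)
        (Fin.last l) : Fin N) = ⟨m, hp.1.2⟩ := Fin.snoc_last _ _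
    have hcs : ∀ x : Fin l, ((Fin.snoc n' (⟨m, hp.1.2⟩ : Fin N) : Fin (l + 1) → Fin N)
        x.castSucc : Fin N) = n' x := fun x => Fin.snoc_castSucc _ _ _
    rw [hlast]
    congr 1
    apply Finset.prod_congr rfl
    intro x _
    rw [hcs x]


lemma MHSF_zero (N : ℕ) (e : Fin 0 → ℕ) : MHSF N 0 e = 1 := by
  have h1 : (Finset.univ.filter
      (fun n : Fin 0 → Fin N => (∀ i, 0 < (n i : ℕ)) ∧ StrictMono n)) = Finset.univ := by
    apply Finset.filter_true_of_mem
    intro n _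
    exact ⟨fun i => i.elim0, fun a b h => a.elim0⟩
  rw [MHSF, h1]
  simp [Finset.sum_const, Fintype.card_fun]

lemma MHS_nil (N : ℕ) : MHS N [] = 1 := by
  rw [MHS_eq_MHSF,
    MHSF_congr (show ([] : List ℕ).length = 0 from rfl) _ (fun _ => 0) (fun i => i.elim0),
    MHSF_zero]

lemma MHS_eq_ZR (k : List ℕ) : ∀ N, 1 ≤ N → MHS N k = ((ZR k.reverse N : ℚ) : ℝ) := by
  induction k using List.reverseRecOn with
  | nil =>
    intro N hN
    rw [MHS_nil]
    norm_num [ZR]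
  | append_singleton k a ih =>
    intro N hN
    have hlen : (k ++ [a]).length = k.length + 1 := by simp
    rw [MHS_eq_MHSF,
      MHSF_congr hlen ((k ++ [a]).get)
        (fun i => (k ++ [a]).get (Fin.cast hlen.symm i)) (fun i => rfl),
      MHSF_peel hN]
    have e'last : (k ++ [a]).get (Fin.cast hlen.symm (Fin.last k.length)) = a := by
      rw [List.get_eq_getElem]
      exact List.getElem_concat_length rfl _
    have e'cs : (fun i : Fin k.length =>
        (k ++ [a]).get (Fin.cast hlen.symm i.castSucc)) = k.get := by
      funext i
      rw [List.get_eq_getElem, List.get_eq_getElem]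
      exact List.getElem_append_left i.isLt
    simp only [e'last, e'cs]
    have hterm : ∀ m ∈ Finset.Ico 1 N,
        1 / (m : ℝ) ^ a * MHSF m k.length k.get
        = ((ZR k.reverse m / (m : ℚ) ^ a : ℚ) : ℝ) := by
      intro m hm
      simp only [Finset.mem_Ico] at hm
      rw [← MHS_eq_MHSF, ih m hm.1]
      push_cast
      ring
    rw [Finset.sum_congr rfl hterm]
    have hZ : ZR (k ++ [a]).reverse N = ∑ m ∈ Finset.Ico 1 N, ZR k.reverse m / (m : ℚ) ^ a := by
      rw [List.reverse_append]
      rfl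
    rw [hZ, Rat.cast_sum]

end MHSsec


lemma fsum_eq {α M N : Type*} [Zero M] [AddCommMonoid N] (t : α →₀ M) (h : α → M → N) :
    t.sum h = ∑ w ∈ t.support, h w (t w) := rfl

lemma sum_cons_expand (t : List ℕ →₀ ℚ) (c N : ℕ) :
    (t.sum fun w q => q * ZR (c :: w) N)
      = ∑ n ∈ Finset.Ico 1 N, (t.sum fun w q => q * ZR w n) / (n : ℚ) ^ c := by
  have h1 : ∀ (w : List ℕ) (q : ℚ), q * ZR (c :: w) N
      = ∑ n ∈ Finset.Ico 1 N, (q * ZR w n) / (n : ℚ) ^ c := by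
    intro w q
    show q * (∑ n ∈ Finset.Ico 1 N, ZR w n / (n : ℚ) ^ c) = _
    rw [Finset.mul_sum]
    exact Finset.sum_congr rfl fun n _ => (mul_div_assoc _ _ _).symm
  calc t.sum (fun w q => q * ZR (c :: w) N)
      = ∑ w ∈ t.support, ∑ n ∈ Finset.Ico 1 N, (t w * ZR w n) / (n : ℚ) ^ c := by
        rw [fsum_eq]
        exact Finset.sum_congr rfl fun w _ => h1 w (t w)
    _ = ∑ n ∈ Finset.Ico 1 N, ∑ w ∈ t.support, (t w * ZR w n) / (n : ℚ) ^ c :=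
        Finset.sum_comm
    _ = ∑ n ∈ Finset.Ico 1 N, (t.sum fun w q => q * ZR w n) / (n : ℚ) ^ c := by
        refine Finset.sum_congr rfl fun n _ => ?_
        rw [fsum_eq, Finset.sum_div]

lemma square_split (N : ℕ) (h : ℕ → ℕ → ℚ) :
    (∑ m ∈ Finset.Ico 1 N, ∑ n ∈ Finset.Ico 1 N, h m n)
      = (∑ n ∈ Finset.Ico 1 N, ∑ m ∈ Finset.Ico 1 n, h m n)
      + (∑ m ∈ Finset.Ico 1 N, ∑ n ∈ Finset.Ico 1 m, h m n)
      + ∑ n ∈ Finset.Ico 1 N, h n n := by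
  have hsplit : ∀ m ∈ Finset.Ico 1 N, ∑ n ∈ Finset.Ico 1 N, h m n
      = (∑ n ∈ Finset.Ico 1 m, h m n) + (h m m + ∑ n ∈ Finset.Ico (m + 1) N, h m n) := by
    intro m hm
    simp only [Finset.mem_Ico] at hm
    rw [← Finset.sum_Ico_consecutive (fun n => h m n) hm.1 (le_of_lt hm.2),
      Finset.sum_eq_sum_Ico_succ_bot hm.2]
  rw [Finset.sum_congr rfl hsplit, Finset.sum_add_distrib, Finset.sum_add_distrib,
    Finset.sum_Ico_Ico_comm']
  ring

lemma stuffle : ∀ u v : List ℕ, ∀ N : ℕ,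
    ((stR u v).sum fun w q => q * ZR w N) = ZR u N * ZR v N := by
  intro u v
  induction u, v using stR.induct with
  | case1 v =>
    intro N
    rw [stR, Finsupp.sum_single_index (h := fun w q => q * ZR w N) (zero_mul _)]
    show (1 : ℚ) * ZR v N = ZR [] N * ZR v N
    rfl
  | case2 a w =>
    intro N
    rw [stR, Finsupp.sum_single_index (h := fun w q => q * ZR w N) (zero_mul _)]
    show (1 : ℚ) * ZR (a :: w) N = ZR (a :: w) N * ZR [] N
    rw [one_mul]
    show _ = ZR (a :: w) N * 1
    rw [mul_one]
  | case3 a w b w' ih1 ih2 ih3 =>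
    intro N
    rw [stR]
    rw [Finsupp.sum_add_index' (h := fun w q => q * ZR w N)
          (fun _ => zero_mul _) (fun _ _ _ => add_mul _ _ _),
        Finsupp.sum_add_index' (h := fun w q => q * ZR w N)
          (fun _ => zero_mul _) (fun _ _ _ => add_mul _ _ _)]
    rw [Finsupp.sum_mapDomain_index (h := fun w q => q * ZR w N)
          (fun _ => zero_mul _) (fun _ _ _ => add_mul _ _ _),
        Finsupp.sum_mapDomain_index (h := fun w q => q * ZR w N)
          (fun _ => zero_mul _) (fun _ _ _ => add_mul _ _ _),
        Finsupp.sum_mapDomain_index (h := fun w q => q * ZR w N)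
          (fun _ => zero_mul _) (fun _ _ _ => add_mul _ _ _)]
    rw [sum_cons_expand, sum_cons_expand, sum_cons_expand]
    have e1 : ∀ n ∈ Finset.Ico 1 N,
        ((stR w (b :: w')).sum fun w q => q * ZR w n) / (n : ℚ) ^ a
        = ∑ p ∈ Finset.Ico 1 n, (ZR w n / (n : ℚ) ^ a) * (ZR w' p / (p : ℚ) ^ b) := by
      intro n _
      rw [ih1 n]
      show (ZR w n * ∑ p ∈ Finset.Ico 1 n, ZR w' p / (p : ℚ) ^ b) / (n : ℚ) ^ a = _
      rw [Finset.mul_sum, Finset.sum_div]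
      exact Finset.sum_congr rfl fun p _ => by ring
    have e2 : ∀ n ∈ Finset.Ico 1 N,
        ((stR (a :: w) w').sum fun w q => q * ZR w n) / (n : ℚ) ^ b
        = ∑ p ∈ Finset.Ico 1 n, (ZR w p / (p : ℚ) ^ a) * (ZR w' n / (n : ℚ) ^ b) := by
      intro n _
      rw [ih2 n]
      show ((∑ p ∈ Finset.Ico 1 n, ZR w p / (p : ℚ) ^ a) * ZR w' n) / (n : ℚ) ^ b = _
      rw [Finset.sum_mul, Finset.sum_div]
      exact Finset.sum_congr rfl fun p _ => by ring
    have e3 : ∀ n ∈ Finset.Ico 1 N,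
        ((stR w w').sum fun w q => q * ZR w n) / (n : ℚ) ^ (a + b)
        = (ZR w n / (n : ℚ) ^ a) * (ZR w' n / (n : ℚ) ^ b) := by
      intro n _
      rw [ih3 n, pow_add]
      ring
    rw [Finset.sum_congr rfl e1, Finset.sum_congr rfl e2, Finset.sum_congr rfl e3]
    show _ = (∑ m ∈ Finset.Ico 1 N, ZR w m / (m : ℚ) ^ a)
      * (∑ n ∈ Finset.Ico 1 N, ZR w' n / (n : ℚ) ^ b)
    rw [Finset.sum_mul_sum]
    rw [square_split N (fun m n => (ZR w m / (m : ℚ) ^ a) * (ZR w' n / (n : ℚ) ^ b))]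
    ring


section Shuffle

lemma ddB_eval_zero (b : Bool) (F : ℕ → ℚ) : ddB b F 0 = 0 := by simp [ddB]

lemma ddB_true_eval (F : ℕ → ℚ) (n : ℕ) (hn : n ≠ 0) :
    ddB true F n = (∑ m ∈ Finset.range n, F m) / n := by simp [ddB, hn]

lemma ddB_false_eval (F : ℕ → ℚ) (n : ℕ) (hn : n ≠ 0) :
    ddB false F n = F n / n := by simp [ddB, hn]

lemma mul_div_self_nat (q : ℚ) (n : ℕ) (hn : n ≠ 0) : (n : ℚ) * (q / n) = q := by
  rw [mul_comm, div_mul_cancel₀ _ (by exact_mod_cast hn : (n : ℚ) ≠ 0)]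

lemma mul_ddB_true (F : ℕ → ℚ) (a : ℕ) :
    (a : ℚ) * ddB true F a = ∑ m ∈ Finset.range a, F m := by
  rcases eq_or_ne a 0 with rfl | h
  · simp [ddB_eval_zero]
  · rw [ddB_true_eval _ _ h, mul_div_self_nat _ _ h]

lemma mul_ddB_false (F : ℕ → ℚ) (hF : F 0 = 0) (a : ℕ) :
    (a : ℚ) * ddB false F a = F a := by
  rcases eq_or_ne a 0 with rfl | h
  · simp [ddB_eval_zero, hF]
  · rw [ddB_false_eval _ _ h, mul_div_self_nat _ _ h]

lemma convTrue (F Q : ℕ → ℚ) (n : ℕ) :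
    (∑ a ∈ Finset.range (n + 1), (∑ m ∈ Finset.range a, F m) * Q (n - a))
      = ∑ m ∈ Finset.range n, ∑ c ∈ Finset.range (m + 1), F c * Q (m - c) := by
  have hL : (∑ a ∈ Finset.range (n + 1), (∑ m ∈ Finset.range a, F m) * Q (n - a))
      = ∑ m ∈ Finset.range n, F m * ∑ i ∈ Finset.range (n - m), Q i := by
    have h0 : ∀ a ∈ Finset.range (n + 1),
        (∑ m ∈ Finset.range a, F m) * Q (n - a)
          = ∑ m ∈ Finset.range a, F m * Q (n - a) := fun a _ => Finset.sum_mul _ _ _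
    rw [Finset.sum_congr rfl h0]
    have comm : ∑ a ∈ Finset.range (n + 1), ∑ m ∈ Finset.range a, F m * Q (n - a)
        = ∑ m ∈ Finset.range (n + 1), ∑ a ∈ Finset.Ico (m + 1) (n + 1), F m * Q (n - a) := by
      simp only [Finset.range_eq_Ico]
      exact (Finset.sum_Ico_Ico_comm' 0 (n + 1) (fun m a => F m * Q (n - a))).symm
    rw [comm, Finset.sum_range_succ,
      show (∑ a ∈ Finset.Ico (n + 1) (n + 1), F n * Q (n - a)) = 0 by simp, add_zero]
    apply Finset.sum_congr rfl
    intro m hm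
    simp only [Finset.mem_range] at hm
    rw [Finset.sum_Ico_eq_sum_range,
      show n + 1 - (m + 1) = n - m by omega, ← Finset.mul_sum]
    congr 1
    conv_rhs => rw [← Finset.sum_range_reflect (fun i => Q i) (n - m)]
    apply Finset.sum_congr rfl
    intro k _
    congr 1
    omega
  have hR : (∑ m ∈ Finset.range n, ∑ c ∈ Finset.range (m + 1), F c * Q (m - c))
      = ∑ c ∈ Finset.range n, F c * ∑ i ∈ Finset.range (n - c), Q i := by
    have comm2 : ∑ m ∈ Finset.range n, ∑ c ∈ Finset.range (m + 1), F c * Q (m - c)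
        = ∑ c ∈ Finset.range n, ∑ m ∈ Finset.Ico c n, F c * Q (m - c) := by
      simp only [Finset.range_eq_Ico]
      exact (Finset.sum_Ico_Ico_comm 0 n (fun c m => F c * Q (m - c))).symm
    rw [comm2]
    apply Finset.sum_congr rfl
    intro c hc
    rw [Finset.sum_Ico_eq_sum_range, ← Finset.mul_sum]
    congr 1
    apply Finset.sum_congr rfl
    intro k _
    congr 1
    omega
  rw [hL, hR]

lemma convTrue' (P G : ℕ → ℚ) (n : ℕ) :
    (∑ a ∈ Finset.range (n + 1), P a * (∑ m ∈ Finset.range (n - a), G m))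
      = ∑ m ∈ Finset.range n, ∑ c ∈ Finset.range (m + 1), P c * G (m - c) := by
  conv_lhs => rw [← Finset.sum_range_reflect
    (fun a => P a * ∑ m ∈ Finset.range (n - a), G m) (n + 1)]
  have h1 : ∀ a ∈ Finset.range (n + 1),
      P (n + 1 - 1 - a) * (∑ m ∈ Finset.range (n - (n + 1 - 1 - a)), G m)
        = (∑ m ∈ Finset.range a, G m) * P (n - a) := by
    intro a ha
    simp only [Finset.mem_range] at ha
    rw [show n + 1 - 1 - a = n - a by omega, show n - (n - a) = a by omega, mul_comm]
  rw [Finset.sum_congr rfl h1, convTrue G P n]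
  apply Finset.sum_congr rfl
  intro m _
  conv_rhs => rw [← Finset.sum_range_reflect (fun c => P c * G (m - c)) (m + 1)]
  apply Finset.sum_congr rfl
  intro c hc
  simp only [Finset.mem_range] at hc
  rw [show m + 1 - 1 - c = m - c by omega, show m - (m - c) = c by omega, mul_comm]

lemma convStep (x y : Bool) (F G : ℕ → ℚ)
    (hF : x = false → F 0 = 0) (hG : y = false → G 0 = 0) (n : ℕ) :
    (∑ a ∈ Finset.range (n + 1), ddB x F a * ddB y G (n - a))
      = ddB x (fun m => ∑ c ∈ Finset.range (m + 1), F c * ddB y G (m - c)) n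
      + ddB y (fun m => ∑ c ∈ Finset.range (m + 1), ddB x F c * G (m - c)) n := by
  rcases Nat.eq_zero_or_pos n with rfl | hn
  · simp [ddB_eval_zero]
  have hne : (n : ℚ) ≠ 0 := Nat.cast_ne_zero.2 (by omega)
  apply mul_left_cancel₀ hne
  have key : ∀ a ∈ Finset.range (n + 1),
      (n : ℚ) * (ddB x F a * ddB y G (n - a))
        = ((a : ℚ) * ddB x F a) * ddB y G (n - a)
          + ddB x F a * (((n - a : ℕ) : ℚ) * ddB y G (n - a)) := by
    intro a ha
    simp only [Finset.mem_range] at ha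
    have hc : (n : ℚ) = (a : ℚ) + ((n - a : ℕ) : ℚ) := by
      rw [Nat.cast_sub (by omega : a ≤ n)]
      ring
    rw [hc]
    ring
  rw [Finset.mul_sum, Finset.sum_congr rfl key, Finset.sum_add_distrib, mul_add]
  congr 1
  · cases x with
    | true =>
      calc ∑ a ∈ Finset.range (n + 1), ((a : ℚ) * ddB true F a) * ddB y G (n - a)
          = ∑ a ∈ Finset.range (n + 1), (∑ m ∈ Finset.range a, F m) * ddB y G (n - a) :=
            Finset.sum_congr rfl fun a _ => by rw [mul_ddB_true]
        _ = ∑ m ∈ Finset.range n, ∑ c ∈ Finset.range (m + 1), F c * ddB y G (m - c) :=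
            convTrue F (ddB y G) n
        _ = (n : ℚ) * ddB true (fun m => ∑ c ∈ Finset.range (m + 1), F c * ddB y G (m - c)) n :=
            (mul_ddB_true _ n).symm
    | false =>
      calc ∑ a ∈ Finset.range (n + 1), ((a : ℚ) * ddB false F a) * ddB y G (n - a)
          = ∑ a ∈ Finset.range (n + 1), F a * ddB y G (n - a) :=
            Finset.sum_congr rfl fun a _ => by rw [mul_ddB_false F (hF rfl)]
        _ = (n : ℚ) * ddB false (fun m => ∑ c ∈ Finset.range (m + 1), F c * ddB y G (m - c)) n := by
            rw [mul_ddB_false _ (by simp [ddB_eval_zero])]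
  · cases y with
    | true =>
      calc ∑ a ∈ Finset.range (n + 1), ddB x F a * (((n - a : ℕ) : ℚ) * ddB true G (n - a))
          = ∑ a ∈ Finset.range (n + 1), ddB x F a * (∑ m ∈ Finset.range (n - a), G m) :=
            Finset.sum_congr rfl fun a _ => by rw [mul_ddB_true]
        _ = ∑ m ∈ Finset.range n, ∑ c ∈ Finset.range (m + 1), ddB x F c * G (m - c) :=
            convTrue' (ddB x F) G n
        _ = (n : ℚ) * ddB true (fun m => ∑ c ∈ Finset.range (m + 1), ddB x F c * G (m - c)) n :=
            (mul_ddB_true _ n).symm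
    | false =>
      calc ∑ a ∈ Finset.range (n + 1), ddB x F a * (((n - a : ℕ) : ℚ) * ddB false G (n - a))
          = ∑ a ∈ Finset.range (n + 1), ddB x F a * G (n - a) :=
            Finset.sum_congr rfl fun a _ => by rw [mul_ddB_false G (hG rfl)]
        _ = (n : ℚ) * ddB false (fun m => ∑ c ∈ Finset.range (m + 1), ddB x F c * G (m - c)) n := by
            rw [mul_ddB_false _ (by simp [ddB_eval_zero])]

/-- Invariant: the reversed word is empty or its actual word starts with `e₁`. -/
def OKw (u : List Bool) : Prop := u = [] ∨ u.getLast? = some true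

lemma OK_tail {x : Bool} {u : List Bool} (h : OKw (x :: u)) : OKw u := by
  cases u with
  | nil => exact Or.inl rfl
  | cons c u' =>
    rcases h with h | h
    · exact absurd h (by simp)
    · rw [List.getLast?_cons_cons] at h
      exact Or.inr h

lemma sum_ddB (t : List Bool →₀ ℚ) (x : Bool) (n : ℕ) :
    (t.sum fun w q => q * ddB x (dW w) n)
      = ddB x (fun m => t.sum fun w q => q * dW w m) n := by
  rcases Nat.eq_zero_or_pos n with rfl | hn
  · simp only [ddB_eval_zero, mul_zero]
    exact Finset.sum_const_zero
  cases x with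
  | true =>
    rw [ddB_true_eval _ _ (by omega)]
    calc t.sum (fun w q => q * ddB true (dW w) n)
        = ∑ w ∈ t.support, (∑ m ∈ Finset.range n, t w * dW w m) / (n : ℚ) := by
          rw [fsum_eq]
          refine Finset.sum_congr rfl fun w _ => ?_
          rw [ddB_true_eval _ _ (by omega), ← mul_div_assoc, Finset.mul_sum]
      _ = (∑ w ∈ t.support, ∑ m ∈ Finset.range n, t w * dW w m) / (n : ℚ) :=
          (Finset.sum_div _ _ _).symm
      _ = (∑ m ∈ Finset.range n, ∑ w ∈ t.support, t w * dW w m) / (n : ℚ) := by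
          rw [Finset.sum_comm]
      _ = (∑ m ∈ Finset.range n, t.sum fun w q => q * dW w m) / (n : ℚ) := rfl
  | false =>
    rw [ddB_false_eval _ _ (by omega), fsum_eq, fsum_eq, Finset.sum_div]
    refine Finset.sum_congr rfl fun w _ => ?_
    rw [ddB_false_eval _ _ (by omega), mul_div_assoc]

lemma Dsh : ∀ u v : List Bool, OKw u → OKw v → ∀ n : ℕ,
    ((shR u v).sum fun w q => q * dW w n)
      = ∑ a ∈ Finset.range (n + 1), dW u a * dW v (n - a) := by
  intro u v
  induction u, v using shR.induct with
  | case1 v =>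
    intro _ _ n
    rw [shR, Finsupp.sum_single_index (h := fun w q => q * dW w n) (zero_mul _), one_mul]
    symm
    have h1 : ∀ a ∈ Finset.range (n + 1),
        dW [] a * dW v (n - a) = if a = 0 then dW v n else 0 := by
      intro a ha
      rcases eq_or_ne a 0 with rfl | h
      · have : dW ([] : List Bool) 0 = 1 := rfl
        simp [this]
      · have h2 : dW ([] : List Bool) a = 0 := by simp [dW, h]
        simp [h2, h]
    rw [Finset.sum_congr rfl h1, Finset.sum_ite_eq' (Finset.range (n + 1)) 0 (fun _ => dW v n),
      if_pos (Finset.mem_range.2 (by omega))]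
  | case2 x w =>
    intro _ _ n
    rw [shR, Finsupp.sum_single_index (h := fun w q => q * dW w n) (zero_mul _), one_mul]
    symm
    have h1 : ∀ a ∈ Finset.range (n + 1),
        dW (x :: w) a * dW [] (n - a) = if a = n then dW (x :: w) n else 0 := by
      intro a ha
      simp only [Finset.mem_range] at ha
      rcases eq_or_ne a n with rfl | h
      · have h2 : dW ([] : List Bool) 0 = 1 := rfl
        simp [h2]
      · have h2 : dW ([] : List Bool) (n - a) = 0 := by
          have : n - a ≠ 0 := by omega
          simp [dW, this]
        simp [h2, h]
    rw [Finset.sum_congr rfl h1, Finset.sum_ite_eq' (Finset.range (n + 1)) n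
      (fun _ => dW (x :: w) n), if_pos (Finset.mem_range.2 (by omega))]
  | case3 x u' y v' ih1 ih2 =>
    intro hu hv n
    have hu' : OKw u' := OK_tail hu
    have hv' : OKw v' := OK_tail hv
    have hF : x = false → dW u' 0 = 0 := by
      intro hx
      cases u' with
      | nil =>
        subst hx
        rcases hu with h | h
        · exact absurd h (by simp)
        · simp at h
      | cons c w' => simp [dW, ddB_eval_zero]
    have hG : y = false → dW v' 0 = 0 := by
      intro hy
      cases v' with
      | nil =>
        subst hy
        rcases hv with h | h
        · exact absurd h (by simp)
        · simp at h
      | cons c w' => simp [dW, ddB_eval_zero]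
    rw [shR]
    rw [Finsupp.sum_add_index' (h := fun w q => q * dW w n)
      (fun _ => zero_mul _) (fun _ _ _ => add_mul _ _ _)]
    rw [Finsupp.sum_mapDomain_index (h := fun w q => q * dW w n)
          (fun _ => zero_mul _) (fun _ _ _ => add_mul _ _ _),
        Finsupp.sum_mapDomain_index (h := fun w q => q * dW w n)
          (fun _ => zero_mul _) (fun _ _ _ => add_mul _ _ _)]
    simp only [dW]
    rw [sum_ddB, sum_ddB]
    have e1 : (fun m => (shR u' (y :: v')).sum fun w q => q * dW w m)
        = fun m => ∑ a ∈ Finset.range (m + 1), dW u' a * dW (y :: v') (m - a) :=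
      funext fun m => ih1 hu' hv m
    have e2 : (fun m => (shR (x :: u') v').sum fun w q => q * dW w m)
        = fun m => ∑ a ∈ Finset.range (m + 1), dW (x :: u') a * dW v' (m - a) :=
      funext fun m => ih2 hu hv' m
    rw [e1, e2]
    simp only [dW]
    exact (convStep x y (dW u') (dW v') hF hG n).symm

end Shuffle


section Decode

/-- The fold underlying `decode`. -/
def decAux (w : List Bool) : ℕ × List ℕ :=
  w.foldr (fun b p => if b then (0, (p.1 + 1) :: p.2) else (p.1 + 1, p.2))
    ((0, []) : ℕ × List ℕ)

lemma decode_eq (w : List Bool) : decode w = (decAux w).2 := rfl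

lemma decAux_cons_true (w : List Bool) :
    decAux (true :: w) = (0, ((decAux w).1 + 1) :: (decAux w).2) := rfl

lemma decAux_cons_false (w : List Bool) :
    decAux (false :: w) = ((decAux w).1 + 1, (decAux w).2) := rfl

lemma decode_entries_pos (w : List Bool) : ∀ x ∈ decode w, 0 < x := by
  rw [decode_eq]
  induction w with
  | nil => intro x hx; simp [decAux] at hx
  | cons b w' ih =>
    intro x hx
    cases b with
    | true =>
      rw [decAux_cons_true] at hx
      rcases List.mem_cons.1 hx with rfl | hx'
      · omega
      · exact ih x hx'
    | false =>
      rw [decAux_cons_false] at hx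
      exact ih x hx

lemma decAux_spec : ∀ w : List Bool,
    List.replicate (decAux w).1 false ++ wordOf (decAux w).2 = w := by
  intro w
  induction w with
  | nil => rfl
  | cons b w' ih =>
    cases b with
    | true =>
      rw [decAux_cons_true]
      show List.replicate 0 false ++ wordOf (((decAux w').1 + 1) :: (decAux w').2) = true :: w'
      rw [List.replicate_zero, List.nil_append]
      show (((decAux w').1 + 1) :: (decAux w').2).flatMap
        (fun j => true :: List.replicate (j - 1) false) = true :: w'
      rw [List.flatMap_cons]
      have h1 : (decAux w').1 + 1 - 1 = (decAux w').1 := by omega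
      rw [h1, List.cons_append]
      exact congrArg (List.cons true) ih
    | false =>
      rw [decAux_cons_false]
      show List.replicate ((decAux w').1 + 1) false ++ wordOf (decAux w').2 = false :: w'
      rw [List.replicate_succ, List.cons_append]
      exact congrArg (List.cons false) ih

lemma wordOf_decode {w : List Bool} (h : w = [] ∨ w.head? = some true) :
    wordOf (decode w) = w := by
  rcases h with rfl | h
  · rfl
  · cases w with
    | nil => simp at h
    | cons b w' =>
      have hb : b = true := by simpa using h
      subst hb
      have hs := decAux_spec (true :: w')
      rw [decAux_cons_true] at hs
      rw [decode_eq, decAux_cons_true]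
      simpa using hs

end Decode

section Bridge

lemma dW_replicate (j : ℕ) (w : List Bool) (n : ℕ) (hn : n ≠ 0) :
    dW (List.replicate j false ++ w) n = dW w n / (n : ℚ) ^ j := by
  induction j with
  | zero => simp
  | succ j ih =>
    rw [List.replicate_succ, List.cons_append]
    show ddB false (dW (List.replicate j false ++ w)) n = _
    rw [ddB_false_eval _ _ hn, ih, div_div, ← pow_succ]

lemma dW_flat (l : List ℕ) (hl : ∀ x ∈ l, 0 < x) :
    ∀ n, dW (l.flatMap (fun j => List.replicate (j - 1) false ++ [true])) n = cR l n := by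
  induction l with
  | nil => intro n; rfl
  | cons a l' ih =>
    intro n
    have ha : 0 < a := hl a (by simp)
    have hl' : ∀ x ∈ l', 0 < x := fun x hx => hl x (by simp [hx])
    rw [List.flatMap_cons]
    rcases eq_or_ne n 0 with rfl | hn
    · rw [cR_zero_eq]
      rcases Nat.eq_zero_or_pos (a - 1) with h1 | h1
      · rw [h1, List.replicate_zero, List.nil_append, List.singleton_append]
        exact ddB_eval_zero _ _
      · obtain ⟨j, hj⟩ : ∃ j, a - 1 = j + 1 := ⟨a - 2, by omega⟩
        rw [hj, List.replicate_succ, List.cons_append, List.cons_append]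
        exact ddB_eval_zero _ _
    · rw [List.append_assoc, dW_replicate _ _ _ hn, List.singleton_append]
      show ddB true (dW (l'.flatMap _)) n / (n : ℚ) ^ (a - 1) = cR (a :: l') n
      rw [ddB_true_eval _ _ hn]
      rw [Finset.sum_congr rfl (fun m _ => ih hl' m)]
      have hc : cR (a :: l') n = (∑ m ∈ Finset.range n, cR l' m) / (n : ℚ) ^ a := by
        show (if n = 0 then 0 else (∑ m ∈ Finset.range n, cR l' m) / (n : ℚ) ^ a) = _
        rw [if_neg hn]
      rw [hc, div_div]
      congr 1
      rw [← pow_succ']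
      congr 1
      omega

lemma dW_rev_wordOf (u : List ℕ) (hu : ∀ x ∈ u, 0 < x) (n : ℕ) :
    dW ((wordOf u).reverse) n = cR u.reverse n := by
  have h1 : (wordOf u).reverse
      = u.reverse.flatMap (fun j => List.replicate (j - 1) false ++ [true]) := by
    show (u.flatMap (fun j => true :: List.replicate (j - 1) false)).reverse = _
    rw [List.reverse_flatMap]
    have h2 : (List.reverse ∘ (fun j => true :: List.replicate (j - 1) false))
        = (fun j : ℕ => List.replicate (j - 1) false ++ [true]) := by
      funext j
      simp [Function.comp, List.reverse_cons, List.reverse_replicate]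
    rw [h2]
  rw [h1]
  exact dW_flat u.reverse (fun x hx => hu x (List.mem_reverse.1 hx)) n

end Bridge

section Support

lemma OK_cons {z : Bool} {w : List Bool} (h : OKw w) (hne : w ≠ []) : OKw (z :: w) := by
  cases w with
  | nil => exact absurd rfl hne
  | cons c w' =>
    rcases h with h | h
    · simp at h
    · right
      rw [List.getLast?_cons_cons]
      exact h

lemma shR_support_length : ∀ u v : List Bool, ∀ w ∈ (shR u v).support,
    w.length = u.length + v.length := by
  intro u v
  induction u, v using shR.induct with
  | case1 v =>
    intro w hw
    rw [shR] at hw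
    have h1 := Finsupp.support_single_subset hw
    rw [Finset.mem_singleton] at h1
    subst h1
    simp
  | case2 x u' =>
    intro w hw
    rw [shR] at hw
    have h1 := Finsupp.support_single_subset hw
    rw [Finset.mem_singleton] at h1
    subst h1
    simp
  | case3 x u' y v' ih1 ih2 =>
    intro w hw
    rw [shR] at hw
    rcases Finset.mem_union.1 (Finsupp.support_add hw) with h | h
    · obtain ⟨w', hw', rfl⟩ := Finset.mem_image.1 (Finsupp.mapDomain_support h)
      have := ih1 w' hw'
      simp only [List.length_cons] at this ⊢
      omega
    · obtain ⟨w', hw', rfl⟩ := Finset.mem_image.1 (Finsupp.mapDomain_support h)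
      have := ih2 w' hw'
      simp only [List.length_cons] at this ⊢
      omega

lemma shR_support_OK : ∀ u v : List Bool, OKw u → OKw v → ∀ w ∈ (shR u v).support, OKw w := by
  intro u v
  induction u, v using shR.induct with
  | case1 v =>
    intro _ hv w hw
    rw [shR] at hw
    have h1 := Finsupp.support_single_subset hw
    rw [Finset.mem_singleton] at h1
    subst h1
    exact hv
  | case2 x u' =>
    intro hu _ w hw
    rw [shR] at hw
    have h1 := Finsupp.support_single_subset hw
    rw [Finset.mem_singleton] at h1
    subst h1
    exact hu
  | case3 x u' y v' ih1 ih2 =>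
    intro hu hv w hw
    have hu' : OKw u' := OK_tail hu
    have hv' : OKw v' := OK_tail hv
    rw [shR] at hw
    rcases Finset.mem_union.1 (Finsupp.support_add hw) with h | h
    · obtain ⟨w', hw', rfl⟩ := Finset.mem_image.1 (Finsupp.mapDomain_support h)
      have hlen := shR_support_length _ _ w' hw'
      have hne : w' ≠ [] := by
        intro hE
        rw [hE] at hlen
        simp at hlen
      exact OK_cons (ih1 hu' hv w' hw') hne
    · obtain ⟨w', hw', rfl⟩ := Finset.mem_image.1 (Finsupp.mapDomain_support h)
      have hlen := shR_support_length _ _ w' hw'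
      have hne : w' ≠ [] := by
        intro hE
        rw [hE] at hlen
        simp at hlen
        omega
      exact OK_cons (ih2 hu hv' w' hw') hne

end Support


section Glue

lemma MHS_eq_sum_cR (k : List ℕ) (N : ℕ) (hN : 1 ≤ N) :
    MHS N k = ∑ n ∈ Finset.range N, ((cR k.reverse n : ℚ) : ℝ) := by
  rw [MHS_eq_ZR k N hN, ZR_eq_sum_cR _ N hN, Rat.cast_sum]

lemma ZN_harmW (u v : List ℕ) (N : ℕ) (hN : 1 ≤ N) :
    ZN N (harmW u v) = MHS N u * MHS N v := by
  show (Finsupp.mapDomain List.reverse (stR u.reverse v.reverse)).sum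
    (fun k q => (q : ℝ) * MHS N k) = _
  rw [Finsupp.sum_mapDomain_index (h := fun k (q : ℚ) => (q : ℝ) * MHS N k)
    (fun _ => by simp) (fun _ _ _ => by push_cast; ring)]
  have h1 : ∀ w ∈ (stR u.reverse v.reverse).support,
      ((stR u.reverse v.reverse) w : ℝ) * MHS N w.reverse
        = (((stR u.reverse v.reverse) w * ZR w N : ℚ) : ℝ) := by
    intro w _
    rw [MHS_eq_ZR w.reverse N hN, List.reverse_reverse]
    push_cast
    ring
  rw [fsum_eq, Finset.sum_congr rfl h1, ← Rat.cast_sum]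
  rw [show (∑ w ∈ (stR u.reverse v.reverse).support,
      (stR u.reverse v.reverse) w * ZR w N)
    = ((stR u.reverse v.reverse).sum fun w q => q * ZR w N) from rfl]
  rw [stuffle u.reverse v.reverse N, Rat.cast_mul,
    ← MHS_eq_ZR u N hN, ← MHS_eq_ZR v N hN]

lemma OK_rev_wordOf (u : List ℕ) : OKw ((wordOf u).reverse) := by
  cases u with
  | nil => exact Or.inl rfl
  | cons a u0 =>
    right
    rw [List.getLast?_reverse]
    show ((a :: u0).flatMap (fun j => true :: List.replicate (j - 1) false)).head? = some true
    rw [List.flatMap_cons, List.cons_append]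
    rfl

lemma triangle_sum (F : ℕ → ℕ → ℝ) (N : ℕ) :
    (∑ n ∈ Finset.range N, ∑ a ∈ Finset.range (n + 1), F a (n - a))
      = ∑ p ∈ (Finset.range N ×ˢ Finset.range N).filter (fun p => p.1 + p.2 < N), F p.1 p.2 := by
  have h1 : ∀ n ∈ Finset.range N, (∑ a ∈ Finset.range (n + 1), F a (n - a))
      = ∑ a ∈ Finset.range N, if a ≤ n then F a (n - a) else 0 := by
    intro n hn
    simp only [Finset.mem_range] at hn
    rw [← Finset.sum_filter]
    congr 1
    ext a
    simp only [Finset.mem_filter, Finset.mem_range]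
    omega
  rw [Finset.sum_congr rfl h1, ← Finset.sum_product']
  rw [← Finset.sum_filter (s := Finset.range N ×ˢ Finset.range N)
    (p := fun p : ℕ × ℕ => p.2 ≤ p.1) (f := fun p : ℕ × ℕ => F p.2 (p.1 - p.2))]
  apply Finset.sum_nbij' (i := fun p : ℕ × ℕ => (p.2, p.1 - p.2))
    (j := fun p : ℕ × ℕ => (p.1 + p.2, p.1))
  · intro p hp
    simp only [Finset.mem_filter, Finset.mem_product, Finset.mem_range] at hp ⊢
    omega
  · intro p hp
    simp only [Finset.mem_filter, Finset.mem_product, Finset.mem_range] at hp ⊢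
    omega
  · intro p hp
    simp only [Finset.mem_filter, Finset.mem_product, Finset.mem_range] at hp
    have e1 : p.2 + (p.1 - p.2) = p.1 := by omega
    exact Prod.ext e1 rfl
  · intro p hp
    simp only [Finset.mem_filter, Finset.mem_product, Finset.mem_range] at hp
    have e1 : p.1 + p.2 - p.1 = p.2 := by omega
    exact Prod.ext rfl e1
  · intro p _
    rfl

lemma ZN_shWpair (u v : List ℕ) (hu : ∀ x ∈ u, 0 < x) (hv : ∀ x ∈ v, 0 < x)
    (N : ℕ) (hN : 1 ≤ N) :
    ZN N ((shW (wordOf u) (wordOf v)).mapDomain decode)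
      = ∑ p ∈ (Finset.range N ×ˢ Finset.range N).filter (fun p => p.1 + p.2 < N),
          ((cR u.reverse p.1 : ℚ) : ℝ) * ((cR v.reverse p.2 : ℚ) : ℝ) := by
  have hU : OKw ((wordOf u).reverse) := OK_rev_wordOf u
  have hV : OKw ((wordOf v).reverse) := OK_rev_wordOf v
  show (Finsupp.mapDomain decode (Finsupp.mapDomain List.reverse
      (shR (wordOf u).reverse (wordOf v).reverse))).sum (fun k q => (q : ℝ) * MHS N k) = _
  rw [← Finsupp.mapDomain_comp]
  rw [Finsupp.sum_mapDomain_index (h := fun k (q : ℚ) => (q : ℝ) * MHS N k)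
    (fun _ => by simp) (fun _ _ _ => by push_cast; ring)]
  have hterm : ∀ w ∈ (shR (wordOf u).reverse (wordOf v).reverse).support,
      ((shR (wordOf u).reverse (wordOf v).reverse) w : ℝ)
          * MHS N ((decode ∘ List.reverse) w)
        = ∑ n ∈ Finset.range N,
            (((shR (wordOf u).reverse (wordOf v).reverse) w * dW w n : ℚ) : ℝ) := by
    intro w hw
    have hOK : OKw w := shR_support_OK _ _ hU hV w hw
    have hhead : w.reverse = [] ∨ (w.reverse).head? = some true := by
      rcases hOK with h | h
      · left; rw [h]; rfl
      · right; rw [List.head?_reverse]; exact h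
    have hrt : wordOf (decode w.reverse) = w.reverse := wordOf_decode hhead
    have hpos := decode_entries_pos w.reverse
    have hMHS : MHS N (decode w.reverse) = ∑ n ∈ Finset.range N, ((dW w n : ℚ) : ℝ) := by
      rw [MHS_eq_sum_cR _ N hN]
      apply Finset.sum_congr rfl
      intro n _
      congr 1
      rw [← dW_rev_wordOf (decode w.reverse) hpos n, hrt, List.reverse_reverse]
    show ((shR (wordOf u).reverse (wordOf v).reverse) w : ℝ) * MHS N (decode w.reverse) = _
    rw [hMHS, Finset.mul_sum]
    apply Finset.sum_congr rfl
    intro n _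
    push_cast
    ring
  rw [fsum_eq, Finset.sum_congr rfl hterm, Finset.sum_comm]
  have h2 : ∀ n ∈ Finset.range N,
      (∑ w ∈ (shR (wordOf u).reverse (wordOf v).reverse).support,
          (((shR (wordOf u).reverse (wordOf v).reverse) w * dW w n : ℚ) : ℝ))
        = ∑ a ∈ Finset.range (n + 1),
            ((cR u.reverse a : ℚ) : ℝ) * ((cR v.reverse (n - a) : ℚ) : ℝ) := by
    intro n _
    rw [← Rat.cast_sum]
    rw [show (∑ w ∈ (shR (wordOf u).reverse (wordOf v).reverse).support,
        (shR (wordOf u).reverse (wordOf v).reverse) w * dW w n)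
      = ((shR (wordOf u).reverse (wordOf v).reverse).sum fun w q => q * dW w n) from rfl]
    rw [Dsh _ _ hU hV n, Rat.cast_sum]
    apply Finset.sum_congr rfl
    intro a _
    rw [dW_rev_wordOf u hu a, dW_rev_wordOf v hv (n - a)]
    push_cast
    ring
  rw [Finset.sum_congr rfl h2]
  exact triangle_sum (fun a b => ((cR u.reverse a : ℚ) : ℝ) * ((cR v.reverse b : ℚ) : ℝ)) N

end Glue


section Bounds

lemma cR_nonneg : ∀ (k : List ℕ) (n : ℕ), 0 ≤ cR k n := by
  intro k
  induction k with
  | nil =>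
    intro n
    show (0 : ℚ) ≤ if n = 0 then 1 else 0
    split <;> norm_num
  | cons a k ih =>
    intro n
    show (0 : ℚ) ≤ if n = 0 then 0 else (∑ m ∈ Finset.range n, cR k m) / (n : ℚ) ^ a
    split
    · exact le_refl _
    · exact div_nonneg (Finset.sum_nonneg fun m _ => ih m) (by positivity)

lemma harmonic_nonneg' (n : ℕ) : 0 ≤ harmonic n := by
  have : harmonic n = ∑ i ∈ Finset.range n, ((i : ℚ) + 1)⁻¹ := by simp [harmonic]
  rw [this]
  exact Finset.sum_nonneg fun i _ => by positivity

lemma harmonic_le_harmonic {m n : ℕ} (h : m ≤ n) : harmonic m ≤ harmonic n := by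
  have e : ∀ j : ℕ, harmonic j = ∑ i ∈ Finset.range j, ((i : ℚ) + 1)⁻¹ := by
    intro j; simp [harmonic]
  rw [e m, e n]
  apply Finset.sum_le_sum_of_subset_of_nonneg (Finset.range_subset_range.2 h)
  intro i _ _
  positivity

lemma harm_Ico (n : ℕ) : (∑ m ∈ Finset.Ico 1 n, (1 : ℚ) / m) = harmonic (n - 1) := by
  rw [Finset.sum_Ico_eq_sum_range]
  have e : harmonic (n - 1) = ∑ i ∈ Finset.range (n - 1), ((i : ℚ) + 1)⁻¹ := by simp [harmonic]
  rw [e]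
  apply Finset.sum_congr rfl
  intro i _
  rw [one_div]
  congr 1
  push_cast
  ring

lemma sum_cR_nil (n : ℕ) (hn : 1 ≤ n) : (∑ m ∈ Finset.range n, cR [] m) = 1 := by
  have e : ∀ m : ℕ, cR [] m = if m = 0 then 1 else 0 := fun _ => rfl
  rw [Finset.sum_congr rfl (fun m _ => e m),
    Finset.sum_ite_eq' (Finset.range n) 0 (fun _ => (1 : ℚ)),
    if_pos (Finset.mem_range.2 (by omega))]

lemma cR_le (c : ℕ) (k : List ℕ) (hk : ∀ x ∈ k, 0 < x) :
    ∀ n, 1 ≤ n → cR (c :: k) n ≤ harmonic n ^ k.length / (n : ℚ) ^ c := by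
  induction k generalizing c with
  | nil =>
    intro n hn
    show (if n = 0 then 0 else (∑ m ∈ Finset.range n, cR [] m) / (n : ℚ) ^ c) ≤ _
    rw [if_neg (by omega), sum_cR_nil n hn]
    simp only [List.length_nil, pow_zero]
    exact le_refl _
  | cons b k' ih =>
    intro n hn
    show (if n = 0 then 0 else (∑ m ∈ Finset.range n, cR (b :: k') m) / (n : ℚ) ^ c)
      ≤ harmonic n ^ (b :: k').length / (n : ℚ) ^ c
    rw [if_neg (by omega)]
    have hnpos : (0 : ℚ) < (n : ℚ) ^ c := by positivity
    rw [div_le_div_iff_of_pos_right hnpos]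
    have hb : 0 < b := hk b (by simp)
    have hk' : ∀ x ∈ k', 0 < x := fun x hx => hk x (by simp [hx])
    have hbound : ∀ m ∈ Finset.range n, cR (b :: k') m
        ≤ if m = 0 then 0 else harmonic n ^ k'.length * (1 / m) := by
      intro m hm
      simp only [Finset.mem_range] at hm
      rcases eq_or_ne m 0 with rfl | h
      · rw [cR_zero_eq]
        simp
      · rw [if_neg h]
        have hm1 : 1 ≤ m := by omega
        calc cR (b :: k') m ≤ harmonic m ^ k'.length / (m : ℚ) ^ b := ih b hk' m hm1
          _ ≤ harmonic n ^ k'.length * (1 / m) := by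
              rw [div_eq_mul_one_div]
              apply mul_le_mul
              · exact pow_le_pow_left₀ (harmonic_nonneg' m) (harmonic_le_harmonic (by omega)) _
              · apply one_div_le_one_div_of_le (by exact_mod_cast hm1)
                exact le_self_pow₀ (by exact_mod_cast hm1) (by omega)
              · positivity
              · exact pow_nonneg (harmonic_nonneg' n) _
    calc (∑ m ∈ Finset.range n, cR (b :: k') m)
        ≤ ∑ m ∈ Finset.range n, (if m = 0 then 0 else harmonic n ^ k'.length * (1 / m)) :=
          Finset.sum_le_sum hbound
      _ = harmonic n ^ k'.length * ∑ m ∈ Finset.Ico 1 n, (1 : ℚ) / m := by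
          rw [Finset.range_eq_Ico, Finset.sum_eq_sum_Ico_succ_bot (by omega : 0 < n),
            if_pos rfl, zero_add, Finset.mul_sum]
          apply Finset.sum_congr rfl
          intro m hm
          simp only [Finset.mem_Ico] at hm
          rw [if_neg (by omega)]
      _ = harmonic n ^ k'.length * harmonic (n - 1) := by rw [harm_Ico]
      _ ≤ harmonic n ^ k'.length * harmonic n :=
          mul_le_mul_of_nonneg_left (harmonic_le_harmonic (by omega))
            (pow_nonneg (harmonic_nonneg' n) _)
      _ = harmonic n ^ ((b :: k').length) := by
          rw [List.length_cons, pow_succ]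

lemma cR_le_real (c : ℕ) (k : List ℕ) (hk : ∀ x ∈ k, 0 < x) (n N : ℕ)
    (hn : 1 ≤ n) (hnN : n ≤ N) :
    ((cR (c :: k) n : ℚ) : ℝ) ≤ (1 + Real.log N) ^ k.length / (n : ℝ) ^ c := by
  have h1 : ((cR (c :: k) n : ℚ) : ℝ) ≤ (((harmonic n : ℚ) : ℝ)) ^ k.length / (n : ℝ) ^ c := by
    have := cR_le c k hk n hn
    have h2 : ((cR (c :: k) n : ℚ) : ℝ) ≤ ((harmonic n ^ k.length / (n : ℚ) ^ c : ℚ) : ℝ) := by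
      exact_mod_cast this
    refine h2.trans_eq ?_
    push_cast
    ring
  refine h1.trans ?_
  have hnum : (((harmonic n : ℚ) : ℝ)) ^ k.length ≤ (1 + Real.log N) ^ k.length := by
    apply pow_le_pow_left₀ (by exact_mod_cast harmonic_nonneg' n)
    calc ((harmonic n : ℚ) : ℝ) ≤ 1 + Real.log n := harmonic_le_one_add_log n
      _ ≤ 1 + Real.log N := by
          apply add_le_add le_rfl
          exact Real.log_le_log (by exact_mod_cast hn) (by exact_mod_cast hnN)
  exact (div_le_div_iff_of_pos_right (by positivity)).2 hnum

lemma sum_inv_sq_le (M : ℕ) (hM : 1 ≤ M) : ∀ K, M ≤ K →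
    (∑ b ∈ Finset.Ico M K, (1 : ℝ) / (b : ℝ) ^ 2) ≤ 2 / M - 2 / K := by
  intro K
  induction K with
  | zero => intro h; exact absurd h (by omega)
  | succ K ihK =>
    intro h
    rcases Nat.lt_or_ge K M with h1 | h1
    · have hMK : M = K + 1 := by omega
      subst hMK
      simp
    · rw [Finset.sum_Ico_succ_top h1]
      have h2 := ihK h1
      have hK1 : (1 : ℝ) ≤ (K : ℝ) := by exact_mod_cast (by omega : 1 ≤ K)
      have h3 : (1 : ℝ) / (K : ℝ) ^ 2 ≤ 2 / K - 2 / ((K : ℝ) + 1) := by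
        rw [div_sub_div _ _ (by positivity) (by positivity),
          div_le_div_iff₀ (by positivity) (by positivity)]
        nlinarith
      calc (∑ b ∈ Finset.Ico M K, (1 : ℝ) / (b : ℝ) ^ 2) + 1 / (K : ℝ) ^ 2
          ≤ (2 / M - 2 / K) + (2 / K - 2 / ((K : ℝ) + 1)) := add_le_add h2 h3
        _ = 2 / M - 2 / ((K : ℝ) + 1) := by ring
        _ = 2 / M - 2 / ((K + 1 : ℕ) : ℝ) := by push_cast; ring

end Bounds


section BadSum

lemma badSum (N : ℕ) (hN : 2 ≤ N) :
    (∑ p ∈ (Finset.range N ×ˢ Finset.range N).filter (fun p => N ≤ p.1 + p.2),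
      (1 : ℝ) / p.1 * (1 / (p.2 : ℝ) ^ 2)) ≤ 4 * (1 + Real.log N) / N := by
  rw [Finset.sum_filter, Finset.sum_product]
  have hinner : ∀ a ∈ Finset.range N,
      (∑ b ∈ Finset.range N, if N ≤ a + b then (1 : ℝ) / a * (1 / (b : ℝ) ^ 2) else 0)
        = ∑ b ∈ Finset.Ico (N - a) N, (1 : ℝ) / a * (1 / (b : ℝ) ^ 2) := by
    intro a _
    rw [← Finset.sum_filter]
    congr 1
    ext b
    simp only [Finset.mem_filter, Finset.mem_range, Finset.mem_Ico]
    omega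
  rw [Finset.sum_congr rfl hinner]
  have hbound : ∀ a ∈ Finset.range N,
      (∑ b ∈ Finset.Ico (N - a) N, (1 : ℝ) / a * (1 / (b : ℝ) ^ 2))
        ≤ if a = 0 then 0 else (2 / (N : ℝ)) * (1 / a + 1 / ((N - a : ℕ) : ℝ)) := by
    intro a ha
    simp only [Finset.mem_range] at ha
    rcases eq_or_ne a 0 with rfl | h
    · simp
    · rw [if_neg h, ← Finset.mul_sum]
      have h1 : (∑ b ∈ Finset.Ico (N - a) N, (1 : ℝ) / (b : ℝ) ^ 2)
          ≤ 2 / ((N - a : ℕ) : ℝ) - 2 / (N : ℝ) := by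
        have := sum_inv_sq_le (N - a) (by omega) N (by omega)
        simpa using this
      have e1 : ((N - a : ℕ) : ℝ) = (N : ℝ) - a := by
        rw [Nat.cast_sub (le_of_lt ha)]
      have ha0 : (a : ℝ) ≠ 0 := Nat.cast_ne_zero.2 h
      have haN : (a : ℝ) < N := by exact_mod_cast ha
      have haR : (0 : ℝ) < (a : ℝ) := by
        have h0 : 0 < a := by omega
        exact_mod_cast h0
      have hNa : (0 : ℝ) < (N : ℝ) - a := by linarith
      have hN0 : (N : ℝ) ≠ 0 := by positivity
      rw [e1] at h1 ⊢
      have h2a : (1 : ℝ) / a * (2 / ((N : ℝ) - a) - 2 / N)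
          ≤ (1 : ℝ) / a * (2 / ((N : ℝ) - a)) := by
        apply mul_le_mul_of_nonneg_left _ (by positivity)
        have h0 : (0 : ℝ) ≤ 2 / (N : ℝ) := by positivity
        linarith
      have h2b : (1 : ℝ) / a * (2 / ((N : ℝ) - a))
          = (2 / (N : ℝ)) * (1 / a + 1 / ((N : ℝ) - a)) := by
        field_simp
        ring
      calc (1 : ℝ) / a * (∑ b ∈ Finset.Ico (N - a) N, 1 / (b : ℝ) ^ 2)
          ≤ (1 : ℝ) / a * (2 / ((N : ℝ) - a) - 2 / N) :=
            mul_le_mul_of_nonneg_left h1 (by positivity)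
        _ ≤ (1 : ℝ) / a * (2 / ((N : ℝ) - a)) := h2a
        _ = _ := h2b
  refine (Finset.sum_le_sum hbound).trans ?_
  rw [Finset.range_eq_Ico, Finset.sum_eq_sum_Ico_succ_bot (by omega : 0 < N), if_pos rfl,
    zero_add]
  have hstep : ∀ a ∈ Finset.Ico 1 N,
      (if a = 0 then (0 : ℝ) else (2 / (N : ℝ)) * (1 / a + 1 / ((N - a : ℕ) : ℝ)))
        = (2 / (N : ℝ)) * (1 / a + 1 / ((N - a : ℕ) : ℝ)) := by
    intro a ha
    simp only [Finset.mem_Ico] at ha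
    rw [if_neg (by omega)]
  rw [Finset.sum_congr rfl hstep, ← Finset.mul_sum, Finset.sum_add_distrib]
  have hrefl : (∑ a ∈ Finset.Ico 1 N, 1 / ((N - a : ℕ) : ℝ))
      = ∑ a ∈ Finset.Ico 1 N, 1 / (a : ℝ) := by
    apply Finset.sum_nbij' (i := fun a => N - a) (j := fun a => N - a)
    · intro a ha; simp only [Finset.mem_Ico] at ha ⊢; omega
    · intro a ha; simp only [Finset.mem_Ico] at ha ⊢; omega
    · intro a ha; simp only [Finset.mem_Ico] at ha; omega
    · intro a ha; simp only [Finset.mem_Ico] at ha; omega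
    · intro a _; rfl
  rw [hrefl]
  have hH : (∑ a ∈ Finset.Ico 1 N, 1 / (a : ℝ)) ≤ 1 + Real.log N := by
    have hq : (∑ a ∈ Finset.Ico 1 N, 1 / (a : ℝ)) = ((harmonic (N - 1) : ℚ) : ℝ) := by
      rw [← harm_Ico N, Rat.cast_sum]
      apply Finset.sum_congr rfl
      intro m _
      push_cast
      ring
    rw [hq]
    calc ((harmonic (N - 1) : ℚ) : ℝ) ≤ 1 + Real.log ((N - 1 : ℕ) : ℝ) :=
          harmonic_le_one_add_log (N - 1)
      _ ≤ 1 + Real.log N := by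
          apply add_le_add le_rfl
          apply Real.log_le_log (by exact_mod_cast (by omega : 1 ≤ N - 1))
          exact_mod_cast (by omega : N - 1 ≤ N)
  calc (2 / (N : ℝ)) * ((∑ a ∈ Finset.Ico 1 N, 1 / (a : ℝ))
        + ∑ a ∈ Finset.Ico 1 N, 1 / (a : ℝ))
      ≤ (2 / (N : ℝ)) * ((1 + Real.log N) + (1 + Real.log N)) :=
        mul_le_mul_of_nonneg_left (add_le_add hH hH) (by positivity)
    _ = 4 * (1 + Real.log N) / N := by ring

lemma Bad_bound (u v : List ℕ) (hu : ∀ x ∈ u, 0 < x)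
    (hv : ∀ x ∈ v, 0 < x) (hv2 : ∀ x, v.getLast? = some x → 2 ≤ x)
    (N : ℕ) (hN : 2 ≤ N) (A : ℕ) (hA : u.length + v.length ≤ A + 1) (hA1 : 1 ≤ A) :
    (∑ p ∈ (Finset.range N ×ˢ Finset.range N).filter (fun p => N ≤ p.1 + p.2),
        ((cR u.reverse p.1 : ℚ) : ℝ) * ((cR v.reverse p.2 : ℚ) : ℝ))
      ≤ 4 * (1 + Real.log N) ^ A / N := by
  set L := 1 + Real.log N with hLdef
  have hL1 : (1 : ℝ) ≤ L := by
    rw [hLdef]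
    have : (0 : ℝ) ≤ Real.log N := Real.log_nonneg (by exact_mod_cast (by omega : 1 ≤ N))
    linarith
  have hL0 : (0 : ℝ) ≤ L := by linarith
  have hterm : ∀ p ∈ (Finset.range N ×ˢ Finset.range N).filter (fun p => N ≤ p.1 + p.2),
      ((cR u.reverse p.1 : ℚ) : ℝ) * ((cR v.reverse p.2 : ℚ) : ℝ)
        ≤ L ^ (A - 1) * ((1 : ℝ) / p.1 * (1 / (p.2 : ℝ) ^ 2)) := by
    intro p hp
    simp only [Finset.mem_filter, Finset.mem_product, Finset.mem_range] at hp
    obtain ⟨⟨hp1N, hp2N⟩, hsum⟩ := hp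
    have hp1 : 1 ≤ p.1 := by omega
    have hp2 : 1 ≤ p.2 := by omega
    have hRHS0 : (0 : ℝ) ≤ L ^ (A - 1) * ((1 : ℝ) / p.1 * (1 / (p.2 : ℝ) ^ 2)) := by
      apply mul_nonneg (pow_nonneg hL0 _)
      positivity
    rcases hur : u.reverse with _ | ⟨c, k⟩
    · have hz : cR ([] : List ℕ) p.1 = 0 := by
        show (if p.1 = 0 then 1 else 0 : ℚ) = 0
        rw [if_neg (by omega)]
      rw [hz]
      simpa using hRHS0
    rcases hvr : v.reverse with _ | ⟨cv, kv⟩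
    · have hz : cR ([] : List ℕ) p.2 = 0 := by
        show (if p.2 = 0 then 1 else 0 : ℚ) = 0
        rw [if_neg (by omega)]
      rw [hz]
      simpa using hRHS0
    have hcu : 1 ≤ c := hu c (List.mem_reverse.1 (by rw [hur]; simp))
    have hkpos : ∀ x ∈ k, 0 < x := fun x hx =>
      hu x (List.mem_reverse.1 (by rw [hur]; simp [hx]))
    have hkvpos : ∀ x ∈ kv, 0 < x := fun x hx =>
      hv x (List.mem_reverse.1 (by rw [hvr]; simp [hx]))
    have hcv2 : 2 ≤ cv := by
      apply hv2
      rw [← List.head?_reverse, hvr]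
      rfl
    have b1 : ((cR (c :: k) p.1 : ℚ) : ℝ) ≤ L ^ k.length / (p.1 : ℝ) ^ c :=
      cR_le_real c k hkpos p.1 N hp1 (by omega)
    have b2 : ((cR (cv :: kv) p.2 : ℚ) : ℝ) ≤ L ^ kv.length / (p.2 : ℝ) ^ cv :=
      cR_le_real cv kv hkvpos p.2 N hp2 (by omega)
    have hlenu : k.length + 1 = u.length := by
      have := congrArg List.length hur
      simp only [List.length_reverse, List.length_cons] at this
      omega
    have hlenv : kv.length + 1 = v.length := by
      have := congrArg List.length hvr
      simp only [List.length_reverse, List.length_cons] at this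
      omega
    have hp1R : (1 : ℝ) ≤ (p.1 : ℝ) := by exact_mod_cast hp1
    have hp2R : (1 : ℝ) ≤ (p.2 : ℝ) := by exact_mod_cast hp2
    calc ((cR (c :: k) p.1 : ℚ) : ℝ) * ((cR (cv :: kv) p.2 : ℚ) : ℝ)
        ≤ (L ^ k.length / (p.1 : ℝ) ^ c) * (L ^ kv.length / (p.2 : ℝ) ^ cv) := by
          apply mul_le_mul b1 b2 (by exact_mod_cast cR_nonneg (cv :: kv) p.2)
          exact div_nonneg (pow_nonneg hL0 _) (by positivity)
      _ ≤ (L ^ k.length / (p.1 : ℝ) ^ 1) * (L ^ kv.length / (p.2 : ℝ) ^ 2) := by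
          apply mul_le_mul
          · exact div_le_div_of_nonneg_left (pow_nonneg hL0 _) (by positivity)
              (pow_le_pow_right₀ hp1R hcu)
          · exact div_le_div_of_nonneg_left (pow_nonneg hL0 _) (by positivity)
              (pow_le_pow_right₀ hp2R hcv2)
          · exact div_nonneg (pow_nonneg hL0 _) (by positivity)
          · exact div_nonneg (pow_nonneg hL0 _) (by positivity)
      _ = L ^ (k.length + kv.length) * ((1 : ℝ) / p.1 * (1 / (p.2 : ℝ) ^ 2)) := by
          rw [pow_add, pow_one]
          ring
      _ ≤ L ^ (A - 1) * ((1 : ℝ) / p.1 * (1 / (p.2 : ℝ) ^ 2)) := by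
          apply mul_le_mul_of_nonneg_right
            (pow_le_pow_right₀ hL1 (by omega)) (by positivity)
  have hpow : L ^ (A - 1) * L = L ^ A := by
    rw [← pow_succ]
    congr 1
    omega
  calc (∑ p ∈ (Finset.range N ×ˢ Finset.range N).filter (fun p => N ≤ p.1 + p.2),
        ((cR u.reverse p.1 : ℚ) : ℝ) * ((cR v.reverse p.2 : ℚ) : ℝ))
      ≤ ∑ p ∈ (Finset.range N ×ˢ Finset.range N).filter (fun p => N ≤ p.1 + p.2),
          L ^ (A - 1) * ((1 : ℝ) / p.1 * (1 / (p.2 : ℝ) ^ 2)) := Finset.sum_le_sum hterm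
    _ = L ^ (A - 1) * ∑ p ∈ (Finset.range N ×ˢ Finset.range N).filter
          (fun p => N ≤ p.1 + p.2), (1 : ℝ) / p.1 * (1 / (p.2 : ℝ) ^ 2) := by
        rw [← Finset.mul_sum]
    _ ≤ L ^ (A - 1) * (4 * L / N) :=
        mul_le_mul_of_nonneg_left (badSum N hN) (pow_nonneg hL0 _)
    _ = 4 * L ^ A / N := by
        rw [← hpow]
        ring

end BadSum


section Final

lemma ZN_eq_lin (N : ℕ) (h : List ℕ →₀ ℚ) :
    ZN N h = Finsupp.linearCombination ℚ (MHS N) h := by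
  rw [ZN, Finsupp.linearCombination_apply, fsum_eq, fsum_eq]
  exact Finset.sum_congr rfl fun k _ => (Rat.smul_def _ _).symm

lemma ZN_sub (N : ℕ) (h1 h2 : List ℕ →₀ ℚ) :
    ZN N (h1 - h2) = ZN N h1 - ZN N h2 := by
  rw [ZN_eq_lin, ZN_eq_lin, ZN_eq_lin, map_sub]

lemma ZN_double (N : ℕ) (f g : List ℕ →₀ ℚ) (T : List ℕ → List ℕ → (List ℕ →₀ ℚ)) :
    ZN N (f.sum fun u q => g.sum fun v q' => (q * q') • T u v)
      = ∑ u ∈ f.support, ∑ v ∈ g.support, ((f u : ℝ) * (g v : ℝ)) * ZN N (T u v) := by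
  rw [ZN_eq_lin, map_finsuppSum, fsum_eq]
  apply Finset.sum_congr rfl
  intro u _
  rw [map_finsuppSum, fsum_eq]
  apply Finset.sum_congr rfl
  intro v _
  rw [map_smul, Rat.smul_def, ← ZN_eq_lin]
  push_cast
  ring

end Final

end Stmt10

/-- Asymptotic double shuffle relation: for `w₁ ∈ 𝔥¹`, `w₀ ∈ 𝔥⁰`,
`Z_N(w₁ * w₀ − w₁ ⧢ w₀) = O(N⁻¹ logᵃ N)` as `N → ∞`, for some positive integer `a`. -/
theorem stmt_10 (f g : List ℕ →₀ ℚ) (hf : MemH1 f) (hg : MemH0 g) :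
    ∃ a : ℕ, 0 < a ∧ ∃ C : ℝ, ∀ N : ℕ, 2 ≤ N →
      |ZN N (harmLin f g - shIdxLin f g)| ≤ C * (Real.log N) ^ a / N := by
  classical
  set rf := f.support.sup List.length with hrf
  set rg := g.support.sup List.length with hrg
  refine ⟨rf + rg + 1, by omega, ?_⟩
  set A := rf + rg + 1 with hA
  set C0 : ℝ := ∑ u ∈ f.support, ∑ v ∈ g.support, |(f u : ℝ)| * |(g v : ℝ)| with hC0
  have hC0nn : 0 ≤ C0 :=
    Finset.sum_nonneg fun u _ => Finset.sum_nonneg fun v _ =>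
      mul_nonneg (abs_nonneg _) (abs_nonneg _)
  refine ⟨C0 * 4 * 3 ^ A, ?_⟩
  intro N hN
  have hN1 : 1 ≤ N := by omega
  set L := 1 + Real.log N with hL
  have hlog2 := Real.log_two_gt_d9
  have hlogmono : Real.log 2 ≤ Real.log N :=
    Real.log_le_log (by norm_num) (by exact_mod_cast hN)
  have hlogpos : (0 : ℝ) < Real.log N := by linarith
  have hL1 : (1 : ℝ) ≤ L := by rw [hL]; linarith
  have hsq : ∀ u v : List ℕ, MHS N u * MHS N v
      = ∑ p ∈ Finset.range N ×ˢ Finset.range N,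
          ((Stmt10.cR u.reverse p.1 : ℚ) : ℝ) * ((Stmt10.cR v.reverse p.2 : ℚ) : ℝ) := by
    intro u v
    rw [Stmt10.MHS_eq_sum_cR u N hN1, Stmt10.MHS_eq_sum_cR v N hN1, Finset.sum_mul_sum,
      ← Finset.sum_product']
  have hnot : (Finset.range N ×ˢ Finset.range N).filter (fun p => ¬ (p.1 + p.2 < N))
      = (Finset.range N ×ˢ Finset.range N).filter (fun p => N ≤ p.1 + p.2) := by
    ext p
    simp only [Finset.mem_filter, not_lt]
  have e1 : harmLin f g = f.sum fun u q => g.sum fun v q' => (q * q') • harmW u v := rfl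
  have e2 : shIdxLin f g = f.sum fun u q => g.sum fun v q' =>
      (q * q') • ((shW (wordOf u) (wordOf v)).mapDomain decode) := rfl
  have key : ZN N (harmLin f g - shIdxLin f g)
      = ∑ u ∈ f.support, ∑ v ∈ g.support, ((f u : ℝ) * (g v : ℝ)) *
          ∑ p ∈ (Finset.range N ×ˢ Finset.range N).filter (fun p => N ≤ p.1 + p.2),
            ((Stmt10.cR u.reverse p.1 : ℚ) : ℝ) * ((Stmt10.cR v.reverse p.2 : ℚ) : ℝ) := by
    rw [Stmt10.ZN_sub, e1, e2, Stmt10.ZN_double, Stmt10.ZN_double,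
      ← Finset.sum_sub_distrib]
    apply Finset.sum_congr rfl
    intro u hu
    rw [← Finset.sum_sub_distrib]
    apply Finset.sum_congr rfl
    intro v hv
    rw [← mul_sub]
    congr 1
    rw [Stmt10.ZN_harmW u v N hN1, Stmt10.ZN_shWpair u v (hf u hu) (hg v hv).1 N hN1,
      hsq u v,
      ← Finset.sum_filter_add_sum_filter_not (Finset.range N ×ˢ Finset.range N)
        (fun p => p.1 + p.2 < N), hnot]
    ring
  rw [key]
  have hb1 : |∑ u ∈ f.support, ∑ v ∈ g.support, ((f u : ℝ) * (g v : ℝ)) *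
          ∑ p ∈ (Finset.range N ×ˢ Finset.range N).filter (fun p => N ≤ p.1 + p.2),
            ((Stmt10.cR u.reverse p.1 : ℚ) : ℝ) * ((Stmt10.cR v.reverse p.2 : ℚ) : ℝ)|
      ≤ ∑ u ∈ f.support, ∑ v ∈ g.support,
          |(f u : ℝ)| * |(g v : ℝ)| * (4 * L ^ A / N) := by
    refine (Finset.abs_sum_le_sum_abs _ _).trans ?_
    apply Finset.sum_le_sum
    intro u hu
    refine (Finset.abs_sum_le_sum_abs _ _).trans ?_
    apply Finset.sum_le_sum
    intro v hv
    have hBadnn : (0 : ℝ) ≤ ∑ p ∈ (Finset.range N ×ˢ Finset.range N).filter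
        (fun p => N ≤ p.1 + p.2),
          ((Stmt10.cR u.reverse p.1 : ℚ) : ℝ) * ((Stmt10.cR v.reverse p.2 : ℚ) : ℝ) :=
      Finset.sum_nonneg fun p _ => mul_nonneg
        (by exact_mod_cast Stmt10.cR_nonneg u.reverse p.1)
        (by exact_mod_cast Stmt10.cR_nonneg v.reverse p.2)
    rw [abs_mul, abs_mul, abs_of_nonneg hBadnn]
    apply mul_le_mul_of_nonneg_left _ (mul_nonneg (abs_nonneg _) (abs_nonneg _))
    apply Stmt10.Bad_bound u v (hf u hu) (hg v hv).1 (hg v hv).2 N hN A ?_ (by omega)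
    have h1 : u.length ≤ rf := Finset.le_sup hu
    have h2 : v.length ≤ rg := Finset.le_sup hv
    omega
  refine hb1.trans ?_
  have hb2 : (∑ u ∈ f.support, ∑ v ∈ g.support,
      |(f u : ℝ)| * |(g v : ℝ)| * (4 * L ^ A / N)) = C0 * (4 * L ^ A / N) := by
    rw [hC0, Finset.sum_mul]
    apply Finset.sum_congr rfl
    intro u _
    rw [Finset.sum_mul]
  rw [hb2]
  have hL3 : L ≤ 3 * Real.log N := by rw [hL]; nlinarith
  have hLA : L ^ A ≤ 3 ^ A * (Real.log N) ^ A := by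
    calc L ^ A ≤ (3 * Real.log N) ^ A := pow_le_pow_left₀ (by linarith) hL3 A
      _ = 3 ^ A * (Real.log N) ^ A := mul_pow _ _ _
  have hNR : (0 : ℝ) < (N : ℝ) := by exact_mod_cast (by omega : 0 < N)
  have hfin : C0 * (4 * L ^ A / N) ≤ C0 * (4 * (3 ^ A * (Real.log N) ^ A) / N) := by
    apply mul_le_mul_of_nonneg_left _ hC0nn
    apply (div_le_div_iff_of_pos_right hNR).2
    apply mul_le_mul_of_nonneg_left hLA (by norm_num)
  refine hfin.trans (le_of_eq (by ring))
end
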